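/- arXiv:0711.0096 — 11 statements merged into one kernel-verified Lean document; each statement's English description precedes it below -/
import Mathlib

section
/- Let p be a prime, K a commutative ring of characteristic p, and G a locally finite p-group. Then for every g ∈ G, the element -1 + g + g⁻¹ is a unit in the group algebra K[G]. -/
/-- `G` is a locally finite `p`-group: every finitely generated subgroup is a
finite group of `p`-power order. -/
def IsLocallyFinitePGroup (p : ℕ) (G : Type*) [Group G] : Prop :=
  ∀ s : Finset G, ∃ n : ℕ, Nat.card (Subgroup.closure (s : Set G)) = p ^ n

/-- if `K` has characteristic `p` and `G` is a locally finite
`p`-group, then `-1 + g + g⁻¹` is a unit of `K[G]` for every `g ∈ G`. -/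
theorem stmt_3 (p : ℕ) (hp : p.Prime) (K : Type*) [CommRing K] [CharP K p]
    (G : Type*) [Group G] (hG : IsLocallyFinitePGroup p G) (g : G) :
    IsUnit (-1 + MonoidAlgebra.of K G g + MonoidAlgebra.of K G g⁻¹) := by
  haveI : Fact p.Prime := ⟨hp⟩
  haveI : CharP (MonoidAlgebra K G) p :=
    charP_of_injective_algebraMap (R := K) (A := MonoidAlgebra K G) (fun a b h => by
      have h2 := congrArg (fun f : MonoidAlgebra K G => f.coeff 1) h
      simpa [MonoidAlgebra.coe_algebraMap, Finsupp.single_eq_same] using h2) p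
  obtain ⟨n, hn⟩ := hG {g}
  have hord : orderOf g = p ^ n := by
    rw [← Nat.card_zpowers, Subgroup.zpowers_eq_closure]
    simpa using hn
  have hg : g ^ p ^ n = 1 := by rw [← hord]; exact pow_orderOf_eq_one g
  set x := MonoidAlgebra.of K G g with hx
  set y := MonoidAlgebra.of K G g⁻¹ with hy
  have hxy : x * y = 1 := by rw [hx, hy, ← map_mul, mul_inv_cancel, map_one]
  have hyx : y * x = 1 := by rw [hx, hy, ← map_mul, inv_mul_cancel, map_one]
  have huy : IsUnit y := ⟨⟨y, x, hyx, hxy⟩, rfl⟩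
  set u := x - 1 with hu
  have hunil : u ^ p ^ n = 0 := by
    rw [hu, sub_pow_char_pow_of_commute _ _ (Commute.one_right x),
      hx, ← map_pow, hg, map_one, one_pow, sub_self]
  have hnil : IsNilpotent (u + u ^ 2) := by
    refine ⟨p ^ n, ?_⟩
    have h1 : u + u ^ 2 = u * (1 + u) := by noncomm_ring
    rw [h1, ((Commute.one_right u).add_right (Commute.refl u)).mul_pow, hunil, zero_mul]
  have key : x * (-1 + x + y) = 1 + (u + u ^ 2) := by
    rw [mul_add, mul_add, hxy, mul_neg_one, hu]
    noncomm_ring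
  have heq : (-1 + x + y) = y * (1 + (u + u ^ 2)) := by
    rw [← key, ← mul_assoc, hyx, one_mul]
  rw [heq]
  exact huy.mul hnil.isUnit_one_add
end

section
/- Let p be a prime, K a commutative ring of characteristic p, and G a finite p-group. Then the augmentation ideal of K[G] is nilpotent, and consequently every element of K[G] congruent to 1 modulo the augmentation ideal is a unit. -/
open MonoidAlgebra

namespace Stmt4Aux

variable {K : Type*} [CommRing K] {G : Type*} [Group G]

/-- `of w` is central in the monoid algebra when `w` is central in `G`. -/
lemma of_central (w : G) (hw : w ∈ Subgroup.center G) (a : MonoidAlgebra K G) :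
    MonoidAlgebra.of K G w * a = a * MonoidAlgebra.of K G w := by
  induction a using MonoidAlgebra.induction with
  | zero => simp
  | single_add g c f _ _ ih =>
    rw [mul_add, add_mul, ih]
    congr 1
    rw [MonoidAlgebra.of_apply, MonoidAlgebra.single_mul_single,
      MonoidAlgebra.single_mul_single, one_mul, mul_one,
      Subgroup.mem_center_iff.mp hw g]

/-- Multiplying left-ideal spans of powers of a central element. -/
lemma span_central_mul_le {R : Type*} [Ring R] (x : R) (hx : ∀ y, x * y = y * x) (n : ℕ) :
    Ideal.span {x ^ n} * Ideal.span {x} ≤ Ideal.span {x ^ (n + 1)} := by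
  refine Ideal.mul_le.mpr fun r hr s hs => ?_
  obtain ⟨a, ha⟩ := Submodule.mem_span_singleton.mp hr
  obtain ⟨b, hb⟩ := Submodule.mem_span_singleton.mp hs
  refine Submodule.mem_span_singleton.mpr ⟨a * b, ?_⟩
  have hcomm : x ^ n * b = b * x ^ n := (Commute.pow_left (hx b) n)
  rw [← ha, ← hb]
  simp only [smul_eq_mul]
  calc a * b * x ^ (n + 1) = a * (b * x ^ n) * x := by
        rw [pow_succ, ← mul_assoc, mul_assoc a b]
    _ = a * (x ^ n * b) * x := by rw [hcomm]
    _ = a * x ^ n * (b * x) := by rw [← mul_assoc, mul_assoc (a * x ^ n)]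

lemma ideal_pow_add_le {R : Type*} [Ring R] (I : Ideal R) (a b : ℕ) :
    I ^ (a + b) ≤ I ^ a * I ^ b := by
  induction b with
  | zero =>
    intro x hx
    have h1 : (1 : R) ∈ (I ^ 0 : Ideal R) := by
      rw [Submodule.pow_zero, Ideal.one_eq_top]; trivial
    have := Ideal.mul_mem_mul (hx : x ∈ I ^ (a + 0)) h1
    simpa using this
  | succ b ih =>
    calc I ^ (a + (b + 1)) = I ^ (a + b) * I := by rw [← Nat.add_assoc, Submodule.pow_succ]
      _ ≤ (I ^ a * I ^ b) * I := Ideal.mul_mono_left ih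
      _ = I ^ a * (I ^ b * I) := Ideal.mul_assoc
      _ = I ^ a * I ^ (b + 1) := by rw [← Submodule.pow_succ]

lemma of_zpowers_sub_one_mem (w : G) (hord : 0 < orderOf w) {n : G}
    (hn : n ∈ Subgroup.zpowers w) :
    MonoidAlgebra.of K G n - 1 ∈ Ideal.span {MonoidAlgebra.of K G w - 1} := by
  obtain ⟨k, hk⟩ := Subgroup.mem_zpowers_iff.mp hn
  have hnn : (0 : ℤ) ≤ k % (orderOf w : ℤ) :=
    Int.emod_nonneg k (by exact_mod_cast hord.ne')
  have hi : w ^ ((k % (orderOf w : ℤ)).toNat) = n := by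
    rw [← zpow_natCast, Int.toNat_of_nonneg hnn, zpow_mod_orderOf, hk]
  set i : ℕ := (k % (orderOf w : ℤ)).toNat
  rw [← hi, map_pow]
  exact Submodule.mem_span_singleton.mpr
    ⟨∑ j ∈ Finset.range i, (MonoidAlgebra.of K G w) ^ j, by
      rw [smul_eq_mul, geom_sum_mul]⟩

/-- Anything killed by `mapDomain` along the projection to `G ⧸ zpowers w` lies in the
left ideal generated by `of w - 1`. -/
lemma ker_le_span [Finite G] (w : G) (a : MonoidAlgebra K G)
    (ha : MonoidAlgebra.mapDomain (QuotientGroup.mk : G → G ⧸ Subgroup.zpowers w) a = 0) :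
    a ∈ Ideal.span {MonoidAlgebra.of K G w - 1} := by
  set N := Subgroup.zpowers w
  set s : G ⧸ N → G := Quotient.out with hs
  have hord : 0 < orderOf w := orderOf_pos w
  have key : ∀ b : MonoidAlgebra K G,
      b - MonoidAlgebra.mapDomain (fun g => s (QuotientGroup.mk g)) b
        ∈ Ideal.span {MonoidAlgebra.of K G w - 1} := by
    intro b
    induction b using MonoidAlgebra.induction with
    | zero => simpa using zero_mem _
    | single_add g c f _ _ ih =>
      rw [MonoidAlgebra.mapDomain_add, MonoidAlgebra.mapDomain_single, add_sub_add_comm]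
      refine add_mem ?_ ih
      set σ : G := s (QuotientGroup.mk g) with hσ
      have hmk : (QuotientGroup.mk σ : G ⧸ N) = QuotientGroup.mk g := by
        rw [hσ, hs]
        exact QuotientGroup.out_eq' _
      have hmem : g⁻¹ * σ ∈ N := QuotientGroup.eq.mp hmk.symm
      have h2 : MonoidAlgebra.of K G (g⁻¹ * σ) - 1
          ∈ Ideal.span {MonoidAlgebra.of K G w - 1} :=
        of_zpowers_sub_one_mem w hord hmem
      have h3 : MonoidAlgebra.single g c - MonoidAlgebra.single σ c
          = -(MonoidAlgebra.single g c
              * (MonoidAlgebra.of K G (g⁻¹ * σ) - 1)) := by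
        rw [mul_sub, mul_one, MonoidAlgebra.of_apply, MonoidAlgebra.single_mul_single,
          mul_one, mul_inv_cancel_left, neg_sub]
      rw [h3]
      exact neg_mem (Ideal.mul_mem_left _ _ h2)
  have h4 : MonoidAlgebra.mapDomain (fun g => s (QuotientGroup.mk g)) a = 0 := by
    have hcomp : (fun g => s (QuotientGroup.mk g)) = s ∘ (QuotientGroup.mk : G → G ⧸ N) := rfl
    rw [hcomp, ← MonoidAlgebra.coeff_inj, MonoidAlgebra.coeff_mapDomain, Finsupp.mapDomain_comp]
    have hc := congrArg MonoidAlgebra.coeff ha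
    rw [MonoidAlgebra.coeff_mapDomain] at hc
    rw [hc]
    simp
  have hkey := key a
  rwa [h4, sub_zero] at hkey

/-- The augmentation maps are compatible with `mapDomain` along a group hom. -/
lemma eps_mapDomain {H : Type*} [Group H] (φ : G →* H) (a : MonoidAlgebra K G) :
    MonoidAlgebra.lift K K H (1 : H →* K) (MonoidAlgebra.mapDomainRingHom K φ a)
      = MonoidAlgebra.lift K K G (1 : G →* K) a := by
  have hsingle : ∀ (g : G) (c : K),
      MonoidAlgebra.mapDomainRingHom K φ (MonoidAlgebra.single g c)
        = MonoidAlgebra.single (φ g) c := fun g c => MonoidAlgebra.mapDomain_single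
  induction a using MonoidAlgebra.induction with
  | zero =>
    rw [map_zero, map_zero, map_zero]
  | single_add g c b _ _ ih =>
    rw [map_add, map_add, hsingle, map_add, ih, MonoidAlgebra.lift_single,
      MonoidAlgebra.lift_single, MonoidHom.one_apply, MonoidHom.one_apply]

lemma comap_pow_le {R S : Type*} [Ring R] [Ring S] (f : R →+* S) (J : Ideal S) (n : ℕ) :
    (Ideal.comap f J) ^ n ≤ Ideal.comap f (J ^ n) := by
  induction n with
  | zero =>
    rw [Submodule.pow_zero, Submodule.pow_zero, Ideal.one_eq_top, Ideal.one_eq_top,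
      Ideal.comap_top]
  | succ n ih =>
    rw [Submodule.pow_succ, Submodule.pow_succ]
    refine Ideal.mul_le.mpr fun r hr s hs => ?_
    have h3 := Ideal.mul_mem_mul (Ideal.mem_comap.mp (ih hr)) (Ideal.mem_comap.mp hs)
    rwa [Ideal.mem_comap, map_mul]

end Stmt4Aux

open Stmt4Aux in
theorem aug_nilpotent (p : ℕ) (hp : p.Prime) (K : Type*) [CommRing K] [CharP K p]
    (c : ℕ) : ∀ (G : Type u_2) [Group G] [Fintype G], Fintype.card G = c →
      (∃ n : ℕ, Fintype.card G = p ^ n) →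
      ∃ n : ℕ, (RingHom.ker ((MonoidAlgebra.lift K K G (1 : G →* K)) :
        MonoidAlgebra K G →+* K)) ^ n = ⊥ := by
  induction c using Nat.strong_induction_on with
  | _ c IH =>
  intro G _ _ hc hcard
  haveI : Fact p.Prime := ⟨hp⟩
  by_cases h1 : Fintype.card G = 1
  · -- trivial group: the augmentation map is injective
    haveI : Subsingleton G := Fintype.card_le_one_iff_subsingleton.mp h1.le
    refine ⟨1, ?_⟩
    rw [Submodule.pow_one, eq_bot_iff]
    intro a ha
    rw [RingHom.mem_ker] at ha
    have ha2 : a = MonoidAlgebra.single (1 : G) (a.coeff 1) := by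
      ext g; rw [Subsingleton.elim g (1 : G), MonoidAlgebra.coeff_single, Finsupp.single_eq_same]
    have heps : (MonoidAlgebra.lift K K G (1 : G →* K)) a = a.coeff 1 := by
      conv_lhs => rw [ha2]
      simp [MonoidAlgebra.lift_single]
    have h0 : a.coeff 1 = 0 := by rw [← heps]; exact ha
    have : a = 0 := by rw [ha2, h0, MonoidAlgebra.single_zero]
    simp [this]
  · -- nontrivial p-group
    obtain ⟨k, hk⟩ := hcard
    haveI : Nontrivial G := Fintype.one_lt_card_iff_nontrivial.mp
      (lt_of_le_of_ne Fintype.card_pos (Ne.symm h1))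
    have hpg : IsPGroup p G := IsPGroup.of_card (by rw [Nat.card_eq_fintype_card, hk])
    haveI : Nontrivial (Subgroup.center G) := hpg.center_nontrivial
    -- find a central element of order p
    haveI : Fintype (Subgroup.center G) := Fintype.ofFinite _
    have hdvd : p ∣ Fintype.card (Subgroup.center G) := by
      have h2 : Nat.card (Subgroup.center G) ∣ p ^ k := by
        rw [← Nat.card_eq_fintype_card (α := G)] at hk
        exact hk ▸ Subgroup.card_subgroup_dvd_card _
      obtain ⟨j, hjk, hj⟩ := (Nat.dvd_prime_pow hp).mp h2
      have hj1 : j ≠ 0 := by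
        intro h
        rw [h, pow_zero, Nat.card_eq_one_iff_unique] at hj
        exact (not_subsingleton _) hj.1
      rw [← Nat.card_eq_fintype_card, hj]
      exact dvd_pow_self p hj1
    obtain ⟨w', hw'⟩ := exists_prime_orderOf_dvd_card p hdvd
    set w : G := (w' : G) with hwdef
    have hw : w ∈ Subgroup.center G := w'.2
    have hordw : orderOf w = p := by
      rw [hwdef, Subgroup.orderOf_coe, hw']
    set N := Subgroup.zpowers w with hN
    haveI hNnormal : N.Normal := by
      constructor
      intro n hn g
      have hcent : n ∈ Subgroup.center G := (Subgroup.zpowers_le.mpr hw) hn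
      have h5 : g * n * g⁻¹ = n := by
        rw [Subgroup.mem_center_iff.mp hcent g, mul_inv_cancel_right]
      rw [h5]; exact hn
    haveI : Fintype (G ⧸ N) := Fintype.ofFinite _
    -- cardinality of the quotient
    have hNcard : Nat.card N = p := (Nat.card_zpowers w).trans hordw
    have hqmul : Fintype.card (G ⧸ N) * p = p ^ k := by
      have := Subgroup.card_eq_card_quotient_mul_card_subgroup N
      rw [hNcard, Nat.card_eq_fintype_card, Nat.card_eq_fintype_card] at this
      rw [← this, hk]
    have hk1 : k ≠ 0 := by
      intro h; rw [h, pow_zero] at hk; exact h1 hk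
    have hqcard : Fintype.card (G ⧸ N) = p ^ (k - 1) := by
      have : Fintype.card (G ⧸ N) * p = p ^ (k - 1) * p := by
        rw [hqmul, ← pow_succ, Nat.sub_add_cancel (Nat.one_le_iff_ne_zero.mpr hk1)]
      exact Nat.eq_of_mul_eq_mul_right hp.pos this
    have hlt : Fintype.card (G ⧸ N) < c := by
      rw [← hc, hk, hqcard]
      exact Nat.pow_lt_pow_right hp.one_lt (Nat.sub_lt (Nat.pos_of_ne_zero hk1) one_pos)
    -- apply the induction hypothesis to the quotient
    obtain ⟨m, hm⟩ := IH (Fintype.card (G ⧸ N)) hlt (G ⧸ N) rfl ⟨k - 1, hqcard⟩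
    set π : MonoidAlgebra K G →+* MonoidAlgebra K (G ⧸ N) :=
      MonoidAlgebra.mapDomainRingHom K (QuotientGroup.mk' N) with hπ
    set I : Ideal (MonoidAlgebra K G) :=
      RingHom.ker ((MonoidAlgebra.lift K K G (1 : G →* K)) : MonoidAlgebra K G →+* K) with hI
    have hIle : I ≤ Ideal.comap π
        (RingHom.ker ((MonoidAlgebra.lift K K (G ⧸ N) (1 : (G ⧸ N) →* K)) :
          MonoidAlgebra K (G ⧸ N) →+* K)) := by
      intro a ha
      rw [Ideal.mem_comap, RingHom.mem_ker]
      show (MonoidAlgebra.lift K K (G ⧸ N) 1) (π a) = 0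
      rw [hπ, eps_mapDomain]
      exact ha
    have h6 : ∀ x ∈ I ^ m, π x = 0 := by
      intro x hx
      have h7 := comap_pow_le π _ m ((Ideal.pow_right_mono hIle m) hx)
      rw [Ideal.mem_comap, hm] at h7
      exact (Submodule.mem_bot _).mp h7
    set ζ : MonoidAlgebra K G := MonoidAlgebra.of K G w - 1 with hζ
    have h8 : I ^ m ≤ Ideal.span {ζ} := by
      intro x hx
      refine ker_le_span w x ?_
      have h9 := h6 x hx
      rw [hπ] at h9
      have h10 : MonoidAlgebra.mapDomain (⇑(QuotientGroup.mk' N)) x = 0 := h9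
      rwa [QuotientGroup.coe_mk'] at h10
    -- ζ is central and ζ ^ p = 0
    have hζc : ∀ y : MonoidAlgebra K G, ζ * y = y * ζ := by
      intro y
      rw [hζ, sub_mul, mul_sub, one_mul, mul_one, of_central w hw]
    haveI : CharP (MonoidAlgebra K G) p := by
      refine charP_of_injective_ringHom (f := MonoidAlgebra.singleOneRingHom) ?_ p
      intro x y hxy
      exact MonoidAlgebra.single_right_injective hxy
    have hζp : ζ ^ p = 0 := by
      rw [hζ, sub_pow_char_of_commute p (Commute.one_right _), one_pow, ← map_pow,
        ← hordw, pow_orderOf_eq_one, map_one, sub_self]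
    -- conclude
    have hchain : ∀ n : ℕ, I ^ (m * n) ≤ Ideal.span {ζ ^ n} := by
      intro n
      induction n with
      | zero =>
        rw [Nat.mul_zero, Submodule.pow_zero, pow_zero, Ideal.span_singleton_one,
          Ideal.one_eq_top]
      | succ n ih =>
        calc I ^ (m * (n + 1)) = I ^ (m * n + m) := by rw [Nat.mul_succ]
          _ ≤ I ^ (m * n) * I ^ m := ideal_pow_add_le I (m * n) m
          _ ≤ Ideal.span {ζ ^ n} * Ideal.span {ζ} := Ideal.mul_mono ih h8
          _ ≤ Ideal.span {ζ ^ (n + 1)} := span_central_mul_le ζ hζc n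
    refine ⟨m * p, ?_⟩
    rw [eq_bot_iff]
    refine (hchain p).trans ?_
    rw [hζp]
    exact le_of_eq (Submodule.span_singleton_eq_bot.mpr rfl)

/-- for a finite `p`-group `G` over a commutative ring `K` of
characteristic `p`, the augmentation ideal of `K[G]` is nilpotent, and every
element congruent to `1` modulo the augmentation ideal is a unit. -/
theorem stmt_4 (p : ℕ) (hp : p.Prime) (K : Type*) [CommRing K] [CharP K p]
    (G : Type*) [Group G] [Fintype G] (hG : ∃ n : ℕ, Fintype.card G = p ^ n) :
    let I : Ideal (MonoidAlgebra K G) :=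
      RingHom.ker ((MonoidAlgebra.lift K K G (1 : G →* K)) : MonoidAlgebra K G →+* K)
    (∃ n : ℕ, I ^ n = ⊥) ∧ (∀ a : MonoidAlgebra K G, a - 1 ∈ I → IsUnit a) := by
  intro I
  have hnil : ∃ n : ℕ, I ^ n = ⊥ := aug_nilpotent p hp K (Fintype.card G) G rfl hG
  refine ⟨hnil, fun a ha => ?_⟩
  obtain ⟨n, hn⟩ := hnil
  have hz : (a - 1) ^ n = 0 := by
    have := Ideal.pow_mem_pow ha n
    rw [hn] at this
    exact (Submodule.mem_bot _).mp this
  have hnil2 : IsNilpotent (a - 1) := ⟨n, hz⟩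
  simpa using hnil2.isUnit_add_one
end

section
/- Call a locally finite p-group G 'good' (over K = ℤ/pℤ) if every pair of elements of S = {t ∈ G : t² = 1} ∪ {g + g⁻¹ : g ∈ G, g² ≠ 1} commutes in K[G]. Then: the set of symmetric units of K[G] is closed under multiplication if and only if G is good. -/
/-- The `K`-linear extension of `g ↦ g⁻¹` to the group algebra. -/
noncomputable def invStar (K : Type*) (G : Type*) [CommRing K] [Group G]
    (a : MonoidAlgebra K G) : MonoidAlgebra K G :=
  MonoidAlgebra.ofCoeff (Finsupp.mapDomain (·⁻¹) a.coeff)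

/-- The set `S = {t : t² = 1} ∪ {g + g⁻¹ : g² ≠ 1}` in `K[G]`. -/
def Sset (K : Type*) (G : Type*) [CommRing K] [Group G] : Set (MonoidAlgebra K G) :=
  {x | ∃ t : G, t ^ 2 = 1 ∧ x = MonoidAlgebra.of K G t} ∪
  {x | ∃ g : G, g ^ 2 ≠ 1 ∧ x = MonoidAlgebra.of K G g + MonoidAlgebra.of K G g⁻¹}

set_option linter.unusedSectionVars false

namespace SAux

open MonoidAlgebra Finsupp

variable {K : Type*} {G : Type*} [CommRing K] [Group G]

theorem ma_single_eq (g : G) (c : K) :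
    (MonoidAlgebra.single g c : MonoidAlgebra K G).coeff = Finsupp.single g c := rfl

theorem ma_sub_apply (a b : MonoidAlgebra K G) (x : G) :
    (a - b).coeff x = a.coeff x - b.coeff x := by
  rw [MonoidAlgebra.coeff_sub, Finsupp.sub_apply]

theorem ma_add_apply (a b : MonoidAlgebra K G) (x : G) :
    (a + b).coeff x = a.coeff x + b.coeff x := by
  rw [MonoidAlgebra.coeff_add, Finsupp.add_apply]

theorem invStar_add (a b : MonoidAlgebra K G) :
    invStar K G (a + b) = invStar K G a + invStar K G b := MonoidAlgebra.mapDomain_add _ _ _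
theorem invStar_sub (a b : MonoidAlgebra K G) :
    invStar K G (a - b) = invStar K G a - invStar K G b := by
  have h := invStar_add (a - b) b
  rw [sub_add_cancel] at h; rw [h]; abel
theorem invStar_single (g : G) (c : K) :
    invStar K G (MonoidAlgebra.single g c) = MonoidAlgebra.single g⁻¹ c :=
    MonoidAlgebra.mapDomain_single
theorem invStar_smul (c : K) (a : MonoidAlgebra K G) :
    invStar K G (c • a) = c • invStar K G a := MonoidAlgebra.mapDomain_smul _ _ _
theorem invStar_apply (a : MonoidAlgebra K G) (g : G) :
    (invStar K G a).coeff g = a.coeff g⁻¹ := by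
  have := Finsupp.mapDomain_apply (f := fun x : G => x⁻¹) (fun x y => by simp) a.coeff g⁻¹
  simpa [invStar, MonoidAlgebra.coeff_ofCoeff] using this

/-- The augmentation map. -/
theorem invStar_zero : invStar K G 0 = 0 := MonoidAlgebra.mapDomain_zero _

theorem invStar_one : invStar K G 1 = 1 := by
  have : (1 : MonoidAlgebra K G) = MonoidAlgebra.single 1 1 := rfl
  rw [this, invStar_single, inv_one]

theorem invStar_mul (a b : MonoidAlgebra K G) :
    invStar K G (a * b) = invStar K G b * invStar K G a := by
  induction a using MonoidAlgebra.induction_linear with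
  | zero => simp [invStar_zero]
  | add f g hf hg => rw [add_mul, invStar_add, hf, hg, invStar_add, mul_add]
  | single g c =>
    induction b using MonoidAlgebra.induction_linear with
    | zero => simp [invStar_zero]
    | add f g hf hg => rw [mul_add, invStar_add, hf, hg, invStar_add, add_mul]
    | single h d =>
      rw [MonoidAlgebra.single_mul_single, invStar_single, invStar_single, invStar_single,
        MonoidAlgebra.single_mul_single, mul_inv_rev, mul_comm d c]


noncomputable def aug (K G : Type*) [CommRing K] [Group G] :
    MonoidAlgebra K G →ₐ[K] K := MonoidAlgebra.lift K K G 1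

theorem aug_single (g : G) (c : K) : aug K G (MonoidAlgebra.single g c) = c := by
  rw [aug, MonoidAlgebra.lift_single]; simp

theorem aug_mapDomain {H : Type*} [Group H] (f : G → H) (a : MonoidAlgebra K G) :
    aug K H (MonoidAlgebra.mapDomain f a) = aug K G a := by
  induction a using MonoidAlgebra.induction_linear with
  | zero => simp [MonoidAlgebra.mapDomain_zero]
  | add u v hu hv => rw [MonoidAlgebra.mapDomain_add, map_add, map_add, hu, hv]
  | single g c => rw [MonoidAlgebra.mapDomain_single, aug_single, aug_single]

/-- symmetric elements lie in the span of `S`. -/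
theorem symm_mem_span :
    ∀ (n : ℕ) (a : MonoidAlgebra K G), a.coeff.support.card ≤ n → invStar K G a = a →
      a ∈ Submodule.span K (Sset K G) := by
  intro n
  induction n with
  | zero =>
    intro a h _
    have : a = 0 := by
      rw [← MonoidAlgebra.coeff_eq_zero, ← Finsupp.support_eq_empty, ← Finset.card_eq_zero]; omega
    simp [this]
  | succ n ih =>
    intro a hcard hsym
    classical
    by_cases h0 : a = 0
    · simp [h0]
    obtain ⟨g, hg⟩ := Finsupp.support_nonempty_iff.mpr (MonoidAlgebra.coeff_eq_zero.not.mpr h0)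
    have hsymc : ∀ x : G, a.coeff x⁻¹ = a.coeff x := fun x => by
      conv_rhs => rw [← hsym]
      rw [invStar_apply]
    have hgne : a.coeff g ≠ 0 := Finsupp.mem_support_iff.mp hg
    by_cases hg2 : g ^ 2 = 1
    · have hginv : g⁻¹ = g := inv_eq_of_mul_eq_one_left (by rw [← pow_two]; exact hg2)
      set a' := a - MonoidAlgebra.single g (a.coeff g) with ha'
      have hsa' : invStar K G a' = a' := by
        rw [ha', invStar_sub, hsym, invStar_single, hginv]
      have hsupp : a'.coeff.support ⊆ a.coeff.support.erase g := by
        intro x hx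
        rw [Finset.mem_erase]
        have hx' := Finsupp.mem_support_iff.mp hx
        by_cases hxg : x = g
        · exfalso; apply hx'; rw [hxg, ha']
          simp [ma_single_eq, ma_sub_apply, Finsupp.single_eq_same]
        · refine ⟨hxg, Finsupp.mem_support_iff.mpr ?_⟩
          intro h; apply hx'
          rw [ha']
          simp [ma_single_eq, ma_sub_apply, Finsupp.single_apply, Ne.symm hxg, h]
      have hcard' : a'.coeff.support.card ≤ n := by
        have := Finset.card_le_card hsupp
        have := Finset.card_erase_of_mem hg
        omega
      have h1 := ih a' hcard' hsa'
      have h2 : (MonoidAlgebra.single g (a.coeff g) : MonoidAlgebra K G) ∈ Submodule.span K (Sset K G) := by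
        have : (MonoidAlgebra.single g (a.coeff g) : MonoidAlgebra K G) = a.coeff g • MonoidAlgebra.of K G g := by
          rw [MonoidAlgebra.of_apply]
          simp [MonoidAlgebra.smul_single]
        rw [this]
        exact Submodule.smul_mem _ _ (Submodule.subset_span (Or.inl ⟨g, hg2, rfl⟩))
      have : a = a' + MonoidAlgebra.single g (a.coeff g) := by rw [ha']; abel
      rw [this]; exact Submodule.add_mem _ h1 h2
    · have hginv : g⁻¹ ≠ g := fun h => hg2 (by rw [pow_two]; exact mul_eq_one_iff_inv_eq.mpr h)
      set s := (MonoidAlgebra.single g (a.coeff g) + MonoidAlgebra.single g⁻¹ (a.coeff g) : MonoidAlgebra K G) with hs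
      set a' := a - s with ha'
      have hss : invStar K G s = s := by
        rw [hs, invStar_add, invStar_single, invStar_single, inv_inv, add_comm]
      have hsa' : invStar K G a' = a' := by rw [ha', invStar_sub, hsym, hss]
      have hsupp : a'.coeff.support ⊆ a.coeff.support.erase g := by
        intro x hx
        rw [Finset.mem_erase]
        have hx' := Finsupp.mem_support_iff.mp hx
        by_cases hxg : x = g
        · exfalso; apply hx'
          rw [hxg, ha', hs]
          simp [ma_single_eq, ma_sub_apply, ma_add_apply, Finsupp.single_apply, hginv]
        · refine ⟨hxg, Finsupp.mem_support_iff.mpr ?_⟩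
          intro h; apply hx'
          by_cases hxgi : x = g⁻¹
          · exfalso; apply hgne
            rw [← hsymc g, ← hxgi]; exact h
          · rw [ha', hs]
            simp [ma_single_eq, ma_sub_apply, ma_add_apply, Finsupp.single_apply,
              Ne.symm hxg, Ne.symm hxgi, h]
      have hcard' : a'.coeff.support.card ≤ n := by
        have := Finset.card_le_card hsupp
        have := Finset.card_erase_of_mem hg
        omega
      have h1 := ih a' hcard' hsa'
      have h2 : s ∈ Submodule.span K (Sset K G) := by
        have : s = a.coeff g • (MonoidAlgebra.of K G g + MonoidAlgebra.of K G g⁻¹) := by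
          rw [hs, smul_add, MonoidAlgebra.of_apply, MonoidAlgebra.of_apply]
          simp [MonoidAlgebra.smul_single]
        rw [this]
        exact Submodule.smul_mem _ _ (Submodule.subset_span (Or.inr ⟨g, hg2, rfl⟩))
      have : a = a' + s := by rw [ha']; abel
      rw [this]; exact Submodule.add_mem _ h1 h2

theorem comm_of_symm (hS : ∀ x ∈ Sset K G, ∀ y ∈ Sset K G, x * y = y * x)
    (a b : MonoidAlgebra K G) (ha : invStar K G a = a) (hb : invStar K G b = b) :
    a * b = b * a := by
  have ha' := symm_mem_span a.coeff.support.card a le_rfl ha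
  have hb' := symm_mem_span b.coeff.support.card b le_rfl hb
  refine Submodule.span_induction₂ (p := fun x y _ _ => x * y = y * x) ?_ ?_ ?_ ?_ ?_ ?_ ?_ ha' hb'
  · exact fun x y hx hy => hS x hx y hy
  · simp
  · simp
  · intro x y z _ _ _ h1 h2; rw [add_mul, mul_add, h1, h2]
  · intro x y z _ _ _ h1 h2; rw [mul_add, add_mul, h1, h2]
  · intro r x y _ _ h; rw [smul_mul_assoc, mul_smul_comm, h]
  · intro r x y _ _ h; rw [mul_smul_comm, smul_mul_assoc, h]


theorem mapDomain_sub' {H : Type*} [Group H] (f : G → H) (x y : MonoidAlgebra K G) :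
    MonoidAlgebra.mapDomain f (x - y) = MonoidAlgebra.mapDomain f x - MonoidAlgebra.mapDomain f y := by
  rw [eq_sub_iff_add_eq, ← MonoidAlgebra.mapDomain_add, sub_add_cancel]

/-- a central group element gives a central element of the group algebra -/
theorem central_commute (z : G) (hz : z ∈ Subgroup.center G) (x : MonoidAlgebra K G) :
    Commute (MonoidAlgebra.single z (1 : K)) x := by
  induction x using MonoidAlgebra.induction_linear with
  | zero => exact Commute.zero_right _
  | add u v hu hv => exact Commute.add_right hu hv
  | single g c =>
    unfold Commute SemiconjBy
    rw [MonoidAlgebra.single_mul_single, MonoidAlgebra.single_mul_single, one_mul, mul_one,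
      (Subgroup.mem_center_iff.mp hz g)]

theorem zpowers_normal (z : G) (hz : z ∈ Subgroup.center G) : (Subgroup.zpowers z).Normal := by
  constructor
  intro a ha g
  have : a ∈ Subgroup.center G := by
    obtain ⟨j, rfl⟩ := Subgroup.mem_zpowers_iff.mp ha
    exact zpow_mem hz j
  rwa [Subgroup.mem_center_iff.mp this g, mul_assoc, mul_inv_cancel, mul_one]

theorem ker_structure [Finite G] (z : G) (hz : z ∈ Subgroup.center G)
    [hN : (Subgroup.zpowers z).Normal] :
    ∀ (n : ℕ) (b : MonoidAlgebra K G), b.coeff.support.card ≤ n →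
      MonoidAlgebra.mapDomain (⇑(QuotientGroup.mk' (Subgroup.zpowers z))) b = 0 →
      ∃ w, b = (MonoidAlgebra.single z (1 : K) - 1) * w := by
  classical
  set N := Subgroup.zpowers z with hNdef
  set f : G → G ⧸ N := ⇑(QuotientGroup.mk' N) with hfdef
  intro n
  induction n with
  | zero =>
    intro b hb _
    have : b = 0 := by
      rw [← MonoidAlgebra.coeff_eq_zero, ← Finsupp.support_eq_empty, ← Finset.card_eq_zero]; omega
    exact ⟨0, by rw [this, mul_zero]⟩
  | succ n ih =>
    intro b hcard hker
    by_cases h0 : b = 0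
    · exact ⟨0, by rw [h0, mul_zero]⟩
    obtain ⟨h, hh⟩ := Finsupp.support_nonempty_iff.mpr (MonoidAlgebra.coeff_eq_zero.not.mpr h0)
    have hbh : b.coeff h ≠ 0 := Finsupp.mem_support_iff.mp hh
    -- find a second element of the support in the same coset
    have hex : ∃ h' ∈ b.coeff.support, h' ≠ h ∧ f h' = f h := by
      by_contra hall
      push_neg at hall
      have heval : (MonoidAlgebra.mapDomain f b).coeff (f h) = b.coeff h := by
        rw [MonoidAlgebra.mapDomain, MonoidAlgebra.coeff_ofCoeff, Finsupp.mapDomain,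
          Finsupp.sum_apply, Finsupp.sum]
        rw [Finset.sum_eq_single_of_mem h hh]
        · rw [Finsupp.single_eq_same]
        · intro x hx hne
          rw [Finsupp.single_apply, if_neg]
          intro heq
          rcases eq_or_ne x h with h1 | h1
          · exact hne h1
          · exact hne (hall x hx h1 heq).elim
      rw [hker] at heval
      exact hbh (by simpa using heval.symm)
    obtain ⟨h', hh'supp, hh'ne, hh'eq⟩ := hex
    -- h' = h * z ^ k
    obtain ⟨ν, hνN, hνeq⟩ := (QuotientGroup.mk'_eq_mk' N).mp hh'eq.symm
    obtain ⟨k, hk⟩ := mem_powers_iff_mem_zpowers.mpr hνN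
    -- the basic symmetric difference
    set u : MonoidAlgebra K G := MonoidAlgebra.single z (1 : K) with hu
    have hzk : z ^ k ∈ Subgroup.center G := pow_mem hz k
    have hd1 : u ^ k * MonoidAlgebra.single h (1 : K) = MonoidAlgebra.single h' (1 : K) := by
      rw [hu, MonoidAlgebra.single_pow, one_pow, MonoidAlgebra.single_mul_single, one_mul]
      congr 1
      have hk' : z ^ k = ν := hk
      rw [← Subgroup.mem_center_iff.mp hzk h, hk', hνeq]
    set d : MonoidAlgebra K G :=
      MonoidAlgebra.single h' (1 : K) - MonoidAlgebra.single h (1 : K) with hd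
    have hdfac : d = (u - 1) * ((∑ i ∈ Finset.range k, u ^ i) * MonoidAlgebra.single h (1 : K)) := by
      rw [hd, ← hd1, ← mul_assoc, mul_geom_sum, sub_mul, one_mul]
    have hdker : MonoidAlgebra.mapDomain f d = 0 := by
      rw [hd]
      rw [mapDomain_sub' f, MonoidAlgebra.mapDomain_single, MonoidAlgebra.mapDomain_single, hh'eq,
        sub_self]
    set b' : MonoidAlgebra K G := b + b.coeff h • d with hb'
    have hb'ker : MonoidAlgebra.mapDomain f b' = 0 := by
      rw [hb', MonoidAlgebra.mapDomain_add, MonoidAlgebra.mapDomain_smul, hdker, hker, smul_zero, add_zero]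
    have hdh : d.coeff h = -1 := by
      rw [hd]
      have : (MonoidAlgebra.single h' (1:K) - MonoidAlgebra.single h (1:K) : MonoidAlgebra K G).coeff h
          = (Finsupp.single h' (1:K) : G →₀ K) h - (Finsupp.single h (1:K) : G →₀ K) h := by
        rw [MonoidAlgebra.coeff_sub, MonoidAlgebra.coeff_single, MonoidAlgebra.coeff_single,
          Finsupp.sub_apply]
      rw [this, Finsupp.single_eq_same, Finsupp.single_apply, if_neg hh'ne, zero_sub]
    have hb'supp : b'.coeff.support ⊆ b.coeff.support.erase h := by
      intro x hx
      have hx' := Finsupp.mem_support_iff.mp hx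
      rw [Finset.mem_erase]
      have happ : b'.coeff x = b.coeff x + b.coeff h * d.coeff x := by
        rw [hb']
        have h1 : (b + b.coeff h • d).coeff x = b.coeff x + (b.coeff h • d).coeff x := by
          rw [MonoidAlgebra.coeff_add, Finsupp.add_apply]
        have h2 : (b.coeff h • d).coeff x = b.coeff h * d.coeff x := by
          rw [MonoidAlgebra.coeff_smul, Finsupp.smul_apply, smul_eq_mul]
        rw [h1, h2]
      constructor
      · intro hxh
        apply hx'
        rw [happ, hxh, hdh]; ring
      · rw [Finsupp.mem_support_iff]
        intro hbx
        apply hx'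
        by_cases hxh' : x = h'
        · exact absurd (hxh' ▸ hbx) (Finsupp.mem_support_iff.mp (hxh' ▸ hh'supp))
        · have hdx : d.coeff x = 0 := by
            by_cases hxh : x = h
            · exact absurd (hxh ▸ hbx) hbh
            · rw [hd]
              have : (MonoidAlgebra.single h' (1:K) - MonoidAlgebra.single h (1:K) :
                  MonoidAlgebra K G).coeff x
                  = (Finsupp.single h' (1:K) : G →₀ K) x - (Finsupp.single h (1:K) : G →₀ K) x := by
                rw [MonoidAlgebra.coeff_sub, MonoidAlgebra.coeff_single, MonoidAlgebra.coeff_single,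
                  Finsupp.sub_apply]
              rw [this, Finsupp.single_apply, Finsupp.single_apply, if_neg (Ne.symm hxh'),
                if_neg (Ne.symm hxh), sub_zero]
          rw [happ, hbx, hdx, mul_zero, add_zero]
    have hcard' : b'.coeff.support.card ≤ n := by
      have h1 := Finset.card_le_card hb'supp
      have h2 := Finset.card_erase_of_mem hh
      omega
    obtain ⟨w', hw'⟩ := ih b' hcard' hb'ker
    refine ⟨w' - b.coeff h • ((∑ i ∈ Finset.range k, u ^ i) * MonoidAlgebra.single h (1 : K)), ?_⟩
    rw [mul_sub, mul_smul_comm, ← hdfac, ← hw', hb']; abel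

universe u

theorem charP_MA (p : ℕ) [Fact p.Prime] {H : Type u} [Group H] :
    CharP (MonoidAlgebra (ZMod p) H) p := by
  refine charP_of_injective_algebraMap (R := ZMod p) ?_ p
  intro x y hxy
  have h1 := congrArg (fun v : MonoidAlgebra (ZMod p) H => v.coeff (1 : H)) hxy
  simp only [Algebra.algebraMap_eq_smul_one] at h1
  have hx : (x • (1 : MonoidAlgebra (ZMod p) H)).coeff (1 : H) = x := by
    rw [MonoidAlgebra.coeff_smul, Finsupp.smul_apply, smul_eq_mul]
    have : (1 : MonoidAlgebra (ZMod p) H).coeff (1 : H) = 1 := MonoidAlgebra.coeff_one_one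
    rw [this, mul_one]
  have hy : (y • (1 : MonoidAlgebra (ZMod p) H)).coeff (1 : H) = y := by
    rw [MonoidAlgebra.coeff_smul, Finsupp.smul_apply, smul_eq_mul]
    have : (1 : MonoidAlgebra (ZMod p) H).coeff (1 : H) = 1 := MonoidAlgebra.coeff_one_one
    rw [this, mul_one]
  rw [hx, hy] at h1
  exact h1

theorem nilp_finite (p : ℕ) [Fact p.Prime] :
    ∀ (n : ℕ) (H : Type u) [Group H] [Finite H], Nat.card H ≤ n → IsPGroup p H →
      ∀ a : MonoidAlgebra (ZMod p) H, aug (ZMod p) H a = 0 → IsNilpotent a := by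
  intro n
  induction n using Nat.strong_induction_on with
  | _ n ih =>
  intro H _ _ hcard hPG a haug
  rcases subsingleton_or_nontrivial H with hsub | hnt
  · -- trivial group
    have ha1 : a = MonoidAlgebra.single (1 : H) (a.coeff 1) := by
      ext x
      rw [Subsingleton.elim x (1 : H), MonoidAlgebra.coeff_single, Finsupp.single_eq_same]
    rw [ha1, aug_single] at haug
    exact ⟨1, by rw [pow_one, ha1, haug, MonoidAlgebra.single_zero]⟩
  · -- nontrivial: pick a central element of order p
    haveI := hPG.center_nontrivial
    have hcPG : IsPGroup p (Subgroup.center H) := hPG.to_subgroup (Subgroup.center H)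
    have hpdvd : p ∣ Nat.card (Subgroup.center H) := by
      obtain ⟨m, hm⟩ := (IsPGroup.iff_card).mp hcPG
      rcases Nat.eq_zero_or_pos m with rfl | hmpos
      · exfalso
        rw [pow_zero] at hm
        exact (Finite.one_lt_card_iff_nontrivial.mpr inferInstance).ne' hm
      · rw [hm]
        exact dvd_pow_self p hmpos.ne'
    obtain ⟨z₀, hz₀⟩ := exists_prime_orderOf_dvd_card' p hpdvd
    set z : H := (z₀ : H) with hzdef
    have hzord : orderOf z = p := by
      have h' := orderOf_injective (Subgroup.center H).subtype
        (Subgroup.center H).subtype_injective z₀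
      rw [hz₀] at h'
      rw [hzdef]
      simpa using h'
    have hz : z ∈ Subgroup.center H := z₀.2
    haveI hN : (Subgroup.zpowers z).Normal := zpowers_normal z hz
    set N := Subgroup.zpowers z with hNdef
    set Q := H ⧸ N with hQdef
    have hcardN : Nat.card N = p := by rw [hNdef, Nat.card_zpowers, hzord]
    have hcardH : Nat.card H = Nat.card Q * Nat.card N :=
      Subgroup.card_eq_card_quotient_mul_card_subgroup N
    have hp2 : 2 ≤ p := (Fact.out (p := p.Prime)).two_le
    have hQpos : 1 ≤ Nat.card Q := Nat.card_pos
    have hcardQ : Nat.card Q < n := by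
      have h1 : Nat.card Q * 2 ≤ Nat.card Q * p := Nat.mul_le_mul_left _ hp2
      have h2 : 2 ≤ Nat.card H := Finite.one_lt_card_iff_nontrivial.mpr inferInstance
      rw [hcardH, hcardN] at h2 hcard
      omega
    set φ := MonoidAlgebra.mapDomainRingHom (ZMod p) (QuotientGroup.mk' N) with hφ
    haveI hPGQ : IsPGroup p Q := hPG.to_quotient N
    have hφa : aug (ZMod p) Q (φ a) = 0 := by
      have h1 : φ a = MonoidAlgebra.mapDomain (⇑(QuotientGroup.mk' N)) a := rfl
      rw [h1, aug_mapDomain, haug]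
    obtain ⟨m, hm⟩ := ih (Nat.card Q) hcardQ Q le_rfl hPGQ (φ a) hφa
    have hker : MonoidAlgebra.mapDomain (⇑(QuotientGroup.mk' N)) (a ^ m) = 0 := by
      have h1 : MonoidAlgebra.mapDomain (⇑(QuotientGroup.mk' N)) (a ^ m) = φ (a ^ m) := rfl
      rw [h1, map_pow, hm]
    obtain ⟨w, hw⟩ := ker_structure z hz (a ^ m).coeff.support.card (a ^ m) le_rfl hker
    haveI : CharP (MonoidAlgebra (ZMod p) H) p := charP_MA p
    have hcw : Commute (MonoidAlgebra.single z (1 : ZMod p) - 1) w :=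
      (central_commute z hz w).sub_left (Commute.one_left w)
    have hzp : z ^ p = 1 := by rw [← hzord]; exact pow_orderOf_eq_one z
    have hup : (MonoidAlgebra.single z (1 : ZMod p) - 1) ^ p = 0 := by
      have h1 : Commute (MonoidAlgebra.single z (1 : ZMod p)) (1 : MonoidAlgebra (ZMod p) H) :=
        Commute.one_right _
      rw [sub_pow_char_of_commute _ h1, one_pow, MonoidAlgebra.single_pow, one_pow, hzp]
      have : (MonoidAlgebra.single (1 : H) (1 : ZMod p)) = (1 : MonoidAlgebra (ZMod p) H) := rfl
      rw [this, sub_self]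
    refine ⟨m * p, ?_⟩
    rw [pow_mul, hw, hcw.mul_pow, hup, zero_mul]
theorem aug_zero_nilpotent (p : ℕ) [Fact p.Prime] {G : Type u} [Group G]
    (hG : IsLocallyFinitePGroup p G) (a : MonoidAlgebra (ZMod p) G)
    (ha : aug (ZMod p) G a = 0) : IsNilpotent a := by
  classical
  obtain ⟨n, hn⟩ := hG a.coeff.support
  set H := Subgroup.closure ((a.coeff.support : Finset G) : Set G) with hH
  haveI : Finite H := Nat.finite_of_card_ne_zero
    (by rw [hn]; exact pow_ne_zero n (Fact.out (p := p.Prime)).ne_zero)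
  have hPG : IsPGroup p H := (IsPGroup.iff_card).mpr ⟨n, hn⟩
  set a₀ : MonoidAlgebra (ZMod p) H := MonoidAlgebra.ofCoeff (Finsupp.subtypeDomain (· ∈ H) a.coeff) with ha₀
  have hmap : MonoidAlgebra.mapDomain (⇑H.subtype) a₀ = a := by
    ext g
    by_cases hgH : g ∈ H
    · have h1 : g = H.subtype ⟨g, hgH⟩ := rfl
      rw [h1, MonoidAlgebra.mapDomain, MonoidAlgebra.coeff_ofCoeff, Finsupp.mapDomain_apply H.subtype_injective]
      rfl
    · rw [MonoidAlgebra.mapDomain, MonoidAlgebra.coeff_ofCoeff, Finsupp.mapDomain_notin_range]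
      · exact (Finsupp.notMem_support_iff.mp
          (fun hmem => hgH (Subgroup.subset_closure hmem))).symm
      · rintro ⟨x, rfl⟩
        exact hgH x.2
  have haug₀ : aug (ZMod p) H a₀ = 0 := by
    have := aug_mapDomain (⇑H.subtype) a₀
    rw [hmap, ha] at this
    exact this.symm
  obtain ⟨m, hm⟩ := nilp_finite p (Nat.card H) H le_rfl hPG a₀ haug₀
  refine ⟨m, ?_⟩
  have h1 : a = MonoidAlgebra.mapDomainRingHom (ZMod p) H.subtype a₀ := hmap.symm
  rw [h1, ← map_pow, hm, map_zero]



theorem symm_unit (p : ℕ) [Fact p.Prime] {G : Type u} [Group G]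
    (hG : IsLocallyFinitePGroup p G) (x : MonoidAlgebra (ZMod p) G)
    (hx : invStar (ZMod p) G x = x) :
    ∃ c : ZMod p, IsUnit (x + c • (1 : MonoidAlgebra (ZMod p) G)) ∧
      invStar (ZMod p) G (x + c • 1) = x + c • 1 := by
  refine ⟨1 - aug (ZMod p) G x, ?_, ?_⟩
  · have hnil : IsNilpotent (x + (1 - aug (ZMod p) G x) • (1 : MonoidAlgebra (ZMod p) G) - 1) := by
      apply aug_zero_nilpotent p hG
      rw [map_sub, map_add, map_smul, map_one, smul_eq_mul, mul_one]
      ring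
    have := hnil.isUnit_one_add
    rwa [add_sub_cancel] at this
  · rw [invStar_add, invStar_smul, invStar_one, hx]

theorem mem_Sset_symm (x : MonoidAlgebra K G) (hx : x ∈ Sset K G) : invStar K G x = x := by
  rcases hx with ⟨t, ht, rfl⟩ | ⟨g, hg, rfl⟩
  · rw [MonoidAlgebra.of_apply, invStar_single,
      inv_eq_of_mul_eq_one_left (by rw [← pow_two]; exact ht)]
  · rw [invStar_add, MonoidAlgebra.of_apply, MonoidAlgebra.of_apply,
      invStar_single, invStar_single, inv_inv, add_comm]

end SAux

/-- for a locally finite `p`-group `G` and `K = ℤ/pℤ`, the set of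
symmetric units of `K[G]` is closed under multiplication iff `G` is good,
i.e. every pair of elements of `S` commutes. -/
theorem stmt_8 (p : ℕ) [Fact p.Prime] (G : Type*) [Group G]
    (hG : IsLocallyFinitePGroup p G) :
    (∀ a b : MonoidAlgebra (ZMod p) G,
        IsUnit a → invStar (ZMod p) G a = a →
        IsUnit b → invStar (ZMod p) G b = b →
        IsUnit (a * b) ∧ invStar (ZMod p) G (a * b) = a * b) ↔
      (∀ x ∈ Sset (ZMod p) G, ∀ y ∈ Sset (ZMod p) G, x * y = y * x) := by
  constructor
  · intro Hcl x hxS y hyS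
    have hxs := SAux.mem_Sset_symm x hxS
    have hys := SAux.mem_Sset_symm y hyS
    obtain ⟨c, hcu, hcs⟩ := SAux.symm_unit p hG x hxs
    obtain ⟨d, hdu, hds⟩ := SAux.symm_unit p hG y hys
    obtain ⟨-, hsym⟩ := Hcl _ _ hcu hcs hdu hds
    have hab : (x + c • 1) * (y + d • 1) = (y + d • 1) * (x + c • 1) := by
      rw [← hsym, SAux.invStar_mul, hcs, hds]
    have hexp : (x + c • 1) * (y + d • 1) - (y + d • 1) * (x + c • 1) = x * y - y * x := by
      simp only [mul_add, add_mul, mul_smul_comm, smul_mul_assoc, mul_one, one_mul, smul_smul,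
        smul_add]
      rw [mul_comm d c]
      abel
    rw [hab, sub_self] at hexp
    exact (sub_eq_zero.mp hexp.symm)
  · intro hS a b ha has hb hbs
    refine ⟨ha.mul hb, ?_⟩
    rw [SAux.invStar_mul, has, hbs, SAux.comm_of_symm hS b a hbs has]
end

section
/- Let p be a prime, K a commutative ring of characteristic p, and G a locally finite p-group such that every pair of elements of S = {t ∈ G : t² = 1} ∪ {g + g⁻¹ : g ∈ G, g² ≠ 1} commutes in K[G]. Then every involution of G is central in G. -/
/-- if every pair of elements of `S` commutes in `K[G]`, then
every involution of `G` is central in `G`. -/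
theorem stmt_9 (p : ℕ) (hp : p.Prime) (K : Type*) [CommRing K] [CharP K p]
    (G : Type*) [Group G] (hG : IsLocallyFinitePGroup p G)
    (hgood : ∀ x ∈ Sset K G, ∀ y ∈ Sset K G, x * y = y * x)
    (t : G) (ht : orderOf t = 2) :
    t ∈ Subgroup.center G := by
  haveI : Nontrivial K := CharP.nontrivial_of_char_ne_one hp.ne_one
  have ht2 : t ^ 2 = 1 := by rw [← ht]; exact pow_orderOf_eq_one t
  have htt : t * t = 1 := by rw [← sq]; exact ht2
  have htS : (MonoidAlgebra.of K G t) ∈ Sset K G := Or.inl ⟨t, ht2, rfl⟩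
  -- commuting with involutions
  have inv_comm : ∀ h : G, h ^ 2 = 1 → t * h = h * t := by
    intro h hh
    have hS : (MonoidAlgebra.of K G h) ∈ Sset K G := Or.inl ⟨h, hh, rfl⟩
    have := hgood _ htS _ hS
    rw [← map_mul, ← map_mul] at this
    exact MonoidAlgebra.of_injective this
  rw [Subgroup.mem_center_iff]
  intro g
  by_cases hg : g ^ 2 = 1
  · exact (inv_comm g hg).symm
  · have hyS : (MonoidAlgebra.of K G g + MonoidAlgebra.of K G g⁻¹) ∈ Sset K G :=
      Or.inr ⟨g, hg, rfl⟩
    have hexp : (Finsupp.single (t*g) (1:K)) + Finsupp.single (t*g⁻¹) 1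
        = Finsupp.single (g*t) 1 + Finsupp.single (g⁻¹*t) 1 := by
      have h0 := hgood _ htS _ hyS
      simp [MonoidAlgebra.of_apply, mul_add, add_mul,
        MonoidAlgebra.single_mul_single] at h0
      exact congrArg MonoidAlgebra.coeff h0
    have key : t * g = g * t ∨ t * g = g⁻¹ * t := by
      by_contra hcon
      push_neg at hcon
      obtain ⟨h1, h2⟩ := hcon
      have hne : t * g⁻¹ ≠ t * g := by
        intro h
        have hgg : g⁻¹ = g := mul_left_cancel h
        apply hg
        rw [sq]
        nth_rewrite 1 [← hgg]
        exact inv_mul_cancel g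
      have := DFunLike.congr_fun hexp (t*g)
      rw [Finsupp.add_apply, Finsupp.add_apply, Finsupp.single_eq_same,
        Finsupp.single_eq_of_ne' hne, Finsupp.single_eq_of_ne' (fun h => h1 h.symm),
        Finsupp.single_eq_of_ne' (fun h => h2 h.symm)] at this
      simp at this
    rcases key with h | h
    · exact h.symm
    · exfalso
      have hinv : (t * g) ^ 2 = 1 := by
        rw [sq]
        nth_rewrite 1 [h]
        calc g⁻¹ * t * (t * g) = g⁻¹ * (t * t) * g := by group
        _ = 1 := by rw [htt]; group
      have hc := inv_comm (t * g) hinv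
      -- t * (t*g) = (t*g) * t  ⟹  g = g⁻¹
      have hgg : g = g⁻¹ := by
        have e1 : t * (t * g) = g := by rw [← mul_assoc, htt, one_mul]
        have e2 : (t * g) * t = g⁻¹ := by rw [h, mul_assoc, htt, mul_one]
        rw [e1, e2] at hc
        exact hc
      apply hg
      rw [sq]
      nth_rewrite 2 [hgg]
      exact mul_inv_cancel g
end

section
/- Let K have characteristic 2 and let G be a group such that (g + g⁻¹) and (h + h⁻¹) commute in K[G] for all g, h ∈ G of order ≠ 1, 2, and such that all involutions of G are central. If g, h ∈ G do not commute, then there exist x, y ∈ G with ⟨g, h⟩ = ⟨x, y⟩ and x^y = x⁻¹. -/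
private lemma key10 {K : Type*} [CommRing K] [CharP K 2] {G : Type*} [Group G]
    (hcent : ∀ t : G, t ^ 2 = 1 → t ∈ Subgroup.center G)
    {a b : G} (hab : a * b ≠ b * a)
    (heq : (MonoidAlgebra.of K G a + MonoidAlgebra.of K G a⁻¹) *
          (MonoidAlgebra.of K G b + MonoidAlgebra.of K G b⁻¹) =
        (MonoidAlgebra.of K G b + MonoidAlgebra.of K G b⁻¹) *
          (MonoidAlgebra.of K G a + MonoidAlgebra.of K G a⁻¹)) :
    b⁻¹ * a * b = a⁻¹ ∨ a⁻¹ * b * a = b⁻¹ ∨ b * a * b⁻¹ = a⁻¹ ∨ a ^ 2 = b ^ 2 := by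
  classical
  haveI : Nontrivial K := CharP.nontrivial_of_char_ne_one (v := 2) (by norm_num)
  have hcsq : ∀ t : G, t ^ 2 = 1 → ∀ u : G, t * u = u * t := fun t ht u =>
    (Subgroup.mem_center_iff.mp (hcent t ht) u).symm
  have hA : a ^ 2 ≠ 1 := fun e => hab (hcsq a e b)
  have hB : b ^ 2 ≠ 1 := fun e => hab ((hcsq b e a).symm)
  have hainv : a⁻¹ ≠ a := fun e => hA (by rw [sq]; nth_rewrite 1 [← e]; exact inv_mul_cancel a)
  have hbinv : b⁻¹ ≠ b := fun e => hB (by rw [sq]; nth_rewrite 1 [← e]; exact inv_mul_cancel b)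
  have addap : ∀ (f g : MonoidAlgebra K G) (x : G), (f + g).coeff x = f.coeff x + g.coeff x := fun _ _ _ => rfl
  have H : ∀ p : G, ((if a*b = p then (1:K) else 0) + (if a⁻¹*b = p then 1 else 0)
      + ((if a*b⁻¹ = p then 1 else 0) + (if a⁻¹*b⁻¹ = p then 1 else 0))) =
      ((if b*a = p then (1:K) else 0) + (if b⁻¹*a = p then 1 else 0)
      + ((if b*a⁻¹ = p then 1 else 0) + (if b⁻¹*a⁻¹ = p then 1 else 0))) := by
    intro p
    simp only [MonoidAlgebra.of_apply, add_mul, mul_add, MonoidAlgebra.single_mul_single,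
      one_mul] at heq
    have h2 := congrArg (fun f => MonoidAlgebra.coeff f p) heq
    simpa only [addap, MonoidAlgebra.single_apply] using h2
  by_cases c4 : a⁻¹*b⁻¹ = a*b
  · -- evaluate at a*b⁻¹
    by_cases s : a⁻¹*b = a*b⁻¹
    · right; right; right
      have e := congrArg (fun x => a * x * b) s
      rw [pow_two, pow_two]
      simpa [mul_assoc] using e.symm
    · by_cases r1 : b*a = a*b⁻¹
      · right; left
        have e := congrArg (fun x => a⁻¹ * x) r1
        simpa [mul_assoc] using e
      · by_cases r2 : b⁻¹*a = a*b⁻¹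
        · exact absurd (by simpa [mul_assoc] using congrArg (fun x => b * x * b) r2) hab
        · by_cases r3 : b*a⁻¹ = a*b⁻¹
          · exfalso
            have hz : (b⁻¹*a) ^ 2 = 1 := by
              have e := congrArg (fun x => b⁻¹ * x * a) r3.symm
              rw [sq]; simpa [mul_assoc] using e
            have hc := hcsq _ hz b
            exact hab (by simpa [mul_assoc] using congrArg (fun x => b * x) hc)
          · by_cases r4 : b⁻¹*a⁻¹ = a*b⁻¹
            · right; right; left
              have e := congrArg (fun x => b * x) r4.symm
              simpa [mul_assoc] using e
            · exfalso
              have E2 := H (a*b⁻¹)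
              have k1 : ¬(a*b = a*b⁻¹) := fun e => hbinv ((mul_left_cancel e).symm)
              have k2 : ¬(a⁻¹*b⁻¹ = a*b⁻¹) := fun e => hainv (mul_right_cancel e)
              simp [k1, k2, s, r1, r2, r3, r4] at E2
  · by_cases r2 : b*a⁻¹ = a*b
    · left
      have e := congrArg (fun x => b⁻¹ * x) r2
      simpa [mul_assoc] using e.symm
    · by_cases r3 : b⁻¹*a = a*b
      · right; left
        have e := congrArg (fun x => (a⁻¹ * x)⁻¹) r3
        simpa [mul_inv_rev, mul_assoc] using e
      · by_cases r4 : b⁻¹*a⁻¹ = a*b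
        · exfalso
          have hz : (a*b) ^ 2 = 1 := by
            rw [sq]; simpa [mul_assoc] using (congrArg (fun x => a * b * x) r4).symm
          have hc := hcsq _ hz a
          exact hab (mul_left_cancel (a := a) (by simpa [mul_assoc] using hc)).symm
        · exfalso
          have E1 := H (a*b)
          have k1 : ¬(a⁻¹*b = a*b) := fun e => hainv (mul_right_cancel e)
          have k2 : ¬(a*b⁻¹ = a*b) := fun e => hbinv (mul_left_cancel e)
          have k3 : ¬(b*a = a*b) := fun e => hab e.symm
          simp [k1, k2, k3, c4, r2, r3, r4] at E1
private lemma cpair10 {G : Type*} [Group G] {x y u v : G}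
    (h1 : u ∈ Subgroup.closure ({x, y} : Set G)) (h2 : v ∈ Subgroup.closure ({x, y} : Set G))
    (h3 : x ∈ Subgroup.closure ({u, v} : Set G)) (h4 : y ∈ Subgroup.closure ({u, v} : Set G)) :
    Subgroup.closure ({x, y} : Set G) = Subgroup.closure ({u, v} : Set G) := by
  apply le_antisymm <;> rw [Subgroup.closure_le] <;> intro z hz <;>
    simp only [Set.mem_insert_iff, Set.mem_singleton_iff] at hz <;>
    rcases hz with rfl | rfl <;> assumption

/-- over characteristic 2, if all the elements `g + g⁻¹`
(for `g` of order greater than 2) pairwise commute in `K[G]` and all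
involutions of `G` are central, then any two noncommuting elements `g, h` of
`G` admit generators `x, y` of `⟨g, h⟩` with `x^y = x⁻¹`. -/
theorem stmt_10 (K : Type*) [CommRing K] [CharP K 2] {G : Type*} [Group G]
    (hcomm : ∀ g h : G, g ^ 2 ≠ 1 → h ^ 2 ≠ 1 →
      (MonoidAlgebra.of K G g + MonoidAlgebra.of K G g⁻¹) *
          (MonoidAlgebra.of K G h + MonoidAlgebra.of K G h⁻¹) =
        (MonoidAlgebra.of K G h + MonoidAlgebra.of K G h⁻¹) *
          (MonoidAlgebra.of K G g + MonoidAlgebra.of K G g⁻¹))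
    (hcent : ∀ t : G, t ^ 2 = 1 → t ∈ Subgroup.center G)
    (g h : G) (hgh : g * h ≠ h * g) :
    ∃ x y : G, Subgroup.closure {g, h} = Subgroup.closure {x, y} ∧
      y⁻¹ * x * y = x⁻¹ := by
  classical
  have hcsq : ∀ t : G, t ^ 2 = 1 → ∀ u : G, t * u = u * t := fun t ht u =>
    (Subgroup.mem_center_iff.mp (hcent t ht) u).symm
  have hg2 : g ^ 2 ≠ 1 := fun e => hgh (hcsq g e h)
  have hh2 : h ^ 2 ≠ 1 := fun e => hgh ((hcsq h e g).symm)
  have mg : g ∈ Subgroup.closure ({g, h} : Set G) := Subgroup.subset_closure (by simp)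
  have mh : h ∈ Subgroup.closure ({g, h} : Set G) := Subgroup.subset_closure (by simp)
  rcases key10 hcent hgh (hcomm g h hg2 hh2) with e | e | e | e
  · exact ⟨g, h, rfl, e⟩
  · exact ⟨h, g, by rw [Set.pair_comm], e⟩
  · refine ⟨g, h⁻¹, ?_, by simpa using e⟩
    have mg' : g ∈ Subgroup.closure ({g, h⁻¹} : Set G) := Subgroup.subset_closure (by simp)
    have mh' : h⁻¹ ∈ Subgroup.closure ({g, h⁻¹} : Set G) := Subgroup.subset_closure (by simp)
    exact cpair10 mg (inv_mem mh) mg' (by simpa using inv_mem mh')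
  · have hgc : g * (g*h) ≠ (g*h) * g := fun e2 =>
      hgh (mul_left_cancel (a := g) (by simpa [mul_assoc] using e2))
    have hc2 : (g*h) ^ 2 ≠ 1 := fun e2 =>
      hgh (mul_left_cancel (a := g) (by simpa [mul_assoc] using hcsq _ e2 g)).symm
    have mg1 : g ∈ Subgroup.closure ({g, g*h} : Set G) := Subgroup.subset_closure (by simp)
    have mc1 : g*h ∈ Subgroup.closure ({g, g*h} : Set G) := Subgroup.subset_closure (by simp)
    have clo1 : Subgroup.closure ({g, h} : Set G) = Subgroup.closure ({g, g*h} : Set G) :=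
      cpair10 mg (mul_mem mg mh) mg1 (by simpa using mul_mem (inv_mem mg1) mc1)
    rcases key10 hcent hgc (hcomm g (g*h) hg2 hc2) with e1 | e1 | e1 | e1
    · exact ⟨g, g*h, clo1, e1⟩
    · exact ⟨g*h, g, clo1.trans (by rw [Set.pair_comm]), e1⟩
    · refine ⟨g, (g*h)⁻¹, ?_, by simpa using e1⟩
      have mg3 : g ∈ Subgroup.closure ({g, (g*h)⁻¹} : Set G) := Subgroup.subset_closure (by simp)
      have mc3 : (g*h)⁻¹ ∈ Subgroup.closure ({g, (g*h)⁻¹} : Set G) :=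
        Subgroup.subset_closure (by simp)
      exact cpair10 mg (inv_mem (mul_mem mg mh)) mg3
        (by simpa using mul_mem (inv_mem mg3) (inv_mem mc3))
    · have e2 : g * g = g * (h * (g * h)) := by
        rw [← sq, e1, sq]; simp [mul_assoc]
      have e3 := mul_left_cancel e2
      have e4 := congrArg (fun x => x * h⁻¹) e3
      simp only [mul_assoc, mul_inv_cancel, mul_one] at e4
      refine ⟨h, g, by rw [Set.pair_comm], ?_⟩
      simpa [mul_assoc] using congrArg (fun x => g⁻¹ * x) e4.symm
end

section
/- Let g, h be noncommuting elements of a group G, each of order greater than 2 and with (gh)² ≠ 1, such that in a group algebra K[G] over a commutative ring K the equality gh + gh⁻¹ + g⁻¹h + g⁻¹h⁻¹ = hg + hg⁻¹ + h⁻¹g + h⁻¹g⁻¹ holds. Then at least one of the following holds: gh = g⁻¹h⁻¹, or gh = hg⁻¹, or gh = h⁻¹g. -/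
/-- if `g, h` do not commute, have order `> 2`, `(gh)² ≠ 1`, and
`gh + gh⁻¹ + g⁻¹h + g⁻¹h⁻¹ = hg + hg⁻¹ + h⁻¹g + h⁻¹g⁻¹` holds in `K[G]`,
then `gh = g⁻¹h⁻¹` or `gh = hg⁻¹` or `gh = h⁻¹g`. -/
theorem stmt_11 (K : Type*) [CommRing K] [Nontrivial K] {G : Type*} [Group G]
    (g h : G) (hgh : g * h ≠ h * g) (hg : g ^ 2 ≠ 1) (hh : h ^ 2 ≠ 1)
    (hgh2 : (g * h) ^ 2 ≠ 1)
    (heq : MonoidAlgebra.of K G (g * h) + MonoidAlgebra.of K G (g * h⁻¹) +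
        MonoidAlgebra.of K G (g⁻¹ * h) + MonoidAlgebra.of K G (g⁻¹ * h⁻¹) =
      MonoidAlgebra.of K G (h * g) + MonoidAlgebra.of K G (h * g⁻¹) +
        MonoidAlgebra.of K G (h⁻¹ * g) + MonoidAlgebra.of K G (h⁻¹ * g⁻¹)) :
    g * h = g⁻¹ * h⁻¹ ∨ g * h = h * g⁻¹ ∨ g * h = h⁻¹ * g := by
  by_contra hcon
  push_neg at hcon
  obtain ⟨h1, h2, h3⟩ := hcon
  have e1 : g * h⁻¹ ≠ g * h := fun e => hh (by
    have := mul_left_cancel e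
    rw [sq, mul_eq_one_iff_eq_inv]; exact this.symm)
  have e2 : g⁻¹ * h ≠ g * h := fun e => hg (by
    have := mul_right_cancel e
    rw [sq, mul_eq_one_iff_eq_inv]; exact this.symm)
  have e3 : g⁻¹ * h⁻¹ ≠ g * h := fun e => h1 e.symm
  have e4 : h * g ≠ g * h := fun e => hgh e.symm
  have e5 : h * g⁻¹ ≠ g * h := fun e => h2 e.symm
  have e6 : h⁻¹ * g ≠ g * h := fun e => h3 e.symm
  have e7 : h⁻¹ * g⁻¹ ≠ g * h := fun e => hgh2 (by
    rw [sq, mul_eq_one_iff_eq_inv, mul_inv_rev]; exact e.symm)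
  have heq' : (Finsupp.single (g * h) (1:K) + Finsupp.single (g * h⁻¹) 1 +
        Finsupp.single (g⁻¹ * h) 1 + Finsupp.single (g⁻¹ * h⁻¹) 1 : G →₀ K) =
      Finsupp.single (h * g) 1 + Finsupp.single (h * g⁻¹) 1 +
        Finsupp.single (h⁻¹ * g) 1 + Finsupp.single (h⁻¹ * g⁻¹) 1 := congrArg MonoidAlgebra.coeff heq
  have key := DFunLike.congr_fun heq' (g * h)
  simp only [Finsupp.add_apply, Finsupp.single_eq_same, Finsupp.single_eq_of_ne' e1,
    Finsupp.single_eq_of_ne' e2, Finsupp.single_eq_of_ne' e3, Finsupp.single_eq_of_ne' e4,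
    Finsupp.single_eq_of_ne' e5, Finsupp.single_eq_of_ne' e6, Finsupp.single_eq_of_ne' e7] at key
  simpa using key
end

section
/- Let G be a nonabelian locally finite p-group such that every pair of elements of S = {t ∈ G : t² = 1} ∪ {g + g⁻¹ : g ∈ G, g² ≠ 1} commutes in (ℤ/pℤ)[G]. Then p = 2. -/
lemma aux_sq_eq_one {G : Type*} [Group G] {x : G} (hodd : Odd (orderOf x))
    (h : x ^ 2 = 1) : x = 1 := by
  have hd : orderOf x ∣ 2 := orderOf_dvd_of_pow_eq_one h
  rcases (Nat.dvd_prime Nat.prime_two).mp hd with h1 | h2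
  · exact orderOf_eq_one_iff.mp h1
  · rw [h2] at hodd; exact absurd hodd (by decide)

lemma aux_conj_inv {G : Type*} [Group G] {a b : G} (ha : Odd (orderOf a))
    (h : a⁻¹ * b * a = b⁻¹) : b = b⁻¹ := by
  obtain ⟨m, hm⟩ := ha
  have h' : a⁻¹ * b⁻¹ * a = b := by
    have := congrArg Inv.inv h
    simpa [mul_inv_rev, mul_assoc] using this
  have key : (a ^ 2)⁻¹ * b * a ^ 2 = b := by
    calc (a ^ 2)⁻¹ * b * a ^ 2 = a⁻¹ * (a⁻¹ * b * a) * a := by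
          rw [pow_two, mul_inv_rev]; simp [mul_assoc]
      _ = a⁻¹ * b⁻¹ * a := by rw [h]
      _ = b := h'
  have hc : Commute b (a ^ 2) := by
    show b * a ^ 2 = a ^ 2 * b
    conv_rhs => rw [← key]
    group
  have hca : Commute b a := by
    have hk : (a ^ 2) ^ (m + 1) = a := by
      rw [← pow_mul]
      have : 2 * (m + 1) = orderOf a + 1 := by omega
      rw [this, pow_succ, pow_orderOf_eq_one, one_mul]
    have := hc.pow_right (m + 1)
    rwa [hk] at this
  rw [← h, mul_assoc, hca.eq, ← mul_assoc, inv_mul_cancel, one_mul]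

/-- a nonabelian locally finite `p`-group in which every pair of
elements of `S` commutes in `(ℤ/pℤ)[G]` forces `p = 2`. -/
theorem stmt_12 (p : ℕ) [Fact p.Prime] (G : Type*) [Group G]
    (hG : IsLocallyFinitePGroup p G)
    (hna : ∃ g h : G, g * h ≠ h * g)
    (hgood : ∀ x ∈ Sset (ZMod p) G, ∀ y ∈ Sset (ZMod p) G, x * y = y * x) :
    p = 2 := by
  by_contra hp2
  have hp : p.Prime := Fact.out
  haveI : Fact (1 < p) := ⟨hp.one_lt⟩
  have hpodd : Odd p := hp.odd_of_ne_two hp2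
  have hord : ∀ x : G, Odd (orderOf x) := by
    intro x
    obtain ⟨n, hn⟩ := hG {x}
    have : orderOf x = p ^ n := by
      rw [← Nat.card_zpowers, Subgroup.zpowers_eq_closure]
      simpa using hn
    rw [this]; exact hpodd.pow
  have hsq : ∀ x : G, x ^ 2 = 1 → x = 1 := fun x => aux_sq_eq_one (hord x)
  have hsq' : ∀ x : G, x = x⁻¹ → x = 1 := by
    intro x hx
    refine hsq x ?_
    rw [pow_two]; nth_rewrite 2 [hx]; exact mul_inv_cancel x
  obtain ⟨g, h, hgh⟩ := hna
  have hgone : g ≠ 1 := fun he => hgh (by rw [he]; simp)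
  have hhone : h ≠ 1 := fun he => hgh (by rw [he]; simp)
  have hg2 : g ^ 2 ≠ 1 := fun hg => hgone (hsq g hg)
  have hh2 : h ^ 2 ≠ 1 := fun hh => hhone (hsq h hh)
  have hgne : g⁻¹ ≠ g := fun he => hgone (hsq' g he.symm)
  have hhne : h⁻¹ ≠ h := fun he => hhone (hsq' h he.symm)
  have mx : (MonoidAlgebra.of (ZMod p) G g + MonoidAlgebra.of (ZMod p) G g⁻¹) ∈ Sset (ZMod p) G :=
    Or.inr ⟨g, hg2, rfl⟩
  have my : (MonoidAlgebra.of (ZMod p) G h + MonoidAlgebra.of (ZMod p) G h⁻¹) ∈ Sset (ZMod p) G :=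
    Or.inr ⟨h, hh2, rfl⟩
  have E := hgood _ mx _ my
  have E2 : (MonoidAlgebra.single (g * h) (1 : ZMod p) + MonoidAlgebra.single (g * h⁻¹) 1
      + MonoidAlgebra.single (g⁻¹ * h) 1 + MonoidAlgebra.single (g⁻¹ * h⁻¹) 1)
      = (MonoidAlgebra.single (h * g) 1 + MonoidAlgebra.single (h * g⁻¹) 1
      + MonoidAlgebra.single (h⁻¹ * g) 1 + MonoidAlgebra.single (h⁻¹ * g⁻¹) 1) := by
    simpa [MonoidAlgebra.of_apply, mul_add, add_mul, MonoidAlgebra.single_mul_single,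
      add_assoc, add_comm, add_left_comm] using E
  classical
  have E2' : (Finsupp.single (g * h) (1 : ZMod p) + Finsupp.single (g * h⁻¹) 1
      + Finsupp.single (g⁻¹ * h) 1 + Finsupp.single (g⁻¹ * h⁻¹) 1)
      = (Finsupp.single (h * g) 1 + Finsupp.single (h * g⁻¹) 1
      + Finsupp.single (h⁻¹ * g) 1 + Finsupp.single (h⁻¹ * g⁻¹) 1) := congrArg MonoidAlgebra.coeff E2
  have E3 := Finsupp.ext_iff.mp E2' (g * h)
  have n0 : h * g ≠ g * h := fun he => hgh he.symm
  have n1 : g * h⁻¹ ≠ g * h := fun he => hhne (mul_left_cancel he)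
  have n2 : g⁻¹ * h ≠ g * h := fun he => hgne (mul_right_cancel he)
  simp only [Finsupp.add_apply, Finsupp.single_apply, if_true,
    if_neg n0, if_neg n1, if_neg n2, add_zero, zero_add] at E3
  -- Case 1 : h * g⁻¹ = g * h, i.e. conjugation by h inverts g
  by_cases c1 : h * g⁻¹ = g * h
  · have hc : h⁻¹ * g * h = g⁻¹ := by
      rw [mul_assoc, ← c1, ← mul_assoc, inv_mul_cancel, one_mul]
    exact hgone (hsq' g (aux_conj_inv (hord h) hc))
  -- Case 2 : h⁻¹ * g = g * h, i.e. conjugation by g inverts h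
  by_cases c2 : h⁻¹ * g = g * h
  · have cinv : g⁻¹ * h = h⁻¹ * g⁻¹ := by
      have := congrArg Inv.inv c2
      simpa [mul_inv_rev] using this
    have hc : g⁻¹ * h * g = h⁻¹ := by
      rw [cinv, mul_assoc, inv_mul_cancel, mul_one]
    exact hhone (hsq' h (aux_conj_inv (hord g) hc))
  -- Case 3 : h⁻¹ * g⁻¹ = g * h, i.e. (g*h)² = 1
  by_cases c3 : h⁻¹ * g⁻¹ = g * h
  · have hsq1 : (g * h) ^ 2 = 1 := by
      rw [pow_two]
      nth_rewrite 2 [← c3]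
      group
    have h1 : g * h = 1 := hsq _ hsq1
    have hh : g⁻¹ = h := inv_eq_of_mul_eq_one_right h1
    exact hgh (by rw [← hh, inv_mul_cancel, mul_inv_cancel])
  -- Otherwise : contradiction in ZMod p
  simp only [if_neg c1, if_neg c2, if_neg c3, add_zero, zero_add] at E3
  by_cases c4 : g⁻¹ * h⁻¹ = g * h
  · rw [if_pos c4] at E3
    have h2 : ((2 : ℕ) : ZMod p) = 0 := by push_cast; linear_combination E3
    have hdvd := (ZMod.natCast_eq_zero_iff 2 p).mp h2
    exact hp2 ((Nat.prime_dvd_prime_iff_eq hp Nat.prime_two).mp hdvd)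
  · rw [if_neg c4, add_zero] at E3
    exact one_ne_zero E3
end

section
/- Let G be a finite 2-group with a cyclic subgroup of index 2. If G is nonabelian and every involution of G is central, then G is a generalized quaternion group. -/
private lemma odd_isCoprime_two {z : ℤ} (h : ∃ b : ℤ, z = 2*b + 1) : IsCoprime (2:ℤ) z := by
  obtain ⟨b, hb⟩ := h
  exact ⟨-b, 1, by linarith⟩

private lemma aux_sq (n : ℕ) (hn : 3 ≤ n) (k : ℤ) (h : (2^(n-1) : ℤ) ∣ k*k - 1) :
    (2^(n-1):ℤ) ∣ k - 1 ∨ (2^(n-1):ℤ) ∣ k + 1 ∨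
      (4 ≤ n ∧ ((2^(n-1):ℤ) ∣ k - 1 - 2^(n-2) ∨ (2^(n-1):ℤ) ∣ k + 1 - 2^(n-2))) := by
  have h4 : (2:ℤ)^(n-1) = 4 * 2 ^ (n-3) := by
    rw [show n-1 = (n-3)+2 by omega, pow_add]; ring
  have h4' : (2:ℤ)^(n-2) = 2 * 2 ^ (n-3) := by
    rw [show n-2 = (n-3)+1 by omega, pow_succ]; ring
  have h2 : (2:ℤ) ∣ k*k - 1 := dvd_trans ⟨2^(n-2), by rw [h4, h4']; ring⟩ h
  obtain ⟨kk, hkk⟩ : ∃ b : ℤ, k*k = 2*b+1 := by obtain ⟨d, hd⟩ := h2; exact ⟨d, by omega⟩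
  obtain ⟨a, ha⟩ : ∃ a : ℤ, k = 2*a + 1 := by
    rcases Int.even_or_odd k with ⟨c, hc⟩ | ⟨c, hc⟩
    · exfalso
      have h5 : 4*(c*c) = 2*kk + 1 := by linear_combination hkk - (k + 2*c)*hc
      set q := c*c with hq
      omega
    · exact ⟨c, hc⟩
  have hprod : (2:ℤ)^(n-3) ∣ a * (a+1) := by
    obtain ⟨d, hd⟩ := h
    rw [h4] at hd
    refine ⟨d, ?_⟩
    have h5 : 4 * (a*(a+1)) = 4 * (2^(n-3) * d) := by linear_combination hd - (k + 2*a + 1)*ha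
    linarith
  rcases Int.even_or_odd a with ⟨c, hc⟩ | ⟨c, hc⟩
  · -- a even
    have hdiva : (2:ℤ)^(n-3) ∣ a :=
      ((odd_isCoprime_two ⟨c, by omega⟩).pow_left).dvd_of_dvd_mul_right hprod
    obtain ⟨t, ht⟩ := hdiva
    rcases Int.even_or_odd t with ⟨s, hs⟩ | ⟨s, hs⟩
    · exact Or.inl ⟨s, by rw [h4]; linear_combination ha + 2*ht + 2^(n-3)*2*hs⟩
    · refine Or.inr (Or.inr ⟨?_, Or.inl ⟨s, by rw [h4, h4']; linear_combination ha + 2*ht + 2^(n-3)*2*hs⟩⟩)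
      by_contra hc4
      have hn3 : n = 3 := by omega
      rw [hn3] at ht; norm_num at ht
      omega
  · -- a odd
    have hdiva : (2:ℤ)^(n-3) ∣ a + 1 :=
      ((odd_isCoprime_two ⟨c, hc⟩).pow_left).dvd_of_dvd_mul_left hprod
    obtain ⟨t, ht⟩ := hdiva
    rcases Int.even_or_odd t with ⟨s, hs⟩ | ⟨s, hs⟩
    · exact Or.inr (Or.inl ⟨s, by rw [h4]; linear_combination ha + 2*ht + 2^(n-3)*2*hs⟩)
    · refine Or.inr (Or.inr ⟨?_, Or.inr ⟨s, by rw [h4, h4']; linear_combination ha + 2*ht + 2^(n-3)*2*hs⟩⟩)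
      by_contra hc4
      have hn3 : n = 3 := by omega
      rw [hn3] at ht; norm_num at ht
      omega

private def quatMap {G : Type*} [Group G] (x y : G) {N : ℕ} : QuaternionGroup N → G
  | QuaternionGroup.a i => x ^ (i.val : ℤ)
  | QuaternionGroup.xa i => y * x ^ (i.val : ℤ)

@[simp] private lemma quatMap_a {G : Type*} [Group G] (x y : G) {N : ℕ} (i : ZMod (2*N)) :
    quatMap x y (QuaternionGroup.a i) = x ^ (i.val : ℤ) := rfl

@[simp] private lemma quatMap_xa {G : Type*} [Group G] (x y : G) {N : ℕ} (i : ZMod (2*N)) :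
    quatMap x y (QuaternionGroup.xa i) = y * x ^ (i.val : ℤ) := rfl

/-- a nonabelian finite 2-group with a cyclic subgroup of index 2
in which every involution is central is a generalized quaternion group. -/
theorem stmt_13 (G : Type*) [Group G] [Fintype G]
    (h2 : ∃ n : ℕ, Fintype.card G = 2 ^ n)
    (H : Subgroup G) (hcyc : IsCyclic H) (hidx : H.index = 2)
    (hna : ∃ a b : G, a * b ≠ b * a)
    (hcent : ∀ t : G, orderOf t = 2 → t ∈ Subgroup.center G) :
    ∃ m : ℕ, Nonempty (G ≃* QuaternionGroup (2 ^ m)) := by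
  classical
  obtain ⟨n, hn⟩ := h2
  obtain ⟨a0, b0, hab⟩ := hna
  obtain ⟨g, hg⟩ := hcyc.exists_generator
  set x : G := (g : G) with hxdef
  have hxH : x ∈ H := g.2
  have hHx : H = Subgroup.zpowers x := by
    refine le_antisymm ?_ (Subgroup.zpowers_le.mpr hxH)
    intro h hh
    obtain ⟨t, ht⟩ := hg ⟨h, hh⟩
    rw [Subgroup.mem_zpowers_iff]
    exact ⟨t, by simpa using congrArg Subtype.val ht⟩
  have hcard : Nat.card H * 2 = 2 ^ n := by
    have := Subgroup.card_mul_index H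
    rwa [hidx, show Nat.card G = 2^n from by rw [Nat.card_eq_fintype_card, hn]] at this
  have hn1 : 1 ≤ n := by
    by_contra hc
    have : n = 0 := by omega
    rw [this, pow_zero] at hcard; omega
  have hcardH : Nat.card H = 2 ^ (n-1) := by
    have h2 : (2:ℕ)^n = 2^(n-1) * 2 := by rw [← pow_succ]; congr 1; omega
    omega
  have hox : orderOf x = 2^(n-1) := by
    rw [hxdef, Subgroup.orderOf_coe, orderOf_eq_card_of_forall_mem_zpowers hg, hcardH]
  obtain ⟨y, hyH⟩ : ∃ y : G, y ∉ H := by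
    by_contra hc
    push_neg at hc
    have : H = ⊤ := (Subgroup.eq_top_iff' H).mpr hc
    rw [this, Subgroup.index_top] at hidx
    omega
  have hmem : ∀ u v : G, u * v ∈ H ↔ (u ∈ H ↔ v ∈ H) := fun u v =>
    Subgroup.mul_mem_iff_of_index_two hidx
  have hxpow : ∀ t : ℤ, x ^ t ∈ H := by
    intro t; rw [hHx, Subgroup.mem_zpowers_iff]; exact ⟨t, rfl⟩
  -- abelian contradiction
  have Cab : ∀ u : G, u ∉ H → u * x = x * u → False := by
    intro u hu hcom
    have hux : Commute u x := hcom
    have hdec : ∀ w : G, ∃ (e : ℕ) (s : ℤ), w = u ^ e * x ^ s := by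
      intro w
      by_cases hw : w ∈ H
      · rw [hHx, Subgroup.mem_zpowers_iff] at hw
        obtain ⟨s, hs⟩ := hw
        exact ⟨0, s, by simp [hs]⟩
      · have hui : u⁻¹ ∉ H := fun hh => hu (by simpa using inv_mem hh)
        have h1 : u⁻¹ * w ∈ H := (hmem _ _).mpr (iff_of_false hui hw)
        rw [hHx, Subgroup.mem_zpowers_iff] at h1
        obtain ⟨s, hs⟩ := h1
        exact ⟨1, s, by rw [pow_one, hs, mul_inv_cancel_left]⟩
    obtain ⟨e1, s1, rfl⟩ := hdec a0
    obtain ⟨e2, s2, rfl⟩ := hdec b0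
    have h1 : Commute (u^e1) (u^e2) := (Commute.refl u).pow_pow e1 e2
    have h2 : Commute (u^e1) (x^s2) := (hux.pow_left e1).zpow_right s2
    have h3 : Commute (x^s1) (u^e2) := (hux.symm.zpow_left s1).pow_right e2
    have h4 : Commute (x^s1) (x^s2) := (Commute.refl x).zpow_zpow s1 s2
    exact hab ((h1.mul_right h2).mul_left (h3.mul_right h4))
  have C1 : ∀ u : G, u ∉ H → u * u = 1 → False := by
    intro u hu h1
    have hne : u ≠ 1 := fun h => hu (h ▸ H.one_mem)
    haveI : Fact (Nat.Prime 2) := ⟨Nat.prime_two⟩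
    have ho : orderOf u = 2 := orderOf_eq_prime (by rw [sq]; exact h1) hne
    exact Cab u hu (Subgroup.mem_center_iff.mp (hcent u ho) x).symm
  -- n ≥ 3
  have hn3 : 3 ≤ n := by
    by_contra hc
    have h2 : orderOf x ∣ 2 := by
      rw [hox]
      rcases (show n - 1 = 0 ∨ n - 1 = 1 by omega) with h | h <;> rw [h] <;> norm_num
    have hx2 : x * x = 1 := by
      have := orderOf_dvd_iff_pow_eq_one.mp h2
      rwa [sq] at this
    have hcom : y * x = x * y := by
      rcases eq_or_ne x 1 with h1 | h1
      · rw [h1]; simp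
      · haveI : Fact (Nat.Prime 2) := ⟨Nat.prime_two⟩
        have ho : orderOf x = 2 := orderOf_eq_prime (by rw [sq]; exact hx2) h1
        exact Subgroup.mem_center_iff.mp (hcent x ho) y
    exact Cab y hyH hcom
  -- setup N
  set N : ℕ := 2 ^ (n-2) with hN
  have h2N : 2 * N = 2^(n-1) := by
    rw [hN, show n - 1 = (n-2)+1 by omega, pow_succ]; ring
  have hoxN : orderOf x = 2*N := by rw [hox, h2N]
  haveI : NeZero N := ⟨by rw [hN]; positivity⟩
  haveI : NeZero (2*N) := ⟨by rw [hN]; positivity⟩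
  have hcast : (2 * (N:ℤ)) = (2:ℤ)^(n-1) := by
    rw [hN]; push_cast; rw [show n - 1 = (n-2)+1 by omega, pow_succ]; ring
  have hcastN : ((N:ℕ):ℤ) = (2:ℤ)^(n-2) := by rw [hN]; push_cast; ring
  have key : ∀ A B : ℤ, (2*(N:ℤ)) ∣ B - A → x ^ A = x ^ B := by
    intro A B h
    rw [zpow_eq_zpow_iff_modEq, hoxN]
    exact Int.ModEq.symm (Int.modEq_iff_dvd.mpr (by push_cast; exact (dvd_sub_comm.mp h)))
  have keyZ : ∀ A B : ℤ, ((A : ZMod (2*N)) = (B : ZMod (2*N))) → x ^ A = x ^ B := by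
    intro A B h
    rw [zpow_eq_zpow_iff_modEq, hoxN]
    exact (ZMod.intCast_eq_intCast_iff _ _ _).mp h
  -- the conjugation exponent k
  have hyxH : y * x * y⁻¹ ∈ H := by
    have h1 : y * x ∉ H := fun hh => hyH ((hmem y x).mp hh |>.mpr hxH)
    have h2 : y⁻¹ ∉ H := fun hh => hyH (by simpa using inv_mem hh)
    exact (hmem _ _).mpr (iff_of_false h1 h2)
  obtain ⟨k, hk⟩ : ∃ k : ℤ, x ^ k = y * x * y⁻¹ := by
    rw [hHx, Subgroup.mem_zpowers_iff] at hyxH; exact hyxH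
  have hconj : ∀ A : ℤ, y * x ^ A * y⁻¹ = x ^ (k * A) := by
    intro A; rw [zpow_mul, hk, conj_zpow]
  have hyyH : y * y ∈ H := (hmem _ _).mpr Iff.rfl
  obtain ⟨m, hm⟩ : ∃ m : ℤ, x ^ m = y * y := by
    rw [hHx, Subgroup.mem_zpowers_iff] at hyyH; exact hyyH
  have hkk : (2*(N:ℤ)) ∣ k * k - 1 := by
    have h1 : y * (y * x * y⁻¹) * y⁻¹ = x ^ (k*k) := by rw [← hk]; exact hconj k
    have h2 : y * (y * x * y⁻¹) * y⁻¹ = x := by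
      have h3 : y * (y * x * y⁻¹) * y⁻¹ = (y*y) * x * (y*y)⁻¹ := by group
      rw [h3, ← hm]; group
    have h3 : x ^ (k*k) = x ^ (1:ℤ) := by rw [← h1, h2, zpow_one]
    have h4 := zpow_eq_zpow_iff_modEq.mp h3
    rw [hoxN] at h4
    have h5 := h4.dvd
    push_cast at h5
    exact dvd_sub_comm.mp h5
  have hmk : (2*(N:ℤ)) ∣ m * (k - 1) := by
    have h1 : y * x^m * y⁻¹ = x ^ (k*m) := hconj m
    have h2 : y * x^m * y⁻¹ = x ^ m := by rw [hm]; group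
    have h3 : x ^ (k*m) = x ^ m := by rw [← h1, h2]
    have h4 := zpow_eq_zpow_iff_modEq.mp h3
    rw [hoxN] at h4
    have h5 := h4.dvd
    push_cast at h5
    obtain ⟨c, hc⟩ := h5
    exact ⟨-c, by linear_combination -hc⟩
  have hk' : y⁻¹ * x * y = x ^ k := by
    have h1 : y * x^k * y⁻¹ = x := by
      rw [hconj k]
      obtain ⟨c, hc⟩ := hkk
      have h0 := key (k*k) 1 ⟨-c, by linear_combination -hc⟩
      rw [h0, zpow_one]
    calc y⁻¹ * x * y = y⁻¹ * (y * x^k * y⁻¹) * y := by rw [h1]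
    _ = x ^ k := by group
  have hconj' : ∀ A : ℤ, y⁻¹ * x ^ A * y = x ^ (k * A) := by
    intro A
    have h1 : (y⁻¹ * x * (y⁻¹)⁻¹) ^ A = y⁻¹ * x ^ A * (y⁻¹)⁻¹ := conj_zpow
    rw [inv_inv] at h1
    rw [← h1, hk', ← zpow_mul]
  -- involution machine
  have CInv : ∀ j : ℤ, (2*(N:ℤ)) ∣ m + j*(k+1) → False := by
    intro j hdvd
    have hu2 : (y * x^j) * (y * x^j) = 1 := by
      have e1 : (y * x^j) * (y * x^j) = (y*y) * (y⁻¹ * x^j * y) * x^j := by group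
      rw [e1, ← hm, hconj', ← zpow_add, ← zpow_add]
      obtain ⟨c, hc⟩ := hdvd
      have := key (m + k*j + j) 0 ⟨-c, by linear_combination -hc⟩
      rw [this, zpow_zero]
    have hu : y * x^j ∉ H := fun hh => hyH ((hmem _ _).mp hh |>.mpr (hxpow j))
    exact C1 _ hu hu2
  -- case analysis
  rcases aux_sq n hn3 k (hcast ▸ hkk) with hd | hd | ⟨hn4, hd | hd⟩
  · -- k ≡ 1 : abelian, contradiction
    obtain ⟨c, hc⟩ := hd
    have h1 : x ^ (1:ℤ) = x ^ k := key 1 k (by rw [hcast]; exact ⟨c, by linarith⟩)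
    rw [zpow_one, hk] at h1
    have hcom : y * x = x * y := by
      calc y * x = (y * x * y⁻¹) * y := by group
      _ = x * y := by rw [← h1]
    exact (Cab y hyH hcom).elim
  · -- k ≡ -1 : the quaternion case
    have hd' : (2*(N:ℤ)) ∣ k + 1 := by rw [hcast]; exact hd
    obtain ⟨c1, hc1⟩ := hd'.mul_left m
    obtain ⟨c2, hc2⟩ := hmk
    obtain ⟨t, ht⟩ : ((N:ℕ):ℤ) ∣ m :=
      ⟨c1 - c2, mul_left_cancel₀ two_ne_zero (by linear_combination hc1 - hc2)⟩
    rcases Int.even_or_odd t with ⟨s, hs⟩ | ⟨s, hs⟩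
    · exact (CInv 0 ⟨s, by linear_combination ht + (N:ℤ)*hs⟩).elim
    -- the generic quaternion presentation holds
    have hy2 : y * y = x ^ ((N:ℕ):ℤ) := by
      rw [← hm]; exact key m ((N:ℕ):ℤ) ⟨-s, by linear_combination -ht - (N:ℤ)*hs⟩
    have hyxA : ∀ A : ℤ, y * x ^ A * y⁻¹ = x ^ (-A) := by
      intro A
      rw [hconj A]
      exact key (k*A) (-A) (by obtain ⟨c, hc⟩ := hd'; exact ⟨-(A*c), by linear_combination -A*hc⟩)
    have hmove : ∀ A : ℤ, x ^ A * y = y * x ^ (-A) := by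
      intro A
      calc x^A * y = (y * x^(-A) * y⁻¹) * y := by rw [hyxA (-A), neg_neg]
      _ = y * x^(-A) := by group
    have hφmul : ∀ p q : QuaternionGroup N,
        quatMap x y (p*q) = quatMap x y p * quatMap x y q := by
      rintro (i|i) (j|j) <;>
        simp only [QuaternionGroup.a_mul_a, QuaternionGroup.a_mul_xa, QuaternionGroup.xa_mul_a,
          QuaternionGroup.xa_mul_xa, quatMap_a, quatMap_xa]
      · rw [← zpow_add]
        exact keyZ _ _ (by push_cast [ZMod.natCast_val, ZMod.cast_id]; ring)
      · rw [← mul_assoc, hmove, mul_assoc, ← zpow_add]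
        congr 1
        exact keyZ _ _ (by push_cast [ZMod.natCast_val, ZMod.cast_id]; ring)
      · rw [mul_assoc, ← zpow_add]
        congr 1
        exact keyZ _ _ (by push_cast [ZMod.natCast_val, ZMod.cast_id]; ring)
      · have e1 : y * x^((i.val:ℤ)) * (y * x^((j.val:ℤ)))
            = y * (x^((i.val:ℤ)) * y) * x^((j.val:ℤ)) := by group
        rw [e1, hmove, ← mul_assoc, hy2, ← zpow_add, ← zpow_add]
        exact keyZ _ _ (by push_cast [ZMod.natCast_val, ZMod.cast_id]; ring)
    have hpow : (2:ℕ)^n = 4 * 2^(n-2) := by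
      conv_lhs => rw [show n = (n-2)+2 by omega]
      rw [pow_add]; ring
    have hcards : Fintype.card (QuaternionGroup N) = Fintype.card G := by
      rw [QuaternionGroup.card, hn, hpow, hN]
    have hsurj : Function.Surjective (quatMap x y : QuaternionGroup N → G) := by
      intro w
      by_cases hw : w ∈ H
      · rw [hHx, Subgroup.mem_zpowers_iff] at hw
        obtain ⟨t', ht'⟩ := hw
        refine ⟨QuaternionGroup.a ((t' : ZMod (2*N))), ?_⟩
        rw [quatMap_a, keyZ (((t' : ZMod (2*N)).val : ℤ)) t'
          (by push_cast [ZMod.natCast_val, ZMod.cast_id]; ring), ht']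
      · have h1 : y⁻¹ * w ∈ H :=
          (hmem _ _).mpr (iff_of_false (fun hh => hyH (by simpa using inv_mem hh)) hw)
        rw [hHx, Subgroup.mem_zpowers_iff] at h1
        obtain ⟨t', ht'⟩ := h1
        refine ⟨QuaternionGroup.xa ((t' : ZMod (2*N))), ?_⟩
        rw [quatMap_xa, keyZ (((t' : ZMod (2*N)).val : ℤ)) t'
          (by push_cast [ZMod.natCast_val, ZMod.cast_id]; ring), ht', mul_inv_cancel_left]
    have hbij := (Fintype.bijective_iff_surjective_and_card _).mpr ⟨hsurj, hcards⟩
    refine ⟨n-2, ⟨?_⟩⟩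
    rw [← hN]
    exact (MulEquiv.ofBijective (MonoidHom.mk' (quatMap x y) hφmul) hbij).symm
  · -- k ≡ 1 + 2^(n-2) : contradiction via Bezout involution
    obtain ⟨s, hs0⟩ := hd
    have hs' : k - 1 - ((N:ℕ):ℤ) = 2*(N:ℤ)*s := by rw [hcast, hcastN]; exact hs0
    obtain ⟨c, hc⟩ := hmk
    have hN0 : ((N:ℕ):ℤ) ≠ 0 := by rw [hcastN]; positivity
    obtain ⟨c0, hc0⟩ : (2*(N:ℤ)) ∣ m * ((N:ℕ):ℤ) :=
      ⟨c - s*m, by linear_combination hc - m*hs'⟩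
    have hm2 : m = 2 * c0 :=
      mul_right_cancel₀ hN0 (show m * ((N:ℕ):ℤ) = (2*c0) * ((N:ℕ):ℤ) by linear_combination hc0)
    have hdodd : ∃ b:ℤ, (2:ℤ)^(n-3) + 1 = 2*b + 1 :=
      ⟨2^(n-4), by rw [show n-3 = (n-4)+1 by omega, pow_succ]; ring⟩
    have hcop : IsCoprime ((2:ℤ)^(n-3)+1) ((N:ℕ):ℤ) := by
      rw [hcastN]
      exact (odd_isCoprime_two hdodd).symm.pow_right
    obtain ⟨u, v, huv⟩ := hcop
    have hN2 : ((N:ℕ):ℤ) = 2*2^(n-3) := by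
      rw [hcastN, show n-2 = (n-3)+1 by omega, pow_succ]; ring
    exact (CInv (-u * c0) ⟨c0*v + s*(-u*c0),
      by linear_combination hm2 + (-u*c0)*hs' + (-u*c0)*hN2 + (-2*c0)*huv⟩).elim
  · -- k ≡ -1 + 2^(n-2) : contradiction via involution
    obtain ⟨s, hs0⟩ := hd
    have hs' : k + 1 - ((N:ℕ):ℤ) = 2*(N:ℤ)*s := by rw [hcast, hcastN]; exact hs0
    obtain ⟨c, hc⟩ := hmk
    have hN2 : ((N:ℕ):ℤ) = 2*2^(n-3) := by
      rw [hcastN, show n-2 = (n-3)+1 by omega, pow_succ]; ring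
    have h1 : ((N:ℕ):ℤ) ∣ m * ((2:ℤ)^(n-3) - 1) :=
      ⟨c - s*m, mul_left_cancel₀ two_ne_zero (by linear_combination hc - m*hs' - m*hN2)⟩
    have hdodd : ∃ b:ℤ, (2:ℤ)^(n-3) - 1 = 2*b + 1 :=
      ⟨2^(n-4)-1, by rw [show n-3 = (n-4)+1 by omega, pow_succ]; ring⟩
    have hcop : IsCoprime ((N:ℕ):ℤ) ((2:ℤ)^(n-3)-1) := by
      rw [hcastN]
      exact (odd_isCoprime_two hdodd).pow_left
    obtain ⟨t, ht⟩ := hcop.dvd_of_dvd_mul_right h1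
    exact (CInv t ⟨t + s*t, by linear_combination ht + t*hs'⟩).elim
end

section
/- Let G be a nonabelian 'good' 2-group (every pair of elements of S = {t : t² = 1} ∪ {g + g⁻¹ : g² ≠ 1} commutes in 𝔽₂[G]). Then every nonabelian 2-generator subgroup of G is either a generalized quaternion group or isomorphic to the semidirect product C_{2^m} ⋊ C₄ = ⟨x, y | x^{2^m} = y⁴ = 1, x^y = x⁻¹⟩ for some m ≥ 2. -/
section Aux
variable {G : Type*} [Group G]

/-- generic 4+4 coefficient extraction over ZMod 2 -/
lemma sum4_mem {p a2 a3 a4 b1 b2 b3 b4 : G}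
    (E : (Finsupp.single p (1 : ZMod 2) + Finsupp.single a2 1)
        + (Finsupp.single a3 1 + Finsupp.single a4 1)
      = (Finsupp.single b1 1 + Finsupp.single b2 1)
        + (Finsupp.single b3 1 + Finsupp.single b4 1))
    (hp2 : p ≠ a2) (hp3 : p ≠ a3) (hp4 : p ≠ a4) :
    p = b1 ∨ p = b2 ∨ p = b3 ∨ p = b4 := by
  by_contra hne
  push_neg at hne
  obtain ⟨h1, h2, h3, h4⟩ := hne
  have := DFunLike.congr_fun E p
  rw [Finsupp.add_apply, Finsupp.add_apply, Finsupp.add_apply, Finsupp.add_apply,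
    Finsupp.add_apply, Finsupp.add_apply, Finsupp.single_eq_same,
    Finsupp.single_eq_of_ne' (fun hh => hp2 hh.symm),
    Finsupp.single_eq_of_ne' (fun hh => hp3 hh.symm),
    Finsupp.single_eq_of_ne' (fun hh => hp4 hh.symm),
    Finsupp.single_eq_of_ne' (fun hh => h1 hh.symm),
    Finsupp.single_eq_of_ne' (fun hh => h2 hh.symm),
    Finsupp.single_eq_of_ne' (fun hh => h3 hh.symm),
    Finsupp.single_eq_of_ne' (fun hh => h4 hh.symm)] at this
  simp at this

lemma sum2_mem {p a2 b1 b2 : G}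
    (E : (Finsupp.single p (1 : ZMod 2) + Finsupp.single a2 1)
      = (Finsupp.single b1 1 + Finsupp.single b2 1))
    (hp2 : p ≠ a2) : p = b1 ∨ p = b2 := by
  by_contra hne
  push_neg at hne
  obtain ⟨h1, h2⟩ := hne
  have := DFunLike.congr_fun E p
  rw [Finsupp.add_apply, Finsupp.add_apply, Finsupp.single_eq_same,
    Finsupp.single_eq_of_ne' (fun hh => hp2 hh.symm),
    Finsupp.single_eq_of_ne' (fun hh => h1 hh.symm),
    Finsupp.single_eq_of_ne' (fun hh => h2 hh.symm)] at this
  simp at this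

open Subgroup

lemma mem_pair_closure_left (g h : G) : g ∈ closure {g, h} :=
  subset_closure (Set.mem_insert g {h})
lemma mem_pair_closure_right (g h : G) : h ∈ closure {g, h} :=
  subset_closure (Set.mem_insert_of_mem g rfl)

lemma closure_pair_mul (g h : G) : Subgroup.closure {g, h} = Subgroup.closure {g*h, h} := by
  apply le_antisymm
  · rw [closure_le]
    intro x hx
    rcases hx with rfl | rfl
    · have : (x*h)*h⁻¹ ∈ closure {x*h, h} := mul_mem (mem_pair_closure_left _ _)
        (inv_mem (mem_pair_closure_right _ _))
      simpa using this
    · exact mem_pair_closure_right _ _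
  · rw [closure_le]
    intro x hx
    rcases hx with rfl | rfl
    · exact mul_mem (mem_pair_closure_left _ _) (mem_pair_closure_right _ _)
    · exact mem_pair_closure_right _ _

lemma closure_pair_comm (g h : G) : Subgroup.closure {g, h} = Subgroup.closure {h, g} := by
  rw [Set.pair_comm]

section good
variable (hgood : ∀ x ∈ Sset (ZMod 2) G, ∀ y ∈ Sset (ZMod 2) G, x * y = y * x)

include hgood

lemma good_comm {t s : G} (ht : t ^ 2 = 1) (hs : s ^ 2 = 1) : t * s = s * t := by
  have E := hgood _ (Or.inl ⟨t, ht, rfl⟩) _ (Or.inl ⟨s, hs, rfl⟩)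
  simp only [MonoidAlgebra.of_apply, MonoidAlgebra.single_mul_single, one_mul] at E
  have E' : (Finsupp.single (t*s) (1 : ZMod 2)) = Finsupp.single (s*t) 1 := congrArg MonoidAlgebra.coeff E
  have := DFunLike.congr_fun E' (t * s)
  by_contra hne
  rw [Finsupp.single_eq_same, Finsupp.single_eq_of_ne' (fun hh => hne hh.symm)] at this
  exact one_ne_zero this

lemma good_invol {t g : G} (ht : t ^ 2 = 1) (hg : g ^ 2 ≠ 1) :
    t * g = g * t ∨ t * g = g⁻¹ * t := by
  have E := hgood _ (Or.inl ⟨t, ht, rfl⟩) _ (Or.inr ⟨g, hg, rfl⟩)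
  simp only [MonoidAlgebra.of_apply, mul_add, add_mul, MonoidAlgebra.single_mul_single,
    one_mul] at E
  have E' : (Finsupp.single (t*g) (1 : ZMod 2) + Finsupp.single (t*g⁻¹) 1)
      = (Finsupp.single (g*t) 1 + Finsupp.single (g⁻¹*t) 1) := congrArg MonoidAlgebra.coeff E
  refine sum2_mem E' ?_
  intro hh
  apply hg
  have h2 : t * (g * g) * g⁻¹ = t * 1 * g⁻¹ := by
    rw [show t * (g * g) * g⁻¹ = t * g by group, hh]; group
  rw [pow_two]
  exact mul_left_cancel (mul_right_cancel h2)

lemma good_R {a b : G} (ha : a ^ 2 ≠ 1) (hb : b ^ 2 ≠ 1) (h4 : a ^ 2 * b ^ 2 ≠ 1) :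
    a * b = b * a ∨ a * b = b * a⁻¹ ∨ a * b = b⁻¹ * a ∨ a * b = b⁻¹ * a⁻¹ := by
  have E := hgood _ (Or.inr ⟨a, ha, rfl⟩) _ (Or.inr ⟨b, hb, rfl⟩)
  simp only [MonoidAlgebra.of_apply, mul_add, add_mul, MonoidAlgebra.single_mul_single,
    one_mul] at E
  have E' : (Finsupp.single (a*b) (1 : ZMod 2) + Finsupp.single (a⁻¹*b) 1)
        + (Finsupp.single (a*b⁻¹) 1 + Finsupp.single (a⁻¹*b⁻¹) 1)
      = (Finsupp.single (b*a) 1 + Finsupp.single (b⁻¹*a) 1)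
        + (Finsupp.single (b*a⁻¹) 1 + Finsupp.single (b⁻¹*a⁻¹) 1) := congrArg MonoidAlgebra.coeff E
  have E2 : (Finsupp.single (a*b) (1 : ZMod 2) + Finsupp.single (a⁻¹*b) 1)
        + (Finsupp.single (a*b⁻¹) 1 + Finsupp.single (a⁻¹*b⁻¹) 1)
      = (Finsupp.single (b*a) 1 + Finsupp.single (b*a⁻¹) 1)
        + (Finsupp.single (b⁻¹*a) 1 + Finsupp.single (b⁻¹*a⁻¹) 1) := by
    rw [E']; abel
  have o := sum4_mem E2 (p := a*b) (a2 := a⁻¹*b) (a3 := a*b⁻¹) (a4 := a⁻¹*b⁻¹)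
    (fun hh => ha (by rw [pow_two, (by group : a*a = (a*b)*(a⁻¹*b)⁻¹), hh]; group))
    (fun hh => hb (by rw [pow_two, (by group : b*b = (a*b⁻¹)⁻¹*(a*b)), hh]; group))
    (fun hh => h4 (by rw [pow_two, pow_two, (by group : a*a*(b*b) = a*(a*b)*b), hh]; group))
  tauto

lemma good_R' {a b : G} (ha : a ^ 2 ≠ 1) (hb : b ^ 2 ≠ 1) (hne : a ^ 2 ≠ b ^ 2) :
    a * b⁻¹ = b * a ∨ a * b⁻¹ = b * a⁻¹ ∨ a * b⁻¹ = b⁻¹ * a ∨ a * b⁻¹ = b⁻¹ * a⁻¹ := by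
  have E := hgood _ (Or.inr ⟨a, ha, rfl⟩) _ (Or.inr ⟨b, hb, rfl⟩)
  simp only [MonoidAlgebra.of_apply, mul_add, add_mul, MonoidAlgebra.single_mul_single,
    one_mul] at E
  have E' : (Finsupp.single (a*b) (1 : ZMod 2) + Finsupp.single (a⁻¹*b) 1)
        + (Finsupp.single (a*b⁻¹) 1 + Finsupp.single (a⁻¹*b⁻¹) 1)
      = (Finsupp.single (b*a) 1 + Finsupp.single (b⁻¹*a) 1)
        + (Finsupp.single (b*a⁻¹) 1 + Finsupp.single (b⁻¹*a⁻¹) 1) := congrArg MonoidAlgebra.coeff E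
  have e1 : (Finsupp.single (a*b⁻¹) (1 : ZMod 2) + Finsupp.single (a⁻¹*b⁻¹) 1)
        + (Finsupp.single (a*b) 1 + Finsupp.single (a⁻¹*b) 1)
      = (Finsupp.single (a*b) (1 : ZMod 2) + Finsupp.single (a⁻¹*b) 1)
        + (Finsupp.single (a*b⁻¹) 1 + Finsupp.single (a⁻¹*b⁻¹) 1) := by abel
  have e2 : (Finsupp.single (b*a) (1 : ZMod 2) + Finsupp.single (b⁻¹*a) 1)
        + (Finsupp.single (b*a⁻¹) 1 + Finsupp.single (b⁻¹*a⁻¹) 1)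
      = (Finsupp.single (b*a) (1 : ZMod 2) + Finsupp.single (b*a⁻¹) 1)
        + (Finsupp.single (b⁻¹*a) 1 + Finsupp.single (b⁻¹*a⁻¹) 1) := by abel
  have E2 := e1.trans (E'.trans e2)
  have o := sum4_mem E2 (p := a*b⁻¹) (a2 := a⁻¹*b⁻¹) (a3 := a*b) (a4 := a⁻¹*b)
    (fun hh => ha (by rw [pow_two, (by group : a*a = (a*b⁻¹)*(a⁻¹*b⁻¹)⁻¹), hh]; group))
    (fun hh => hb (by rw [pow_two, (by group : b*b = (a*b⁻¹)⁻¹*(a*b)), hh]; group))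
    (fun hh => hne (by
      rw [pow_two, pow_two, (by group : a*a = a*(a*b⁻¹)*b), hh]; group))
  tauto

end good


section good
variable (hgood : ∀ x ∈ Sset (ZMod 2) G, ∀ y ∈ Sset (ZMod 2) G, x * y = y * x)
include hgood

lemma sq_ne_one {g h : G} (hc : g * h ≠ h * g) : g ^ 2 ≠ 1 := by
  intro hg2
  by_cases hh2 : h ^ 2 = 1
  · exact hc (good_comm hgood hg2 hh2)
  · rcases good_invol hgood hg2 hh2 with e | e
    · exact hc e
    · -- e : g*h = h⁻¹*g
      have ht' : (h * g) ^ 2 = 1 := by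
        rw [pow_two, (by group : h*g*(h*g) = h*(g*h)*g), e, (by group : h*(h⁻¹*g)*g = g*g),
          ← pow_two]
        exact hg2
      have hcomm := good_comm hgood hg2 ht'
      -- g*(h*g) = (h*g)*g
      exact hc (mul_right_cancel (b := g) (by rw [← mul_assoc] at hcomm; exact hcomm))

/-- From any noncommuting pair, produce a pair generating the same subgroup
with the inversion relation. -/
lemma main_pair {g h : G} (hc : g * h ≠ h * g) :
    ∃ x y : G, Subgroup.closure {g, h} = Subgroup.closure {x, y} ∧
      x * y ≠ y * x ∧ y⁻¹ * x * y = x⁻¹ := by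
  have hg2 : g ^ 2 ≠ 1 := sq_ne_one hgood hc
  have hh2 : h ^ 2 ≠ 1 := sq_ne_one hgood (fun e => hc e.symm)
  -- three reusable finishing moves
  have caseA : g * h = h * g⁻¹ →
      ∃ x y : G, Subgroup.closure {g, h} = Subgroup.closure {x, y} ∧
        x * y ≠ y * x ∧ y⁻¹ * x * y = x⁻¹ := by
    intro e
    exact ⟨g, h, rfl, hc, by rw [mul_assoc, e]; group⟩
  have caseB : g * h = h⁻¹ * g →
      ∃ x y : G, Subgroup.closure {g, h} = Subgroup.closure {x, y} ∧
        x * y ≠ y * x ∧ y⁻¹ * x * y = x⁻¹ := by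
    intro e
    refine ⟨h, g, closure_pair_comm g h, fun e' => hc e'.symm, ?_⟩
    have e1 : h * g * h = g := by
      rw [(by group : h * g * h = h * (g * h)), e]; group
    apply mul_left_cancel (a := g)
    apply mul_right_cancel (b := h)
    rw [(by group : g * (g⁻¹ * h * g) * h = h * g * h), e1]; group
  have caseC : (g * h) ^ 2 = 1 →
      ∃ x y : G, Subgroup.closure {g, h} = Subgroup.closure {x, y} ∧
        x * y ≠ y * x ∧ y⁻¹ * x * y = x⁻¹ := by
    intro ht
    rcases good_invol hgood ht hg2 with e | e
    · -- (g*h)*g = g*(g*h) : commute, contradiction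
      exfalso
      have e2 : g * (h * g) = g * (g * h) := by rw [← mul_assoc, e]
      exact hc ((mul_left_cancel e2).symm)
    · -- (g*h)*g = g⁻¹*(g*h)
      apply caseA
      have e1 : g * h * g = h := by rw [e]; group
      apply mul_right_cancel (b := g)
      rw [e1]; group
  by_cases hE : g ^ 2 * h ^ 2 = 1
  · by_cases hsq : g ^ 2 = h ^ 2
    · -- E3 : g² = h², g⁴ = 1
      have hg4 : g * g * (g * g) = 1 := by
        have : g ^ 2 * g ^ 2 = 1 := by nth_rewrite 2 [hsq]; exact hE
        rw [pow_two] at this; exact this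
      have hzh : h * h = g * g := by
        rw [← pow_two, ← pow_two, hsq]
      have hggg : g * (g * g) = g⁻¹ := by
        apply mul_right_cancel (b := g)
        rw [(by group : g * (g * g) * g = g * g * (g * g)), hg4]; group
      by_cases hq1 : (g * h) ^ 2 = 1
      · exact caseC hq1
      · by_cases hq2 : h * g * h = g
        · -- gives the relation directly
          refine ⟨g, h, rfl, hc, ?_⟩
          have t : (h * h)⁻¹ * (h * g * h) = h⁻¹ * g * h := by group
          rw [hq2, hzh] at t
          rw [← t]; group
        · -- pair (h, g*h)
          have hq2' : (g * h) ^ 2 ≠ 1 := hq1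
          have hhq4 : h ^ 2 * (g * h) ^ 2 ≠ 1 := by
            intro f
            apply hq2
            have f' : h * h * (g * h * (g * h)) = 1 := by
              rw [← pow_two, ← pow_two]; exact f
            rw [hzh] at f'
            -- g*g*(g*h*(g*h)) = 1  and  g*g*(g*g) = 1  ⇒ g*h*(g*h) = g*g
            have f2 : g * h * (g * h) = g * g := by
              have := f'.trans hg4.symm
              exact mul_left_cancel this
            -- cancel left g : h*(g*h) = g  ⇒ h*g*h = g
            have f3 : g * (h * (g * h)) = g * g := by rw [← mul_assoc]; exact f2
            have := mul_left_cancel f3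
            rw [← mul_assoc] at this; exact this
          rcases good_R hgood hh2 hq2' hhq4 with f | f | f | f
          · -- h*(g*h) = (g*h)*h  ⇒ commute
            exfalso
            have f2 : (h * g) * h = (g * h) * h := by
              rw [mul_assoc]; rw [f]
            exact hc ((mul_right_cancel f2).symm)
          · -- h*(g*h) = (g*h)*h⁻¹ = g ⇒ h*g*h = g, contradiction with hq2
            exfalso
            apply hq2
            rw [(by group : h * g * h = h * (g * h)), f]; group
          · -- h*(g*h) = (g*h)⁻¹*h : output pair (g*h, h)
            have hrel : h⁻¹ * (g * h) * h = (g * h)⁻¹ := by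
              have hE2 : h * (g * h) * h⁻¹ = (g * h)⁻¹ := by rw [f]; group
              have hE3 : h * (g * h)⁻¹ * h⁻¹ = g * h := by
                rw [(by group : h * (g * h)⁻¹ * h⁻¹ = (h * (g * h) * h⁻¹)⁻¹), hE2]; group
              have t : h⁻¹ * (h * (g * h)⁻¹ * h⁻¹) * h = (g * h)⁻¹ := by group
              rw [hE3] at t; exact t
            have hnc : (g * h) * h ≠ h * (g * h) := by
              intro f'
              apply hq1
              have : (g * h) * h = (g * h)⁻¹ * h := by rw [f', f]
              have e0 : (g * h) = (g * h)⁻¹ := mul_right_cancel this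
              rw [pow_two]
              nth_rewrite 2 [e0]
              group
            exact ⟨g * h, h, closure_pair_mul g h, hnc, hrel⟩
          · -- (h*(g*h))² = 1
            have ht : (h * (g * h)) ^ 2 = 1 := by
              rw [pow_two]
              nth_rewrite 2 [f]
              group
            rcases good_invol hgood ht hh2 with f' | f'
            · -- commute contradiction
              exfalso
              have f2 : h * ((g * h) * h) = h * (h * (g * h)) := by
                rw [(by group : h * ((g * h) * h) = h * (g * h) * h), f']
              have f3 := mul_left_cancel f2
              have f4 : (g * h) * h = (h * g) * h := by rw [f3]; group
              exact hc (mul_right_cancel f4)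
            · -- h*(g*h)*h = h⁻¹*(h*(g*h)) = g*h
              apply caseA
              have f2 : h * (g * (h * h)) = g * h := by
                rw [(by group : h * (g * (h * h)) = h * (g * h) * h), f']; group
              rw [hzh] at f2
              rw [← mul_assoc] at f2
              rw [← f2, mul_assoc, hggg]
    · -- E1 : g²h² = 1, g² ≠ h²
      have hhh : h * h = g⁻¹ * g⁻¹ := by
        apply mul_left_cancel (a := g * g)
        have : g * g * (h * h) = 1 := by
          rw [← pow_two, ← pow_two]; exact hE
        rw [this]; group
      rcases good_R' hgood hg2 hh2 hsq with e | e | e | e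
      · -- g*h⁻¹ = h*g
        refine ⟨g, h, rfl, hc, ?_⟩
        rw [(by group : h⁻¹ * g * h = h⁻¹ * (g * h⁻¹) * (h * h)), e, hhh]
        group
      · -- g*h⁻¹ = h*g⁻¹
        have ht : (g * h⁻¹) ^ 2 = 1 := by
          rw [pow_two]
          nth_rewrite 1 [e]
          group
        rcases good_invol hgood ht hg2 with f | f
        · exfalso
          have f2 : g * (h⁻¹ * g) = g * (g * h⁻¹) := by rw [← mul_assoc, f]
          have f3 := mul_left_cancel f2
          -- h⁻¹*g = g*h⁻¹ ⇒ commute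
          have f4 : h * (h⁻¹ * g) * h = h * (g * h⁻¹) * h := by rw [f3]
          apply hc
          rw [(by group : g * h = h * (h⁻¹ * g) * h), f4]; group
        · -- (g*h⁻¹)*g = g⁻¹*(g*h⁻¹) = h⁻¹
          have E1 : g * h⁻¹ * g = h⁻¹ := by rw [f]; group
          have hh' : g⁻¹ * h * g⁻¹ = h := by
            rw [(by group : g⁻¹ * h * g⁻¹ = (g * h⁻¹ * g)⁻¹), E1]; group
          refine ⟨g, h, rfl, hc, ?_⟩
          have t : h⁻¹ * g * (g⁻¹ * h * g⁻¹) = g⁻¹ := by group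
          rw [hh'] at t; exact t
      · -- g*h⁻¹ = h⁻¹*g ⇒ commute
        exfalso
        apply hc
        have f4 : h * (g * h⁻¹) * h = h * (h⁻¹ * g) * h := by rw [e]
        rw [(by group : g * h = h * (h⁻¹ * g) * h), ← f4]; group
      · -- g*h⁻¹ = h⁻¹*g⁻¹
        have E1 : h * g * h⁻¹ = g⁻¹ := by
          rw [(by group : h * g * h⁻¹ = h * (g * h⁻¹)), e]; group
        have hh' : h * g⁻¹ * h⁻¹ = g := by
          rw [(by group : h * g⁻¹ * h⁻¹ = (h * g * h⁻¹)⁻¹), E1]; group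
        refine ⟨g, h, rfl, hc, ?_⟩
        have t : h⁻¹ * (h * g⁻¹ * h⁻¹) * h = g⁻¹ := by group
        rw [hh'] at t
        rw [(by group : h⁻¹ * g * h = h⁻¹ * g * h), ← t]
  · rcases good_R hgood hg2 hh2 hE with e | e | e | e
    · exact absurd e hc
    · exact caseA e
    · exact caseB e
    · apply caseC
      rw [pow_two]
      nth_rewrite 2 [e]
      group

lemma y_four {x y : G} (hc : x * y ≠ y * x) (hrel : y⁻¹ * x * y = x⁻¹)
    (hox : ∃ n, orderOf x = 2 ^ n) (hoy : ∃ k, orderOf y = 2 ^ k) : y ^ 4 = 1 := by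
  obtain ⟨n, hn⟩ := hox
  have hx2 : x ^ 2 ≠ 1 := by
    intro f
    apply hc
    have hxi : x⁻¹ = x := by
      rw [pow_two] at f
      exact inv_eq_of_mul_eq_one_left f
    have : y * (y⁻¹ * x * y) = y * x⁻¹ := by rw [hrel]
    rw [hxi] at this
    rw [(by group : x * y = y * (y⁻¹ * x * y)), this]
  have hn2 : 2 ≤ n := by
    by_contra hlt
    push_neg at hlt
    interval_cases n <;>
      exact hx2 (orderOf_dvd_iff_pow_eq_one.mp (by rw [hn]; norm_num))
  -- basic derived relations
  have hxy : x * y = y * x⁻¹ := by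
    rw [(by group : x * y = y * (y⁻¹ * x * y)), hrel]
  have hyx : y * x = x⁻¹ * y := by
    have h2 : y⁻¹ * x⁻¹ * y = x := by
      rw [(by group : y⁻¹ * x⁻¹ * y = (y⁻¹ * x * y)⁻¹), hrel]; group
    have : x⁻¹ * y = y * (y⁻¹ * x⁻¹ * y) := by group
    rw [h2] at this
    exact this.symm
  have hy2 : y ^ 2 ≠ 1 := by
    intro f
    have hyi : y⁻¹ = y := by
      rw [pow_two] at f
      exact inv_eq_of_mul_eq_one_left f
    have hs : (x * y) ^ 2 = 1 := by
      rw [pow_two, (by group : x * y * (x * y) = x * (y * x) * y), hyx]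
      rw [(by group : x * (x⁻¹ * y) * y = y * y), ← pow_two]
      exact f
    have hcm := good_comm hgood f hs
    -- y*(x*y) = (x*y)*y = x*y² = x ; also y*x*y = x⁻¹
    apply hc
    have e1 : y * (x * y) = x * (y * y) := by rw [hcm]; group
    rw [pow_two] at f
    rw [f, mul_one] at e1
    -- e1 : y*(x*y) = x, but y*(x*y) = (y*x)*y = x⁻¹*y*y = x⁻¹
    rw [(by group : y * (x * y) = y * x * y), hyx] at e1
    rw [(by group : x⁻¹ * y * y = x⁻¹ * (y * y)), f, mul_one] at e1
    -- e1 : x⁻¹ = x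
    rw [hxy, e1]
  -- main contradiction argument
  by_contra hy4ne
  have hy4eq : y ^ 4 = y * y * (y * y) := by
    rw [show (4:ℕ) = 2*2 from rfl, pow_mul, pow_two, pow_two]
  have c1 : y * x * y⁻¹ = x⁻¹ := by rw [hyx]; group
  -- if y² = x² we get a contradiction
  have hxx_of : y * y = x * x → False := by
    intro f
    have c2 : y * (x*x) * y⁻¹ = x⁻¹*x⁻¹ := by
      rw [(by group : y*(x*x)*y⁻¹ = (y*x*y⁻¹)*(y*x*y⁻¹)), c1]
    have c3 : y * (y*y) * y⁻¹ = y*y := by group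
    rw [f, c2] at c3
    apply hy4ne
    rw [hy4eq, f]
    nth_rewrite 2 [← c3]
    group
  -- if y⁴ = x² we get a contradiction
  have hy4x_of : y * y * (y * y) = x * x → False := by
    intro f
    -- y² commutes with x
    have hcomm2 : y * y * x = x * (y * y) := by
      rw [(by group : y * y * x = y * (y * x)), hyx,
        (by group : y * (x⁻¹ * y) = (y * x⁻¹) * y), ← hxy]
      group
    -- y² ∉ ⟨x⟩
    have hnotin : ∀ k : ℤ, y * y ≠ x ^ k := by
      intro k f2
      have e2 : x ^ (2*k) = x ^ (2:ℤ) := by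
        have t1 : x ^ (2*k) = (x ^ k) * (x ^ k) := by rw [two_mul, zpow_add]
        rw [t1, ← f2, f, zpow_two]
      have e3 : x ^ (2*k - 2) = 1 := by
        rw [zpow_sub, e2]; group
      have e4 : ((2:ℤ)^n) ∣ 2*k - 2 := by
        have := orderOf_dvd_iff_zpow_eq_one.mpr e3
        rw [hn] at this
        exact_mod_cast this
      have e5 : ∃ c, k - 1 = 2^(n-1) * c := by
        obtain ⟨c, hc⟩ := e4
        refine ⟨c, ?_⟩
        have h2n : (2:ℤ)^n = 2 * 2^(n-1) := by
          rw [← pow_succ']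
          congr 1
          omega
        rw [h2n, mul_assoc] at hc
        linarith
      have hkodd : k % 2 = 1 := by
        obtain ⟨c, hc⟩ := e5
        have : (2:ℤ) ∣ 2^(n-1) := dvd_pow_self 2 (by omega)
        obtain ⟨d, hd⟩ := this
        have : k - 1 = 2 * (d * c) := by rw [hc, hd, mul_assoc]
        omega
      -- k odd: x ∈ ⟨x^k⟩ = ⟨y²⟩, so x commutes with y
      have hcop : IsCoprime k ((2:ℤ)^n) := by
        apply IsCoprime.pow_right
        refine ⟨1, (1-k)/2, ?_⟩
        omega
      obtain ⟨u, v, huv⟩ := hcop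
      have hxuv : x = (x ^ k) ^ u * (x ^ (2:ℤ)^n) ^ v := by
        rw [← zpow_mul, ← zpow_mul, ← zpow_add]
        rw [(by ring : k * u + 2^n * v = u * k + v * 2^n), huv, zpow_one]
      have hxn1 : x ^ ((2:ℤ)^n) = 1 := by
        have : x ^ ((2^n : ℕ) : ℤ) = 1 := by
          rw [zpow_natCast, ← hn, pow_orderOf_eq_one]
        exact_mod_cast this
      rw [hxn1, one_zpow, mul_one, ← f2] at hxuv
      apply hc
      have : Commute y ((y*y) ^ u) :=
        (Commute.refl y).mul_right (Commute.refl y) |>.zpow_right u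
      rw [hxuv]
      exact this.symm.eq
    -- u := y²x⁻¹ is an involution
    have hu2 : (y * y * x⁻¹) ^ 2 = 1 := by
      rw [pow_two, (by group : y*y*x⁻¹*(y*y*x⁻¹) = y*y*(x⁻¹*(y*y))*x⁻¹)]
      have : x⁻¹ * (y * y) = y * y * x⁻¹ := by
        rw [(by group : x⁻¹ * (y*y) = x⁻¹ * (y*y*x) * x⁻¹), hcomm2]; group
      rw [this, (by group : y*y*(y*y*x⁻¹)*x⁻¹ = y*y*(y*y)*(x⁻¹*x⁻¹)), f]
      group
    rcases good_invol hgood hu2 hy2 with f' | f'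
    · -- commute ⇒ x y = y x
      apply hc
      have f2 : y*y*(x⁻¹*y) = y*y*(y*x⁻¹) := by
        rw [(by group : y*y*(x⁻¹*y) = y*y*x⁻¹*y), f']; group
      have f3 := mul_left_cancel f2
      -- x⁻¹*y = y*x⁻¹ ⇒ x*y = y*x
      have f4 : x*(x⁻¹*y)*x = x*(y*x⁻¹)*x := by rw [f3]
      rw [(by group : x*(x⁻¹*y)*x = y*x), (by group : x*(y*x⁻¹)*x = x*y)] at f4
      exact f4.symm
    · -- y*y*x⁻¹*y = y⁻¹*(y*y*x⁻¹) = y*x⁻¹ ⇒ y² = x⁻²  ⇒ x⁶=1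
      have f2 : y*y*(x⁻¹*y) = y*(x⁻¹) := by
        rw [(by group : y*y*(x⁻¹*y) = y*y*x⁻¹*y), f']; group
      have f3 : x⁻¹ * y = y⁻¹ * x⁻¹ := mul_left_cancel (a := y) (by
        rw [(by group : y*(x⁻¹*y) = y⁻¹*(y*y*(x⁻¹*y))), f2]; group)
      -- f3 gives y = x*y⁻¹*x⁻¹, and x commutes with y², so y² = y⁻², i.e. y⁴ = 1
      have f4 : y = x * (y⁻¹ * x⁻¹) := by
        have t : x * (x⁻¹ * y) = x * (y⁻¹ * x⁻¹) := by rw [f3]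
        rw [(by group : x * (x⁻¹ * y) = y)] at t
        exact t
      have hcomm2' : x * (y⁻¹ * y⁻¹) * x⁻¹ = y⁻¹ * y⁻¹ := by
        rw [(by group : x * (y⁻¹ * y⁻¹) * x⁻¹ = (x * (y * y) * x⁻¹)⁻¹), ← hcomm2]
        group
      have f5 : y * y = y⁻¹ * y⁻¹ := by
        calc y * y = (x * (y⁻¹ * x⁻¹)) * (x * (y⁻¹ * x⁻¹)) := by rw [← f4]
          _ = x * (y⁻¹ * y⁻¹) * x⁻¹ := by group
          _ = y⁻¹ * y⁻¹ := hcomm2'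
      apply hy4ne
      rw [hy4eq]
      nth_rewrite 2 [f5]
      group
  -- now the R-relation on the pair (y, x*y)
  have hb2 : (x*y)*(x*y) = y*y := by
    rw [(by group : x*y*(x*y) = x*(y*x)*y), hyx]; group
  have hbsq : (x*y)^2 ≠ 1 := by rw [pow_two, hb2, ← pow_two]; exact hy2
  have h4 : y^2*(x*y)^2 ≠ 1 := by
    rw [pow_two, pow_two, hb2]
    intro f
    exact hy4ne (by rw [hy4eq]; exact f)
  rcases good_R hgood hy2 hbsq h4 with e | e | e | e
  · -- y*(x*y) = (x*y)*y ⇒ commute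
    apply hc
    have f2 : (y*x)*y = (x*y)*y := by rw [mul_assoc, e]
    exact (mul_right_cancel f2).symm
  · -- y*(x*y) = (x*y)*y⁻¹ = x ⇒ y*y = x*x
    apply hxx_of
    have f2 : y*(x*y) = x := by rw [e]; group
    rw [(by group : y*(x*y) = (y*x)*y), hyx] at f2
    -- x⁻¹*y*y = x
    rw [(by group : y*y = x*(x⁻¹*y*y)), (by group : x⁻¹*y*y = x⁻¹*y*y)]
    rw [(by group : x⁻¹*y*y = x⁻¹ * y * y), f2]
  · -- y*(x*y) = (x*y)⁻¹*y = y⁻¹*x⁻¹*y ⇒ y*y = x*x as well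
    apply hxx_of
    have hinv2 : y⁻¹ * x⁻¹ * y = x := by
      rw [(by group : y⁻¹ * x⁻¹ * y = (y⁻¹ * x * y)⁻¹), hrel]; group
    have f2 : y*(x*y) = x := by
      rw [e, (by group : (x*y)⁻¹*y = y⁻¹*x⁻¹*y), hinv2]
    rw [(by group : y*(x*y) = (y*x)*y), hyx] at f2
    rw [(by group : y*y = x*(x⁻¹*y*y)), (by group : x⁻¹*y*y = x⁻¹ * y * y), f2]
  · -- y*(x*y) = (x*y)⁻¹*y⁻¹ ⇒ y⁴ = x²
    apply hy4x_of
    have hinv2 : y⁻¹ * x⁻¹ * y = x := by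
      rw [(by group : y⁻¹ * x⁻¹ * y = (y⁻¹ * x * y)⁻¹), hrel]; group
    have f2 : x⁻¹*(y*y) = x*(y*y)⁻¹ := by
      have e2 : y*(x*y) = x * y⁻¹ * y⁻¹ := by
        rw [e, (by group : (x*y)⁻¹*y⁻¹ = (y⁻¹*x⁻¹*y)*y⁻¹*y⁻¹), hinv2]
      rw [(by group : y*(x*y) = (y*x)*y), hyx] at e2
      rw [(by group : x⁻¹*(y*y) = x⁻¹*y*y), e2]
      group
    -- ⇒ y*y*(y*y) = x*x
    have f3 : x*(x⁻¹*(y*y))*(y*y) = x*(x*(y*y)⁻¹)*(y*y) := by rw [f2]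
    rw [(by group : x*(x⁻¹*(y*y))*(y*y) = y*y*(y*y)), (by group : x*(x*(y*y)⁻¹)*(y*y) = x*x)] at f3
    exact f3

end good

lemma quat_case {x y : G} (hc : x * y ≠ y * x) (hrel : y⁻¹ * x * y = x⁻¹) {n : ℕ}
    (hn : 2 ≤ n) (hord : orderOf x = 2 ^ n) (hy2 : y ^ 2 = x ^ 2 ^ (n - 1)) :
    Nonempty (↥(Subgroup.closure {x, y}) ≃* QuaternionGroup (2 ^ (n - 1))) := by
  set N : ℕ := 2 ^ (n - 1) with hN
  have hNN : 2 * N = 2 ^ n := by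
    rw [hN, ← pow_succ']
    congr 1
    omega
  haveI : NeZero (2 * N) := ⟨by positivity⟩
  have h2N4 : 4 ≤ 2 * N := by
    rw [hNN]
    calc (4:ℕ) = 2^2 := by norm_num
    _ ≤ 2^n := Nat.pow_le_pow_right (by norm_num) hn
  set e : ZMod (2 * N) → G := fun i => x ^ i.val with he
  haveI : Fact (1 < 2 * N) := ⟨by omega⟩
  have hepow : ∀ m : ℕ, x ^ (m % (2 * N)) = x ^ m := by
    intro m
    rw [hNN, ← hord]
    exact pow_mod_orderOf x m
  have he_add : ∀ i j : ZMod (2 * N), e (i + j) = e i * e j := by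
    intro i j
    show x ^ (i + j).val = x ^ i.val * x ^ j.val
    rw [ZMod.val_add, hepow, pow_add]
  have he_zero : e 0 = 1 := by
    show x ^ (0 : ZMod (2*N)).val = 1
    rw [ZMod.val_zero, pow_zero]
  have he_neg : ∀ i : ZMod (2 * N), e (-i) = (e i)⁻¹ := by
    intro i
    have h1 : e i * e (-i) = 1 := by
      rw [← he_add, add_neg_cancel, he_zero]
    exact (inv_eq_of_mul_eq_one_right h1).symm
  have hconj : ∀ i : ZMod (2 * N), e i * y = y * e (-i) := by
    intro i
    rw [he_neg]
    show x ^ i.val * y = y * (x ^ i.val)⁻¹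
    have t : (y⁻¹ * x * y⁻¹⁻¹) ^ i.val = y⁻¹ * x ^ i.val * y⁻¹⁻¹ := conj_pow
    rw [inv_inv] at t
    rw [hrel, inv_pow] at t
    rw [(by group : x ^ i.val * y = y * (y⁻¹ * x ^ i.val * y)), ← t]
  have hy2' : y * y = e ((N : ZMod (2 * N))) := by
    show y * y = x ^ ((N : ZMod (2*N))).val
    rw [ZMod.val_natCast_of_lt (by omega), ← pow_two, hy2]
  -- the homomorphism
  let f : QuaternionGroup N → G := fun z =>
    match z with
    | QuaternionGroup.a i => e i
    | QuaternionGroup.xa i => y * e i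
  have hfmul : ∀ z w : QuaternionGroup N, f (z * w) = f z * f w := by
    rintro (i | i) (j | j)
    · show e (i + j) = e i * e j
      exact he_add i j
    · show y * e (j - i) = e i * (y * e j)
      rw [(by group : e i * (y * e j) = (e i * y) * e j), hconj, sub_eq_neg_add, he_add]
      group
    · show y * e (i + j) = y * e i * e j
      rw [he_add]; group
    · show e ((N : ZMod (2*N)) + j - i) = (y * e i) * (y * e j)
      rw [(by group : (y * e i) * (y * e j) = y * (e i * y) * e j), hconj,
        (by group : y * (y * e (-i)) * e j = (y * y) * (e (-i) * e j)), hy2', ← he_add, ← he_add]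
      congr 1
      ring
  let φ : QuaternionGroup N →* G := MonoidHom.mk' f hfmul
  have hinj : Function.Injective φ := by
    rw [injective_iff_map_eq_one]
    rintro (i | i) hz
    · -- e i = 1
      have hx1 : x ^ i.val = 1 := hz
      have hdvd := orderOf_dvd_of_pow_eq_one hx1
      rw [hord] at hdvd
      have hlt : i.val < 2 ^ n := by
        rw [← hNN]
        exact i.val_lt
      have hv0 : i.val = 0 := Nat.eq_zero_of_dvd_of_lt hdvd hlt
      have hi0 : i = 0 := (ZMod.val_eq_zero i).mp hv0
      rw [hi0]
      exact QuaternionGroup.one_def.symm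
    · -- y * e i = 1
      exfalso
      have : y * x ^ i.val = 1 := hz
      have hy' : y = (x ^ i.val)⁻¹ := eq_inv_of_mul_eq_one_left this
      apply hc
      rw [hy']
      have : Commute x ((x ^ i.val)⁻¹) := ((Commute.refl x).pow_right i.val).inv_right
      exact this.eq
  have hrange : φ.range = Subgroup.closure {x, y} := by
    apply le_antisymm
    · rintro w ⟨z, rfl⟩
      rcases z with i | i
      · exact pow_mem (mem_pair_closure_left x y) i.val
      · exact mul_mem (mem_pair_closure_right x y) (pow_mem (mem_pair_closure_left x y) i.val)
    · rw [Subgroup.closure_le]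
      intro w hw
      rcases hw with rfl | rfl
      · refine ⟨QuaternionGroup.a 1, ?_⟩
        show e 1 = w
        show w ^ (1 : ZMod (2*N)).val = w
        rw [ZMod.val_one]
        exact pow_one w
      · refine ⟨QuaternionGroup.xa 0, ?_⟩
        show w * e 0 = w
        rw [he_zero, mul_one]
  exact ⟨((MulEquiv.subgroupCongr hrange.symm).trans (MonoidHom.ofInjective hinj).symm)⟩

lemma conj_zpow_rel {x y : G} (hrel : y⁻¹ * x * y = x⁻¹) :
    (∀ k : ℤ, y⁻¹ * x ^ k * y = x ^ (-k)) ∧ (∀ k : ℤ, y * x ^ k * y⁻¹ = x ^ (-k)) := by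
  have hxy : y * x * y⁻¹ = x⁻¹ := by
    have h2 : y * x⁻¹ * y⁻¹ = x := by
      have t : y * (y⁻¹ * x * y) * y⁻¹ = y * x⁻¹ * y⁻¹ := by rw [hrel]
      rw [(by group : y * (y⁻¹ * x * y) * y⁻¹ = x)] at t
      exact t.symm
    rw [(by group : y * x * y⁻¹ = (y * x⁻¹ * y⁻¹)⁻¹), h2]
  constructor
  · intro k
    have t : (y⁻¹ * x * y⁻¹⁻¹) ^ k = y⁻¹ * x ^ k * y⁻¹⁻¹ := conj_zpow
    rw [inv_inv, hrel] at t
    rw [← t, inv_zpow, zpow_neg]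
  · intro k
    have t : (y * x * y⁻¹) ^ k = y * x ^ k * y⁻¹ := conj_zpow
    rw [hxy] at t
    rw [← t, inv_zpow, zpow_neg]

lemma yj_xk {x y : G} (hrel : y⁻¹ * x * y = x⁻¹) :
    ∀ (j k : ℤ), ∃ s : ℤ, y ^ j * x ^ k = x ^ s * y ^ j := by
  obtain ⟨h1, h2⟩ := conj_zpow_rel hrel
  intro j
  induction j using Int.induction_on with
  | zero => exact fun k => ⟨k, by simp⟩
  | succ i ih =>
    intro k
    obtain ⟨s, hs⟩ := ih k
    refine ⟨-s, ?_⟩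
    have : y ^ ((i:ℤ)+1) * x ^ k = y * (y ^ (i:ℤ) * x ^ k) := by
      rw [← mul_assoc, ← zpow_one_add]
      congr 1
      ring
    rw [this, hs, ← mul_assoc]
    have t : y * x ^ s = x ^ (-s) * y := by
      rw [← h2 s]; group
    rw [t, mul_assoc]
    congr 1
    rw [← zpow_one_add]
    congr 1
    ring
  | pred i ih =>
    intro k
    obtain ⟨s, hs⟩ := ih k
    refine ⟨-s, ?_⟩
    have : y ^ (-(i:ℤ)-1) * x ^ k = y⁻¹ * (y ^ (-(i:ℤ)) * x ^ k) := by
      rw [← mul_assoc, ← zpow_neg_one, ← zpow_add]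
      congr 1
      ring
    rw [this, hs, ← mul_assoc]
    have t : y⁻¹ * x ^ s = x ^ (-s) * y⁻¹ := by
      rw [← h1 s]; group
    rw [t, mul_assoc]
    congr 1
    rw [← zpow_neg_one, ← zpow_add]
    congr 1
    ring

/-- The subgroup generated by x,y when y⁻¹xy = x⁻¹ : the set of x^i y^j. -/
def pairSubgroup {x y : G} (hrel : y⁻¹ * x * y = x⁻¹) : Subgroup G where
  carrier := {w | ∃ i j : ℤ, w = x ^ i * y ^ j}
  one_mem' := ⟨0, 0, by simp⟩
  mul_mem' := by
    rintro a b ⟨i, j, rfl⟩ ⟨k, l, rfl⟩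
    obtain ⟨s, hs⟩ := yj_xk hrel j k
    refine ⟨i + s, j + l, ?_⟩
    rw [(by group : x ^ i * y ^ j * (x ^ k * y ^ l) = x ^ i * (y ^ j * x ^ k) * y ^ l), hs]
    rw [zpow_add, zpow_add]
    group
  inv_mem' := by
    rintro a ⟨i, j, rfl⟩
    obtain ⟨s, hs⟩ := yj_xk hrel (-j) (-i)
    exact ⟨s, -j, by rw [mul_inv_rev, ← zpow_neg, ← zpow_neg, hs]⟩

lemma pairSubgroup_eq {x y : G} (hrel : y⁻¹ * x * y = x⁻¹) :
    Subgroup.closure {x, y} = pairSubgroup hrel := by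
  apply le_antisymm
  · rw [Subgroup.closure_le]
    intro w hw
    rcases hw with rfl | rfl
    · exact ⟨1, 0, by simp⟩
    · exact ⟨0, 1, by simp⟩
  · rintro a ⟨i, j, rfl⟩
    exact mul_mem (zpow_mem (mem_pair_closure_left x y) i)
      (zpow_mem (mem_pair_closure_right x y) j)

lemma semi_case {x y : G} (hc : x * y ≠ y * x) (hrel : y⁻¹ * x * y = x⁻¹) {n : ℕ}
    (hn : 2 ≤ n) (hord : orderOf x = 2 ^ n) (hy4 : y ^ 4 = 1) (hy2 : y ^ 2 ≠ 1)
    (hnot : y ^ 2 ∉ Subgroup.zpowers x) :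
    Nat.card ↥(Subgroup.closure {x, y}) = 2 ^ (n + 2) := by
  haveI : NeZero ((2:ℕ)^n) := ⟨by positivity⟩
  have hxn1 : x ^ ((2:ℕ)^n) = 1 := by rw [← hord, pow_orderOf_eq_one]
  have hxZ : x ^ ((2^n : ℕ) : ℤ) = 1 := by rw [zpow_natCast]; exact hxn1
  have hyZ : y ^ (((4:ℕ) : ℤ)) = 1 := by rw [zpow_natCast]; exact hy4
  have keyx : ∀ m : ℤ, x ^ m = x ^ (m % ((2^n : ℕ) : ℤ)) := by
    intro m
    conv_lhs => rw [← Int.emod_add_mul_ediv m ((2^n : ℕ) : ℤ)]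
    rw [zpow_add, zpow_mul, hxZ, one_zpow, mul_one]
  have keyy : ∀ m : ℤ, y ^ m = y ^ (m % (((4:ℕ) : ℤ))) := by
    intro m
    conv_lhs => rw [← Int.emod_add_mul_ediv m (((4:ℕ)) : ℤ)]
    rw [zpow_add, zpow_mul, hyZ, one_zpow, mul_one]
  -- the intersection of ⟨x⟩ and ⟨y⟩ is trivial
  have hinter : ∀ m : ℤ, (y ^ m ∈ Subgroup.zpowers x) → y ^ m = 1 := by
    intro m hm
    rw [keyy] at hm ⊢
    set r := m % (((4:ℕ)) : ℤ) with hr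
    have h4a : (0:ℤ) ≤ r := Int.emod_nonneg m (by norm_num)
    have h4b : r < 4 := Int.emod_lt_of_pos m (by norm_num)
    interval_cases r
    · simp
    · exfalso
      rw [zpow_one] at hm
      obtain ⟨t, ht⟩ := hm
      apply hc
      rw [← ht, ← zpow_one_add, ← zpow_add_one]
      congr 1
      ring
    · exfalso
      apply hnot
      rw [(by norm_num : ((2:ℤ)) = ((2:ℕ):ℤ)), zpow_natCast] at hm
      exact hm
    · exfalso
      rw [(by norm_num : ((3:ℤ)) = -1 + ((4:ℕ):ℤ)), zpow_add, hyZ, mul_one, zpow_neg_one] at hm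
      obtain ⟨t, ht⟩ := hm
      apply hc
      have ht' : x ^ t = y⁻¹ := ht
      have hy' : y = (x ^ t)⁻¹ := by rw [ht']; simp
      rw [hy', ← zpow_neg, ← zpow_one_add, ← zpow_add_one]
      congr 1
      ring
  -- build the explicit bijection
  rw [pairSubgroup_eq hrel]
  have hbij : Function.Bijective
      (fun p : ZMod (2^n) × ZMod 4 =>
        (⟨x ^ (p.1.val : ℤ) * y ^ (p.2.val : ℤ), ⟨_, _, rfl⟩⟩ :
          ↥(pairSubgroup hrel))) := by
    constructor
    · rintro ⟨a, b⟩ ⟨c, d⟩ hab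
      simp only [Subtype.mk_eq_mk] at hab
      -- x^(a-c) = y^(d-b)
      have e1 : x ^ ((a.val : ℤ) - (c.val : ℤ)) = y ^ ((d.val : ℤ) - (b.val : ℤ)) := by
        have h0 : (x ^ (c.val:ℤ))⁻¹ * (x ^ (a.val:ℤ) * y ^ (b.val:ℤ)) * (y ^ (b.val:ℤ))⁻¹
            = (x ^ (c.val:ℤ))⁻¹ * (x ^ (c.val:ℤ) * y ^ (d.val:ℤ)) * (y ^ (b.val:ℤ))⁻¹ := by
          rw [Subtype.mk.inj hab]
        calc x ^ ((a.val:ℤ) - (c.val:ℤ))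
            = (x ^ (c.val:ℤ))⁻¹ * (x ^ (a.val:ℤ) * y ^ (b.val:ℤ)) * (y ^ (b.val:ℤ))⁻¹ := by
              group
          _ = (x ^ (c.val:ℤ))⁻¹ * (x ^ (c.val:ℤ) * y ^ (d.val:ℤ)) * (y ^ (b.val:ℤ))⁻¹ := h0
          _ = y ^ ((d.val:ℤ) - (b.val:ℤ)) := by group
      have e2 : y ^ ((d.val : ℤ) - (b.val : ℤ)) = 1 := by
        apply hinter
        rw [← e1]
        exact ⟨_, rfl⟩
      have e3 : x ^ ((a.val : ℤ) - (c.val : ℤ)) = 1 := by rw [e1, e2]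
      -- conclude
      have hb4 : ((4:ℕ):ℤ) ∣ ((d.val : ℤ) - (b.val : ℤ)) := by
        have := orderOf_dvd_iff_zpow_eq_one.mpr e2
        have hoy : orderOf y = 4 := by
          have hdvd : orderOf y ∣ 4 := orderOf_dvd_of_pow_eq_one hy4
          have hpos : 0 < orderOf y := by
            apply orderOf_pos_iff.mpr
            exact isOfFinOrder_iff_pow_eq_one.mpr ⟨4, by norm_num, hy4⟩
          have hne1 : orderOf y ≠ 1 := by
            intro f
            exact hy2 (by rw [orderOf_eq_one_iff.mp f]; group)
          have hne2 : orderOf y ≠ 2 := by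
            intro f
            exact hy2 (by rw [← f, pow_orderOf_eq_one])
          have hle : orderOf y ≤ 4 := Nat.le_of_dvd (by norm_num) hdvd
          interval_cases h : orderOf y
          · exact absurd rfl hne1
          · exact absurd rfl hne2
          · norm_num at hdvd
          · rfl
        rw [hoy] at this
        exact_mod_cast this
      have hbd : b = d := by
        have hbb := b.val_lt
        have hdd := d.val_lt
        have : (b.val : ℤ) = d.val := by omega
        have : b.val = d.val := by exact_mod_cast this
        exact ZMod.val_injective _ this
      have hac : a = c := by
        have hdvd : ((2^n : ℕ):ℤ) ∣ ((a.val : ℤ) - (c.val : ℤ)) := by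
          have := orderOf_dvd_iff_zpow_eq_one.mpr e3
          rw [hord] at this
          exact_mod_cast this
        have haa := a.val_lt
        have hcc := c.val_lt
        have : (a.val : ℤ) = c.val := by
          rcases hdvd with ⟨t, ht⟩
          have h1 : (0:ℤ) < ((2^n : ℕ):ℤ) := by positivity
          have haa' : (a.val:ℤ) < ((2^n:ℕ):ℤ) := by exact_mod_cast haa
          have hcc' : (c.val:ℤ) < ((2^n:ℕ):ℤ) := by exact_mod_cast hcc
          have ha0 : (0:ℤ) ≤ (a.val:ℤ) := Int.natCast_nonneg _
          have hc0 : (0:ℤ) ≤ (c.val:ℤ) := Int.natCast_nonneg _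
          have ht0 : t = 0 := by
            rcases lt_trichotomy t 0 with htl | htl | htl
            · have := mul_le_mul_of_nonneg_left (show t ≤ -1 by omega) (le_of_lt h1)
              simp only [mul_neg_one] at this
              linarith
            · exact htl
            · have := mul_le_mul_of_nonneg_left (show 1 ≤ t by omega) (le_of_lt h1)
              simp only [mul_one] at this
              linarith
          rw [ht0, mul_zero] at ht
          linarith
        have : a.val = c.val := by exact_mod_cast this
        exact ZMod.val_injective _ this
      rw [hbd, hac]
    · rintro ⟨w, i, j, rfl⟩
      refine ⟨((i : ZMod (2^n)), (j : ZMod 4)), ?_⟩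
      simp only [Subtype.mk_eq_mk]
      congr 1
      · rw [keyx i, ZMod.val_intCast, keyy j, ZMod.val_intCast]
  have := Nat.card_eq_of_bijective _ hbij
  rw [← this, Nat.card_prod, Nat.card_zmod, Nat.card_zmod]
  ring



end Aux

/-- in a nonabelian good locally finite 2-group, every nonabelian
2-generator subgroup is generalized quaternion or the semidirect product
`C_{2^m} ⋊ C₄ = ⟨x, y | x^{2^m} = y⁴ = 1, x^y = x⁻¹⟩` with `m ≥ 2` (a group of
order `2^{m+2}`). -/
theorem stmt_14 (G : Type*) [Group G]
    (hG : IsLocallyFinitePGroup 2 G)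
    (hna : ∃ g h : G, g * h ≠ h * g)
    (hgood : ∀ x ∈ Sset (ZMod 2) G, ∀ y ∈ Sset (ZMod 2) G, x * y = y * x) :
    ∀ g h : G, g * h ≠ h * g →
      (∃ m : ℕ, Nonempty (↥(Subgroup.closure {g, h}) ≃* QuaternionGroup (2 ^ m))) ∨
      (∃ m : ℕ, 2 ≤ m ∧ ∃ x y : G,
        Subgroup.closure {g, h} = Subgroup.closure {x, y} ∧
        x ^ (2 ^ m) = 1 ∧ y ^ 4 = 1 ∧ y⁻¹ * x * y = x⁻¹ ∧
        Nat.card (Subgroup.closure {g, h}) = 2 ^ (m + 2)) := by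
  intro g h hc
  -- order of any element is a power of two
  have horder : ∀ w : G, ∃ n : ℕ, orderOf w = 2 ^ n := by
    intro w
    obtain ⟨n, hn⟩ := hG {w}
    refine ⟨n, ?_⟩
    rw [← hn]
    rw [show ((({w} : Finset G) : Set G)) = ({w} : Set G) by simp,
      ← Subgroup.zpowers_eq_closure, Nat.card_zpowers]
  obtain ⟨x, y, hcl, hxy, hrel⟩ := main_pair hgood hc
  have hx2 : x ^ 2 ≠ 1 := sq_ne_one hgood hxy
  have hy2 : y ^ 2 ≠ 1 := sq_ne_one hgood (fun e => hxy e.symm)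
  obtain ⟨n, hn⟩ := horder x
  have hn2 : 2 ≤ n := by
    by_contra hlt
    push_neg at hlt
    interval_cases n <;>
      exact hx2 (orderOf_dvd_iff_pow_eq_one.mp (by rw [hn]; norm_num))
  have hy4 : y ^ 4 = 1 := y_four hgood hxy hrel ⟨n, hn⟩ (horder y)
  by_cases hmem : y ^ 2 ∈ Subgroup.zpowers x
  · -- quaternion case
    left
    rw [Subgroup.mem_zpowers_iff] at hmem
    obtain ⟨k, hk⟩ := hmem
    have hy2x : y ^ 2 = x ^ 2 ^ (n - 1) := by
      rw [← hk]
      have hy22 : y ^ 2 * y ^ 2 = 1 := by rw [← pow_add]; exact hy4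
      have h2k : x ^ (2*k) = 1 := by
        rw [two_mul, zpow_add, hk]; exact hy22
      have hdvd : ((2:ℤ)^n) ∣ 2*k := by
        have := orderOf_dvd_iff_zpow_eq_one.mpr h2k
        rw [hn] at this
        exact_mod_cast this
      obtain ⟨c, hc⟩ := hdvd
      have hk2 : k = 2^(n-1) * c := by
        have h2n : (2:ℤ)^n = 2*2^(n-1) := by
          rw [← pow_succ']
          congr 1
          omega
        rw [h2n, mul_assoc] at hc
        linarith
      have hzz : x ^ ((2:ℤ)^(n-1)) * x ^ ((2:ℤ)^(n-1)) = 1 := by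
        rw [← zpow_add, ← two_mul, ← pow_succ']
        have hxn1 : x ^ ((2:ℤ)^n) = 1 := by
          have : x ^ ((2^n : ℕ) : ℤ) = 1 := by
            rw [zpow_natCast, ← hn, pow_orderOf_eq_one]
          exact_mod_cast this
        rw [show n - 1 + 1 = n by omega]
        exact hxn1
      rcases Int.even_or_odd c with ⟨d, hd⟩ | ⟨d, hd⟩
      · exfalso
        apply hy2
        rw [← hk, hk2, hd]
        rw [(by ring : (2:ℤ)^(n-1) * (d + d) = ((2:ℤ)^(n-1) + 2^(n-1)) * d), zpow_mul,
          zpow_add, hzz, one_zpow]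
      · have : x ^ k = x ^ ((2:ℤ)^(n-1)) := by
          rw [hk2, hd, (by ring : (2:ℤ)^(n-1) * (2*d+1) = ((2:ℤ)^(n-1) + 2^(n-1)) * d + 2^(n-1)),
            zpow_add, zpow_mul, zpow_add, hzz, one_zpow, one_mul]
        rw [this]
        rw [show ((2:ℤ)^(n-1)) = ((2^(n-1) : ℕ) : ℤ) by push_cast; ring, zpow_natCast]
    obtain ⟨e⟩ := quat_case hxy hrel hn2 hn hy2x
    exact ⟨n - 1, ⟨(MulEquiv.subgroupCongr hcl).trans e⟩⟩
  · right
    refine ⟨n, hn2, x, y, hcl, ?_, hy4, hrel, ?_⟩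
    · rw [← hn]; exact pow_orderOf_eq_one x
    · rw [hcl]; exact semi_case hxy hrel hn2 hn hy4 hy2 hmem
end

section
/- In the group G = ⟨x, y | x^{2^m} = y⁴ = 1, x^y = x⁻¹⟩ with m ≥ 2, every element outside the subgroup ⟨x, y²⟩ has order 4. -/
/-- in the group `⟨x, y | x^{2^m} = y⁴ = 1, x^y = x⁻¹⟩` with
`m ≥ 2` (a group of order `2^{m+2}` generated by `x, y` with these orders and
relation), every element outside `⟨x, y²⟩` has order 4. -/
theorem stmt_16 (m : ℕ) (hm : 2 ≤ m) (G : Type*) [Group G] (x y : G)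
    (hgen : Subgroup.closure ({x, y} : Set G) = ⊤)
    (hx : orderOf x = 2 ^ m) (hy : orderOf y = 4)
    (hrel : y⁻¹ * x * y = x⁻¹)
    (hcard : Nat.card G = 2 ^ (m + 2)) :
    ∀ g : G, g ∉ Subgroup.closure ({x, y ^ 2} : Set G) → orderOf g = 4 := by
  have hy4 : y ^ 4 = 1 := by rw [← hy]; exact pow_orderOf_eq_one y
  have hxy : x * y = y * x⁻¹ := by
    rw [← hrel]; group
  have h3 : x * y * x = y := by
    rw [hxy]; group
  have h4 : y * x = x⁻¹ * y := by
    calc y * x = x⁻¹ * (x * y * x) := by group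
    _ = x⁻¹ * y := by rw [h3]
  have h1 : y * x * y⁻¹ = x⁻¹ := by rw [h4]; group
  have hyx : ∀ b : ℤ, y * x ^ b = x ^ (-b) * y := by
    intro b
    have : y * x ^ b * y⁻¹ = x ^ (-b) := by
      rw [zpow_neg, ← inv_zpow, ← h1, conj_zpow]
    calc y * x ^ b = (y * x ^ b * y⁻¹) * y := by group
    _ = x ^ (-b) * y := by rw [this]
  have key : ∀ (n : ℕ) (b : ℤ), y ^ n * x ^ b = x ^ ((-1 : ℤ) ^ n * b) * y ^ n := by
    intro n
    induction n with
    | zero => intro b; simp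
    | succ k ih =>
      intro b
      calc y ^ (k + 1) * x ^ b = y ^ k * (y * x ^ b) := by rw [pow_succ]; group
      _ = y ^ k * (x ^ (-b) * y) := by rw [hyx]
      _ = (y ^ k * x ^ (-b)) * y := by group
      _ = x ^ ((-1 : ℤ) ^ k * (-b)) * y ^ k * y := by rw [ih]
      _ = x ^ ((-1 : ℤ) ^ (k + 1) * b) * y ^ (k + 1) := by
          have he : (-1 : ℤ) ^ k * -b = (-1 : ℤ) ^ (k + 1) * b := by
            rw [pow_succ]; ring
          rw [he, pow_succ y k]; group
  have hrep : ∀ g : G, ∃ (a : ℤ) (c : ℕ), g = x ^ a * y ^ c := by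
    intro g
    have hg : g ∈ Subgroup.closure ({x, y} : Set G) := by rw [hgen]; trivial
    induction hg using Subgroup.closure_induction with
    | mem z hz =>
      rcases hz with h | h
      · exact ⟨1, 0, by simp [h]⟩
      · simp only [Set.mem_singleton_iff] at h
        exact ⟨0, 1, by simp [h]⟩
    | one => exact ⟨0, 0, by simp⟩
    | mul u v _ _ hu hv =>
      obtain ⟨a, c, rfl⟩ := hu
      obtain ⟨b, d, rfl⟩ := hv
      refine ⟨a + (-1 : ℤ) ^ c * b, c + d, ?_⟩
      calc x ^ a * y ^ c * (x ^ b * y ^ d)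
          = x ^ a * (y ^ c * x ^ b) * y ^ d := by group
      _ = x ^ a * (x ^ ((-1 : ℤ) ^ c * b) * y ^ c) * y ^ d := by rw [key]
      _ = x ^ (a + (-1 : ℤ) ^ c * b) * y ^ (c + d) := by
          rw [zpow_add, pow_add]; group
    | inv u _ hu =>
      obtain ⟨a, c, rfl⟩ := hu
      have hyc : y ^ (3 * c) = (y ^ c)⁻¹ := by
        rw [eq_inv_iff_mul_eq_one, ← pow_add]
        have : 3 * c + c = 4 * c := by ring
        rw [this, pow_mul, hy4, one_pow]
      refine ⟨(-1 : ℤ) ^ (3 * c) * (-a), 3 * c, ?_⟩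
      calc (x ^ a * y ^ c)⁻¹ = (y ^ c)⁻¹ * x ^ (-a) := by group
      _ = y ^ (3 * c) * x ^ (-a) := by rw [hyc]
      _ = x ^ ((-1 : ℤ) ^ (3 * c) * (-a)) * y ^ (3 * c) := by rw [key]
  intro g hg
  obtain ⟨a, c, rfl⟩ := hrep g
  -- c must be odd
  have hcodd : Odd c := by
    rcases Nat.even_or_odd c with ⟨k, hk⟩ | h
    · exfalso
      apply hg
      have hxm : x ∈ Subgroup.closure ({x, y ^ 2} : Set G) :=
        Subgroup.subset_closure (by left; rfl)
      have hym : y ^ 2 ∈ Subgroup.closure ({x, y ^ 2} : Set G) :=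
        Subgroup.subset_closure (by right; rfl)
      have : y ^ c = (y ^ 2) ^ k := by rw [← pow_mul]; congr 1; omega
      rw [this]
      exact mul_mem (zpow_mem hxm a) (pow_mem hym k)
    · exact h
  obtain ⟨k, hk⟩ := hcodd
  have hsq : (x ^ a * y ^ c) ^ 2 = y ^ 2 := by
    have h2 : (x ^ a * y ^ c) ^ 2 = x ^ a * (y ^ c * x ^ a) * y ^ c := by
      rw [pow_two]; simp [mul_assoc]
    rw [h2, key, hk]
    have hneg : (-1 : ℤ) ^ (2 * k + 1) = -1 := by
      rw [pow_succ, pow_mul]; norm_num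
    rw [hneg]
    have : x ^ a * (x ^ (-1 * a) * y ^ (2 * k + 1)) * y ^ (2 * k + 1)
        = x ^ (a + -1 * a) * y ^ ((2 * k + 1) + (2 * k + 1)) := by
      rw [zpow_add, pow_add]; group
    rw [this]
    have ha : a + -1 * a = 0 := by ring
    have hc2 : (2 * k + 1) + (2 * k + 1) = 4 * k + 2 := by ring
    rw [ha, hc2, zpow_zero, one_mul, pow_add, pow_mul, hy4, one_pow, one_mul]
  have hy2ne : y ^ 2 ≠ 1 := by
    intro h
    have := orderOf_dvd_of_pow_eq_one h
    rw [hy] at this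
    omega
  have h4 : (x ^ a * y ^ c) ^ 2 ^ 2 = 1 := by
    have : (2 : ℕ) ^ 2 = 2 * 2 := by norm_num
    rw [this, pow_mul, hsq, ← pow_mul]
    norm_num [hy4]
  have h2ne : (x ^ a * y ^ c) ^ 2 ^ 1 ≠ 1 := by
    rw [pow_one, hsq]; exact hy2ne
  have : orderOf (x ^ a * y ^ c) = 2 ^ 2 := orderOf_eq_prime_pow h2ne h4
  rw [this]; norm_num
end

section
/- Let G be a nonabelian 'good' 2-group (every pair of elements of S = {t : t² = 1} ∪ {g + g⁻¹ : g² ≠ 1} commutes in 𝔽₂[G]) whose exponent is not 4. Then G has an abelian subgroup A of index 2 and an element b of order 4 such that b⁻¹ a b = a⁻¹ for all a ∈ A. -/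
section Aux

variable {G : Type*} [Group G]

/-- goodness hypothesis -/
abbrev Good (G : Type*) [Group G] : Prop :=
  ∀ x ∈ Sset (ZMod 2) G, ∀ y ∈ Sset (ZMod 2) G, x * y = y * x

open Classical in
lemma pairD (hgood : Good G) (g x : G) (hg : g^2 ≠ 1) (hx : x^2 ≠ 1) (z : G) :
    ((if g*x = z then (1:ZMod 2) else 0) + (if g*x⁻¹ = z then 1 else 0))
      + ((if g⁻¹*x = z then 1 else 0) + (if g⁻¹*x⁻¹ = z then 1 else 0))
    = ((if x*g = z then (1:ZMod 2) else 0) + (if x*g⁻¹ = z then 1 else 0))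
      + ((if x⁻¹*g = z then 1 else 0) + (if x⁻¹*g⁻¹ = z then 1 else 0)) := by
  have h := hgood _ (Set.mem_union_right _ ⟨g, hg, rfl⟩) _ (Set.mem_union_right _ ⟨x, hx, rfl⟩)
  simp only [MonoidAlgebra.of_apply, mul_add, add_mul, MonoidAlgebra.single_mul_single,
    one_mul] at h
  have h' : ((Finsupp.single (g*x) (1:ZMod 2) + Finsupp.single (g⁻¹*x) 1)
        + (Finsupp.single (g*x⁻¹) 1 + Finsupp.single (g⁻¹*x⁻¹) 1) : G →₀ ZMod 2)
      = ((Finsupp.single (x*g) 1 + Finsupp.single (x⁻¹*g) 1)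
        + (Finsupp.single (x*g⁻¹) 1 + Finsupp.single (x⁻¹*g⁻¹) 1)) := congrArg MonoidAlgebra.coeff h
  have h2 := DFunLike.congr_fun h' z
  simp only [Finsupp.add_apply, Finsupp.single_apply] at h2
  ring_nf at h2 ⊢
  exact h2

open Classical in
lemma pairT (hgood : Good G) (t g : G) (ht : t^2 = 1) (hg : g^2 ≠ 1) (z : G) :
    ((if t*g = z then (1:ZMod 2) else 0) + (if t*g⁻¹ = z then 1 else 0))
      = ((if g*t = z then (1:ZMod 2) else 0) + (if g⁻¹*t = z then 1 else 0)) := by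
  have h := hgood _ (Set.mem_union_left _ ⟨t, ht, rfl⟩) _ (Set.mem_union_right _ ⟨g, hg, rfl⟩)
  simp only [MonoidAlgebra.of_apply, mul_add, add_mul, MonoidAlgebra.single_mul_single,
    one_mul] at h
  have h' : ((Finsupp.single (t*g) (1:ZMod 2) + Finsupp.single (t*g⁻¹) 1) : G →₀ ZMod 2)
      = (Finsupp.single (g*t) 1 + Finsupp.single (g⁻¹*t) 1) := congrArg MonoidAlgebra.coeff h
  have h2 := DFunLike.congr_fun h' z
  simpa [Finsupp.add_apply, Finsupp.single_apply] using h2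

lemma invol_comm (hgood : Good G) (t u : G) (ht : t^2 = 1) (hu : u^2 = 1) : t*u = u*t := by
  have h := hgood _ (Set.mem_union_left _ ⟨t, ht, rfl⟩) _ (Set.mem_union_left _ ⟨u, hu, rfl⟩)
  simp only [MonoidAlgebra.of_apply, MonoidAlgebra.single_mul_single, one_mul] at h
  have h' : (Finsupp.single (t*u) (1:ZMod 2) : G →₀ ZMod 2) = Finsupp.single (u*t) 1 := congrArg MonoidAlgebra.coeff h
  exact Finsupp.single_left_injective one_ne_zero h'

lemma sq_of_inv_eq_self {x : G} (h : x⁻¹ = x) : x^2 = 1 := by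
  rw [pow_two]; nth_rewrite 1 [← h]; exact inv_mul_cancel x

lemma inv_eq_self_of_sq {x : G} (h : x^2 = 1) : x⁻¹ = x := by
  rw [pow_two] at h; exact inv_eq_of_mul_eq_one_right h


lemma pow4 (c : G) : c^4 = (c*c)*(c*c) := by
  rw [show (4:ℕ) = 2*2 from rfl, pow_mul, pow_two, pow_two]

lemma pow2' (c : G) : c^2 = c*c := pow_two c

lemma invol_conj (hgood : Good G) (t g : G) (ht : t^2 = 1) : t*g*t = g ∨ t*g*t = g⁻¹ := by
  have htt : t*t = 1 := by rw [← pow_two]; exact ht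
  by_cases hg : g^2 = 1
  · have hcm := invol_comm hgood t g ht hg
    left
    calc t*g*t = t*(g*t) := by group
    _ = t*(t*g) := by rw [← hcm]
    _ = g := by rw [← mul_assoc, htt, one_mul]
  · have key := pairT hgood t g ht hg (t*g)
    rw [if_pos rfl] at key
    have hne : t*g⁻¹ ≠ t*g := fun h => hg (sq_of_inv_eq_self (mul_left_cancel h))
    rw [if_neg hne] at key
    by_cases h2 : g*t = t*g
    · left
      calc t*g*t = t*(g*t) := by group
      _ = t*(t*g) := by rw [h2]
      _ = g := by rw [← mul_assoc, htt, one_mul]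
    · rw [if_neg h2] at key
      by_cases h3 : g⁻¹*t = t*g
      · right
        calc t*g*t = (g⁻¹*t)*t := by rw [← h3]
        _ = g⁻¹*(t*t) := by group
        _ = g⁻¹ := by rw [htt, mul_one]
      · rw [if_neg h3] at key
        exact absurd key (by decide)

lemma disjD (hgood : Good G) (g x : G) (hg : g^2 ≠ 1) (hx : x^2 ≠ 1) :
    g*x = x*g ∨ g*x = x*g⁻¹ ∨ g*x = x⁻¹*g ∨ g*x = x⁻¹*g⁻¹ ∨ g*x = g⁻¹*x⁻¹ := by
  by_contra hcon
  push_neg at hcon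
  obtain ⟨h1, h2, h3, h4, h5⟩ := hcon
  have key := pairD hgood g x hg hx (g*x)
  have c2 : g*x⁻¹ ≠ g*x := fun hc => hx (sq_of_inv_eq_self (mul_left_cancel hc))
  have c3 : g⁻¹*x ≠ g*x := fun hc => hg (sq_of_inv_eq_self (mul_right_cancel hc))
  rw [if_pos rfl, if_neg c2, if_neg c3, if_neg (fun hc => h5 hc.symm),
     if_neg (fun hc => h1 hc.symm), if_neg (fun hc => h2 hc.symm),
     if_neg (fun hc => h3 hc.symm), if_neg (fun hc => h4 hc.symm)] at key
  exact absurd key (by decide)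

lemma c4_false (hgood : Good G) (g x : G) (hg4 : g^4 ≠ 1) (hg2 : g^2 ≠ 1)
    (hx : x^2 ≠ 1) (h : g*x = x⁻¹*g) : False := by
  have hxg : x*g = g*x⁻¹ := by
    have e : x*(g*x) = g := by rw [h]; group
    calc x*g = (x*(g*x))*x⁻¹ := by group
    _ = g*x⁻¹ := by rw [e]
  have hgi : g⁻¹*x = x⁻¹*g⁻¹ := by
    have h' := congrArg (fun y : G => y⁻¹) h
    simp only [mul_inv_rev, inv_inv] at h'
    exact h'.symm
  have hgi2 : g⁻¹*x⁻¹ = x*g⁻¹ := by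
    have h' := congrArg (fun y : G => y⁻¹) hxg
    simp only [mul_inv_rev, inv_inv] at h'
    exact h'
  have hw2 : (x*g)^2 ≠ 1 := by
    have e2 : (x*g)^2 = g*g := by
      rw [pow_two]
      calc x*g*(x*g) = x*(g*x)*g := by group
      _ = x*(x⁻¹*g)*g := by rw [h]
      _ = g*g := by group
    rw [e2]
    intro hc; exact hg2 (by rw [pow_two]; exact hc)
  have key := pairD hgood g (x*g) hg2 hw2 (x*g^2)
  have f1 : g*(x*g) = x⁻¹*g^2 := by
    calc g*(x*g) = (g*x)*g := by group
    _ = (x⁻¹*g)*g := by rw [h]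
    _ = x⁻¹*g^2 := by rw [pow_two, mul_assoc]
  have f2 : g*(x*g)⁻¹ = x⁻¹ := by group
  have f3 : g⁻¹*(x*g) = x⁻¹ := by
    calc g⁻¹*(x*g) = (g⁻¹*x)*g := by group
    _ = (x⁻¹*g⁻¹)*g := by rw [hgi]
    _ = x⁻¹ := by group
  have f4 : g⁻¹*(x*g)⁻¹ = x⁻¹*g⁻¹*g⁻¹ := by
    calc g⁻¹*(x*g)⁻¹ = g⁻¹*(x*g⁻¹) := by rw [show (x*g)⁻¹ = g⁻¹*x⁻¹ by group, hgi2]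
    _ = (g⁻¹*x)*g⁻¹ := by group
    _ = (x⁻¹*g⁻¹)*g⁻¹ := by rw [hgi]
    _ = x⁻¹*g⁻¹*g⁻¹ := by group
  have f5 : (x*g)*g = x*g^2 := by rw [pow_two, mul_assoc]
  have f6 : (x*g)*g⁻¹ = x := by group
  have f7 : (x*g)⁻¹*g = x := by
    calc (x*g)⁻¹*g = (g⁻¹*x⁻¹)*g := by group
    _ = (x*g⁻¹)*g := by rw [← hgi2]
    _ = x := by group
  have f8 : (x*g)⁻¹*g⁻¹ = x*g⁻¹*g⁻¹ := by
    calc (x*g)⁻¹*g⁻¹ = (g⁻¹*x⁻¹)*g⁻¹ := by group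
    _ = (x*g⁻¹)*g⁻¹ := by rw [← hgi2]
    _ = x*g⁻¹*g⁻¹ := by group
  rw [f1, f2, f3, f4, f5, f6, f7, f8] at key
  have c1 : x⁻¹*g^2 ≠ x*g^2 := fun hc => hx (sq_of_inv_eq_self (mul_right_cancel hc))
  have c6 : x ≠ x*g^2 := by
    intro hc; apply hg2
    have e : x*1 = x*g^2 := by rw [mul_one]; exact hc
    exact (mul_left_cancel e).symm
  have c8 : x*g⁻¹*g⁻¹ ≠ x*g^2 := by
    intro hc; apply hg4
    have e : x*(g⁻¹*g⁻¹) = x*g^2 := by rw [← hc]; group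
    have e2 := mul_left_cancel e
    calc g^4 = g^2*(g⁻¹*g⁻¹)⁻¹ := by group
    _ = g^2*(g^2)⁻¹ := by rw [e2]
    _ = 1 := by group
  rw [if_pos rfl, if_neg c1, if_neg c6, if_neg c8] at key
  by_cases hQ : x⁻¹*g⁻¹*g⁻¹ = x*g^2
  case neg =>
    rw [if_neg hQ] at key
    by_cases hP : x⁻¹ = x*g^2
    · rw [if_pos hP] at key; exact absurd key (by decide)
    · rw [if_neg hP] at key; exact absurd key (by decide)
  case pos =>
  have hx2 : x*x = g⁻¹*g⁻¹*(g⁻¹*g⁻¹) := by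
    calc x*x = x*(x*g^2)*(g^2)⁻¹ := by group
    _ = x*(x⁻¹*g⁻¹*g⁻¹)*(g^2)⁻¹ := by rw [hQ]
    _ = g⁻¹*g⁻¹*(g⁻¹*g⁻¹) := by group
  have e5 : x*x = x⁻¹*x⁻¹ := by
    have l1 : g⁻¹*(x*x)*g = x⁻¹*x⁻¹ := by
      calc g⁻¹*(x*x)*g = (g⁻¹*(x*g))*(g⁻¹*(x*g)) := by group
      _ = x⁻¹*x⁻¹ := by rw [f3]
    have l2 : g⁻¹*(x*x)*g = x*x := by rw [hx2]; group
    rw [l2] at l1; exact l1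
  have hx4 : (x*x)*(x*x) = 1 := by
    nth_rewrite 2 [e5]
    group
  have hg8 : g^8 = 1 := by
    have l3 : (x*x)*(x*x) = g⁻¹*g⁻¹*(g⁻¹*g⁻¹)*(g⁻¹*g⁻¹*(g⁻¹*g⁻¹)) := by rw [hx2]
    rw [hx4] at l3
    calc g^8 = (g⁻¹*g⁻¹*(g⁻¹*g⁻¹)*(g⁻¹*g⁻¹*(g⁻¹*g⁻¹)))⁻¹ := by group
    _ = (1:G)⁻¹ := by rw [← l3]
    _ = 1 := inv_one
  have hcomm : g*(g*x) = x*g*g := by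
    calc g*(g*x) = g*(x⁻¹*g) := by rw [h]
    _ = (g*x⁻¹)*g := by group
    _ = (x*g)*g := by rw [← hxg]
    _ = x*g*g := by group
  have hu : (x*(g*g))^2 = 1 := by
    rw [pow_two]
    calc x*(g*g)*(x*(g*g)) = x*(g*(g*x))*(g*g) := by group
    _ = x*(x*g*g)*(g*g) := by rw [hcomm]
    _ = (x*x)*(g*g*(g*g)) := by group
    _ = (g⁻¹*g⁻¹*(g⁻¹*g⁻¹))*(g*g*(g*g)) := by rw [hx2]
    _ = 1 := by group
  have e8 : g*(g*(g*x)) = x⁻¹*(g*(g*g)) := by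
    calc g*(g*(g*x)) = g*(x*g*g) := by rw [hcomm]
    _ = (g*x)*(g*g) := by group
    _ = (x⁻¹*g)*(g*g) := by rw [h]
    _ = x⁻¹*(g*(g*g)) := by group
  have e9 : (x*(g*g))*g*(x*(g*g)) = g*(g*(g*(g*g))) := by
    calc (x*(g*g))*g*(x*(g*g)) = x*(g*(g*(g*x)))*(g*g) := by group
    _ = x*(x⁻¹*(g*(g*g)))*(g*g) := by rw [e8]
    _ = g*(g*(g*(g*g))) := by group
  rcases invol_conj hgood (x*(g*g)) g hu with hc | hc
  · apply hg4
    rw [e9] at hc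
    calc g^4 = (g*g)*(g*g) := pow4 g
    _ = g⁻¹*(g*(g*(g*(g*g)))) := by group
    _ = g⁻¹*g := by rw [hc]
    _ = 1 := by group
  · rw [e9] at hc
    have h6 : g*(g*(g*(g*(g*g)))) = 1 := by
      calc g*(g*(g*(g*(g*g)))) = (g*(g*(g*(g*g))))*g := by group
      _ = g⁻¹*g := by rw [hc]
      _ = 1 := by group
    apply hg2
    calc g^2 = g^8*(g*(g*(g*(g*(g*g)))))⁻¹ := by group
    _ = g^8*(1:G)⁻¹ := by rw [h6]
    _ = 1 := by rw [hg8]; group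

lemma c1_case (hgood : Good G) (g x : G) (hg4 : g^4 ≠ 1) (hg2 : g^2 ≠ 1) (hx : x^2 ≠ 1)
    (h : g*x = g⁻¹*x⁻¹) : x⁻¹*g*x = g ∨ x⁻¹*g*x = g⁻¹ := by
  have hq : x*x = g⁻¹*g⁻¹ := by
    calc x*x = g⁻¹*((g*x)*x) := by group
    _ = g⁻¹*((g⁻¹*x⁻¹)*x) := by rw [h]
    _ = g⁻¹*g⁻¹ := by group
  have key := pairD hgood g x hg2 hx (g*x⁻¹)
  have c1 : g*x ≠ g*x⁻¹ := by
    intro hc; apply hx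
    exact sq_of_inv_eq_self (mul_left_cancel hc).symm
  have c3 : g⁻¹*x ≠ g*x⁻¹ := by
    intro hc; apply hg4
    have e : x*x = g*g := by
      calc x*x = g*((g⁻¹*x)*x) := by group
      _ = g*((g*x⁻¹)*x) := by rw [hc]
      _ = g*g := by group
    have e2 : g⁻¹*g⁻¹ = g*g := by rw [← hq]; exact e
    calc g^4 = (g*g)*(g⁻¹*g⁻¹)⁻¹ := by group
    _ = (g*g)*(g*g)⁻¹ := by rw [e2]
    _ = 1 := by group
  have c4 : g⁻¹*x⁻¹ ≠ g*x⁻¹ := fun hc => hg2 (sq_of_inv_eq_self (mul_right_cancel hc))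
  rw [if_neg c1, if_pos rfl, if_neg c3, if_neg c4] at key
  by_cases ra : x*g = g*x⁻¹
  · exfalso
    have hinv : g⁻¹*(x*g) = x⁻¹ := by rw [ra]; group
    have l1 : g⁻¹*(x*x)*g = x⁻¹*x⁻¹ := by
      calc g⁻¹*(x*x)*g = (g⁻¹*(x*g))*(g⁻¹*(x*g)) := by group
      _ = x⁻¹*x⁻¹ := by rw [hinv]
    have l2 : g⁻¹*(x*x)*g = x*x := by rw [hq]; group
    rw [l2] at l1
    apply hg4
    have l3 : (x*x)*(x*x) = 1 := by nth_rewrite 2 [l1]; group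
    rw [hq] at l3
    calc g^4 = ((g⁻¹*g⁻¹)*(g⁻¹*g⁻¹))⁻¹ := by group
    _ = (1:G)⁻¹ := by rw [← l3]
    _ = 1 := inv_one
  rw [if_neg ra] at key
  by_cases rb : x*g⁻¹ = g*x⁻¹
  · exfalso
    have ht : (g⁻¹*x)^2 = 1 := by
      rw [pow_two]
      calc (g⁻¹*x)*(g⁻¹*x) = g⁻¹*((x*g⁻¹)*x) := by group
      _ = g⁻¹*((g*x⁻¹)*x) := by rw [rb]
      _ = 1 := by group
    have e : (g⁻¹*x)*g*(g⁻¹*x) = g⁻¹*(x*x) := by group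
    rcases invol_conj hgood (g⁻¹*x) g ht with hc | hc
    · rw [e, hq] at hc
      apply hg4
      calc g^4 = g*(g⁻¹*(g⁻¹*g⁻¹))⁻¹ := by group
      _ = g*g⁻¹ := by rw [hc]
      _ = 1 := by group
    · rw [e, hq] at hc
      apply hg2
      calc g^2 = (g⁻¹*(g⁻¹*g⁻¹))⁻¹*g⁻¹ := by group
      _ = (g⁻¹)⁻¹*g⁻¹ := by rw [hc]
      _ = 1 := by group
  rw [if_neg rb] at key
  by_cases rc : x⁻¹*g = g*x⁻¹
  · left
    calc x⁻¹*g*x = (x⁻¹*g)*x := by group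
    _ = (g*x⁻¹)*x := by rw [rc]
    _ = g := by group
  rw [if_neg rc] at key
  by_cases rd : x⁻¹*g⁻¹ = g*x⁻¹
  · right
    calc x⁻¹*g*x = ((x⁻¹*g⁻¹)*x)⁻¹ := by group
    _ = ((g*x⁻¹)*x)⁻¹ := by rw [rd]
    _ = g⁻¹ := by group
  rw [if_neg rd] at key
  exact absurd key (by decide)

lemma conj_pm (hgood : Good G) (g x : G) (hg4 : g^4 ≠ 1) :
    x⁻¹*g*x = g ∨ x⁻¹*g*x = g⁻¹ := by
  have hg2 : g^2 ≠ 1 := by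
    intro hc; apply hg4
    calc g^4 = g^2*g^2 := by group
    _ = 1 := by rw [hc]; group
  by_cases hx : x^2 = 1
  · have hxi : x⁻¹ = x := inv_eq_self_of_sq hx
    rcases invol_conj hgood x g hx with hc | hc
    · left; rw [hxi]; exact hc
    · right; rw [hxi]; exact hc
  · rcases disjD hgood g x hg2 hx with hc | hc | hc | hc | hc
    · left
      calc x⁻¹*g*x = x⁻¹*((g*x)) := by group
      _ = x⁻¹*(x*g) := by rw [hc]
      _ = g := by group
    · right
      calc x⁻¹*g*x = x⁻¹*((g*x)) := by group
      _ = x⁻¹*(x*g⁻¹) := by rw [hc]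
      _ = g⁻¹ := by group
    · exact absurd (c4_false hgood g x hg4 hg2 hx hc) id
    · have ht : (g*x)^2 = 1 := by
        rw [pow_two]
        calc (g*x)*(g*x) = g*(x*(g*x)) := by group
        _ = g*(x*(x⁻¹*g⁻¹)) := by rw [hc]
        _ = 1 := by group
      have hxg : x*g = g⁻¹*x⁻¹ := by
        have e : x*(g*x) = g⁻¹ := by rw [hc]; group
        calc x*g = (x*(g*x))*x⁻¹ := by group
        _ = g⁻¹*x⁻¹ := by rw [e]
      have e2 : (g*x)*g*(g*x) = x⁻¹*g*x := by
        calc (g*x)*g*(g*x) = g*(x*g)*(g*x) := by group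
        _ = g*(g⁻¹*x⁻¹)*(g*x) := by rw [hxg]
        _ = x⁻¹*g*x := by group
      rcases invol_conj hgood (g*x) g ht with hc2 | hc2
      · left; rw [← e2]; exact hc2
      · right; rw [← e2]; exact hc2
    · exact c1_case hgood g x hg4 hg2 hx hc

lemma order_pow_two (hG : IsLocallyFinitePGroup 2 G) (g : G) : ∃ n, orderOf g = 2^n := by
  obtain ⟨n, hn⟩ := hG {g}
  refine ⟨n, ?_⟩
  calc orderOf g = Nat.card (Subgroup.zpowers g) := (Nat.card_zpowers g).symm
  _ = 2^n := by rw [Subgroup.zpowers_eq_closure]; simpa using hn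

lemma six_ne (hG : IsLocallyFinitePGroup 2 G) {a : G} (h4 : a^4 ≠ 1) : a^6 ≠ 1 := by
  intro h6
  obtain ⟨n, hn⟩ := order_pow_two hG a
  have hd : orderOf a ∣ 6 := orderOf_dvd_of_pow_eq_one h6
  have hn1 : n ≤ 1 := by
    by_contra hl
    push_neg at hl
    have h2n : (4:ℕ) ∣ 2^n := by
      have h' : (2:ℕ)^2 ∣ 2^n := pow_dvd_pow 2 hl
      simpa using h'
    rw [hn] at hd
    exact absurd (dvd_trans h2n hd) (by norm_num)
  have hdvd2 : orderOf a ∣ 2 := by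
    have h' := pow_dvd_pow 2 hn1
    rw [pow_one] at h'
    rw [hn]; exact h'
  have h2 : a^2 = 1 := orderOf_dvd_iff_pow_eq_one.mp hdvd2
  apply h4
  calc a^4 = a^2*a^2 := by group
  _ = 1 := by rw [h2]; group

lemma exists_a (hgood : Good G) (hna : ∃ g h : G, g*h ≠ h*g)
    (hexp : Monoid.exponent G ≠ 4) : ∃ a : G, a^4 ≠ 1 := by
  by_contra hc
  push_neg at hc
  have hdvd : Monoid.exponent G ∣ 4 := Monoid.exponent_dvd_of_forall_pow_eq_one hc
  have h124 : Monoid.exponent G = 1 ∨ Monoid.exponent G = 2 ∨ Monoid.exponent G = 4 := by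
    have h1 : Monoid.exponent G ≤ 4 := Nat.le_of_dvd (by norm_num) hdvd
    obtain ⟨k, hk⟩ := hdvd
    have h0 : Monoid.exponent G ≠ 0 := by intro h0; rw [h0] at hk; simp at hk
    have h3 : Monoid.exponent G ≠ 3 := by intro h3; rw [h3] at hk; omega
    omega
  have h2 : ∀ g : G, g^2 = 1 := by
    intro g
    have hpow := Monoid.pow_exponent_eq_one g
    rcases h124 with he | he | he
    · rw [he, pow_one] at hpow; rw [hpow]; exact one_pow 2
    · rw [he] at hpow; exact hpow
    · exact absurd he hexp
  obtain ⟨g, h, hgh⟩ := hna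
  exact hgh (invol_comm hgood g h (h2 g) (h2 h))

lemma pick_big (a u : G) (h4 : a^4 ≠ 1) (hau : Commute a u) :
    (a*u)^4 ≠ 1 ∨ (a^2*u)^4 ≠ 1 := by
  by_contra hc
  push_neg at hc
  obtain ⟨h1, h2⟩ := hc
  rw [hau.mul_pow] at h1
  rw [((hau.pow_left 2)).mul_pow] at h2
  apply h4
  calc a^4 = ((a^2)^4*u^4)*(a^4*u^4)⁻¹ := by group
  _ = 1*(1:G)⁻¹ := by rw [h1, h2]
  _ = 1 := by group

lemma pick_big' (a u : G) (h4 : a^4 ≠ 1) (hau : Commute a u) :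
    (a^3*u)^4 ≠ 1 ∨ (a^4*u)^4 ≠ 1 := by
  by_contra hc
  push_neg at hc
  obtain ⟨h1, h2⟩ := hc
  rw [((hau.pow_left 3)).mul_pow] at h1
  rw [((hau.pow_left 4)).mul_pow] at h2
  apply h4
  calc a^4 = ((a^4)^4*u^4)*((a^3)^4*u^4)⁻¹ := by group
  _ = 1*(1:G)⁻¹ := by rw [h1, h2]
  _ = 1 := by group

lemma cent_abelian (hgood : Good G) (hG : IsLocallyFinitePGroup 2 G) (a : G) (h4 : a^4 ≠ 1)
    (u v : G) (hau : a*u = u*a) (hav : a*v = v*a) : u*v = v*u := by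
  have cau : Commute a u := hau
  have cav : Commute a v := hav
  have main : ∀ c : G, Commute c u → Commute c v → (c*u)^4 ≠ 1 →
      u*v = v*u ∨ v⁻¹*(u*v) = c⁻¹*(c⁻¹*u⁻¹) := by
    intro c hcu hcv hbig
    have e : v⁻¹*(c*u)*v = c*(v⁻¹*(u*v)) := by
      have hvc : v⁻¹*c = c*v⁻¹ := (hcv.inv_right.eq).symm
      calc v⁻¹*(c*u)*v = (v⁻¹*c)*(u*v) := by group
      _ = (c*v⁻¹)*(u*v) := by rw [hvc]
      _ = c*(v⁻¹*(u*v)) := by group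
    rcases conj_pm hgood (c*u) v hbig with hc | hc
    · left
      rw [e] at hc
      have h' := mul_left_cancel hc
      calc u*v = v*(v⁻¹*(u*v)) := by group
      _ = v*u := by rw [h']
    · right
      rw [e] at hc
      have hcu' : u⁻¹*c⁻¹ = c⁻¹*u⁻¹ := (hcu.inv_left.inv_right.eq).symm
      calc v⁻¹*(u*v) = c⁻¹*(c*(v⁻¹*(u*v))) := by group
      _ = c⁻¹*((c*u)⁻¹) := by rw [hc]
      _ = c⁻¹*(u⁻¹*c⁻¹) := by rw [mul_inv_rev]
      _ = c⁻¹*(c⁻¹*u⁻¹) := by rw [hcu']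
  rcases pick_big a u h4 cau with hb | hb <;> rcases pick_big' a u h4 cau with hb' | hb'
  · rcases main a cau cav hb with done | r1
    · exact done
    rcases main (a^3) (cau.pow_left 3) (cav.pow_left 3) hb' with done | r2
    · exact done
    exfalso; apply h4
    have E : a⁻¹*(a⁻¹*u⁻¹) = (a^3)⁻¹*((a^3)⁻¹*u⁻¹) := r1.symm.trans r2
    calc a^4 = (a^3*(a^3*(a⁻¹*(a⁻¹*u⁻¹))))*u := by group
    _ = (a^3*(a^3*((a^3)⁻¹*((a^3)⁻¹*u⁻¹))))*u := by rw [E]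
    _ = 1 := by group
  · rcases main a cau cav hb with done | r1
    · exact done
    rcases main (a^4) (cau.pow_left 4) (cav.pow_left 4) hb' with done | r2
    · exact done
    exfalso
    have E : a⁻¹*(a⁻¹*u⁻¹) = (a^4)⁻¹*((a^4)⁻¹*u⁻¹) := r1.symm.trans r2
    apply six_ne hG h4
    calc a^6 = (a^4*(a^4*(a⁻¹*(a⁻¹*u⁻¹))))*u := by group
    _ = (a^4*(a^4*((a^4)⁻¹*((a^4)⁻¹*u⁻¹))))*u := by rw [E]
    _ = 1 := by group
  · rcases main (a^2) (cau.pow_left 2) (cav.pow_left 2) hb with done | r1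
    · exact done
    rcases main (a^3) (cau.pow_left 3) (cav.pow_left 3) hb' with done | r2
    · exact done
    exfalso
    have E : (a^2)⁻¹*((a^2)⁻¹*u⁻¹) = (a^3)⁻¹*((a^3)⁻¹*u⁻¹) := r1.symm.trans r2
    have ha2 : a^2 = 1 := by
      calc a^2 = (a^3*(a^3*((a^2)⁻¹*((a^2)⁻¹*u⁻¹))))*u := by group
      _ = (a^3*(a^3*((a^3)⁻¹*((a^3)⁻¹*u⁻¹))))*u := by rw [E]
      _ = 1 := by group
    apply h4
    calc a^4 = a^2*a^2 := by group
    _ = 1 := by rw [ha2]; group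
  · rcases main (a^2) (cau.pow_left 2) (cav.pow_left 2) hb with done | r1
    · exact done
    rcases main (a^4) (cau.pow_left 4) (cav.pow_left 4) hb' with done | r2
    · exact done
    exfalso; apply h4
    have E : (a^2)⁻¹*((a^2)⁻¹*u⁻¹) = (a^4)⁻¹*((a^4)⁻¹*u⁻¹) := r1.symm.trans r2
    calc a^4 = (a^4*(a^4*((a^2)⁻¹*((a^2)⁻¹*u⁻¹))))*u := by group
    _ = (a^4*(a^4*((a^4)⁻¹*((a^4)⁻¹*u⁻¹))))*u := by rw [E]
    _ = 1 := by group

end Aux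

/-- a nonabelian good locally finite 2-group whose exponent is
not 4 has an abelian subgroup `A` of index 2 and an element `b` of order 4
inverting every element of `A` by conjugation. -/
theorem stmt_17 (G : Type*) [Group G]
    (hG : IsLocallyFinitePGroup 2 G)
    (hna : ∃ g h : G, g * h ≠ h * g)
    (hgood : ∀ x ∈ Sset (ZMod 2) G, ∀ y ∈ Sset (ZMod 2) G, x * y = y * x)
    (hexp : Monoid.exponent G ≠ 4) :
    ∃ A : Subgroup G, (∀ a ∈ A, ∀ a' ∈ A, a * a' = a' * a) ∧ A.index = 2 ∧
      ∃ b : G, orderOf b = 4 ∧ ∀ a ∈ A, b⁻¹ * a * b = a⁻¹ := by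
  obtain ⟨r, hr4⟩ := exists_a hgood hna hexp
  have hr2 : r^2 ≠ 1 := by
    intro hc; apply hr4
    calc r^4 = r^2*r^2 := by group
    _ = 1 := by rw [hc]; group
  set A : Subgroup G := Subgroup.centralizer {r} with hAdef
  have memA : ∀ x : G, x ∈ A ↔ r*x = x*r := by
    intro x; rw [hAdef, Subgroup.mem_centralizer_singleton_iff]; exact eq_comm
  have habel : ∀ u ∈ A, ∀ v ∈ A, u*v = v*u := fun u hu v hv =>
    cent_abelian hgood hG r hr4 u v ((memA u).mp hu) ((memA v).mp hv)
  have hconj : ∀ x : G, x ∉ A → x⁻¹*r*x = r⁻¹ := by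
    intro x hx
    rcases conj_pm hgood r x hr4 with hc | hc
    · exfalso; apply hx; rw [memA]
      calc r*x = x*(x⁻¹*r*x) := by group
      _ = x*r := by rw [hc]
    · exact hc
  obtain ⟨g0, h0, hgh⟩ := hna
  have hbex : ∃ b : G, b ∉ A := by
    by_cases hg0 : g0 ∈ A
    · by_cases hh0 : h0 ∈ A
      · exact absurd (habel g0 hg0 h0 hh0) hgh
      · exact ⟨h0, hh0⟩
    · exact ⟨g0, hg0⟩
  obtain ⟨b, hbA⟩ := hbex
  have hba : b⁻¹*r*b = r⁻¹ := hconj b hbA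
  have hbainv : b⁻¹*r⁻¹*b = r := by
    calc b⁻¹*r⁻¹*b = (b⁻¹*r*b)⁻¹ := by group
    _ = (r⁻¹)⁻¹ := by rw [hba]
    _ = r := inv_inv r
  have hout2 : ∀ x : G, x ∉ A → x*x ≠ 1 := by
    intro x hx hxx
    have hxsq : x^2 = 1 := by rw [pow_two]; exact hxx
    have hxi : x⁻¹ = x := inv_eq_self_of_sq hxsq
    have hxa : x*r*x = r⁻¹ := by
      have h' := hconj x hx; rwa [hxi] at h'
    have ht : (r*x)^2 = 1 := by
      rw [pow_two]
      calc (r*x)*(r*x) = r*(x*r*x) := by group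
      _ = r*r⁻¹ := by rw [hxa]
      _ = 1 := by group
    have hcm := invol_comm hgood x (r*x) hxsq ht
    apply hr2
    have e : x*r*x = r := by
      calc x*r*x = x*(r*x) := by group
      _ = (r*x)*x := hcm
      _ = r*(x*x) := by group
      _ = r := by rw [hxx, mul_one]
    have hrr : r⁻¹ = r := by rw [← hxa, e]
    exact sq_of_inv_eq_self hrr
  have hxor : ∀ x : G, Xor' (x*b ∈ A) (x ∈ A) := by
    intro x
    by_cases hx : x ∈ A
    · refine Or.inr ⟨hx, ?_⟩
      intro hxb
      apply hbA
      have hmem : x⁻¹*(x*b) ∈ A := A.mul_mem (A.inv_mem hx) hxb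
      simpa [inv_mul_cancel_left] using hmem
    · refine Or.inl ⟨?_, hx⟩
      rw [memA]
      have hx' := hconj x hx
      calc r*(x*b) = x*(x⁻¹*r*x)*b := by group
      _ = x*r⁻¹*b := by rw [hx']
      _ = x*(b*(b⁻¹*r⁻¹*b)) := by group
      _ = x*(b*r) := by rw [hbainv]
      _ = (x*b)*r := by group
  have hidx : A.index = 2 := Subgroup.index_eq_two_iff.mpr ⟨b, hxor⟩
  have hb2A : b*b ∈ A := by
    rcases hxor b with ⟨h1, _⟩ | ⟨h1, _⟩
    · exact h1
    · exact absurd h1 hbA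
  have hinv : ∀ c, c ∈ A → b⁻¹*c*b = c⁻¹ := by
    intro c hcA
    have hac : r*c = c*r := (memA c).mp hcA
    have cac : Commute r c := hac
    by_cases hc2 : c*c = 1
    · have hci : c⁻¹ = c := inv_eq_of_mul_eq_one_right hc2
      have hcsq : c^2 = 1 := by rw [pow_two]; exact hc2
      rcases invol_conj hgood c b hcsq with hcb | hcb
      · rw [hci]
        have e1 : c*b = b*c := by
          calc c*b = (c*b*c)*c⁻¹ := by group
          _ = b*c⁻¹ := by rw [hcb]
          _ = b*c := by rw [hci]
        calc b⁻¹*c*b = b⁻¹*(c*b) := by group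
        _ = b⁻¹*(b*c) := by rw [e1]
        _ = c := by group
      · exfalso
        have e1 : c*b = b⁻¹*c := by
          calc c*b = (c*b*c)*c⁻¹ := by group
          _ = b⁻¹*c⁻¹ := by rw [hcb]
          _ = b⁻¹*c := by rw [hci]
        have hbc : (b*c)*(b*c) = 1 := by
          calc (b*c)*(b*c) = b*(c*b)*c := by group
          _ = b*(b⁻¹*c)*c := by rw [e1]
          _ = c*c := by group
          _ = 1 := hc2
        have hbcA : b*c ∉ A := by
          intro hm
          apply hbA
          have hmem : (b*c)*c⁻¹ ∈ A := A.mul_mem hm (A.inv_mem hcA)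
          simpa [mul_inv_cancel_right] using hmem
        exact hout2 (b*c) hbcA hbc
    · have eexp : b⁻¹*(r*c)*b = r⁻¹*(b⁻¹*c*b) := by
        calc b⁻¹*(r*c)*b = (b⁻¹*r*b)*(b⁻¹*c*b) := by group
        _ = r⁻¹*(b⁻¹*c*b) := by rw [hba]
      by_cases hc4 : (c*c)*(c*c) = 1
      · have hcc4 : c^4 = 1 := by rw [pow4]; exact hc4
        have h1 : (r*c)^4 ≠ 1 := by
          rw [cac.mul_pow, hcc4, mul_one]
          exact hr4
        rcases conj_pm hgood (r*c) b h1 with hcase | hcase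
        · rw [eexp] at hcase
          have he2 : b⁻¹*c*b = r*(r*c) := by
            calc b⁻¹*c*b = r*(r⁻¹*(b⁻¹*c*b)) := by group
            _ = r*(r*c) := by rw [hcase]
          have h2 : (r⁻¹*c)^4 ≠ 1 := by
            rw [(cac.inv_left).mul_pow, hcc4, mul_one]
            intro hh; apply hr4
            calc r^4 = ((r⁻¹)^4)⁻¹ := by group
            _ = (1:G)⁻¹ := by rw [hh]
            _ = 1 := inv_one
          have eexp2 : b⁻¹*(r⁻¹*c)*b = r*(b⁻¹*c*b) := by
            calc b⁻¹*(r⁻¹*c)*b = (b⁻¹*r⁻¹*b)*(b⁻¹*c*b) := by group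
            _ = r*(b⁻¹*c*b) := by rw [hbainv]
          rcases conj_pm hgood (r⁻¹*c) b h2 with hcase2 | hcase2
          · exfalso; apply hr4
            rw [eexp2, he2] at hcase2
            calc r^4 = (r*r)*(r*r) := pow4 r
            _ = (r*(r*(r*c)))*(c⁻¹*r) := by group
            _ = (r⁻¹*c)*(c⁻¹*r) := by rw [hcase2]
            _ = 1 := by group
          · exfalso
            rw [eexp2, he2] at hcase2
            rw [mul_inv_rev, inv_inv] at hcase2
            have hcr : c⁻¹*r = r*c⁻¹ := (cac.inv_right.eq).symm
            rw [hcr] at hcase2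
            have F : r*(r*c) = c⁻¹ := mul_left_cancel hcase2
            have F' : r*r = c⁻¹*c⁻¹ := by
              calc r*r = (r*(r*c))*c⁻¹ := by group
              _ = c⁻¹*c⁻¹ := by rw [F]
            apply hr4
            calc r^4 = (r*r)*(r*r) := pow4 r
            _ = (c⁻¹*c⁻¹)*(c⁻¹*c⁻¹) := by rw [F']
            _ = ((c*c)*(c*c))⁻¹ := by group
            _ = (1:G)⁻¹ := by rw [hc4]
            _ = 1 := inv_one
        · rw [eexp] at hcase
          have hcr : r*c⁻¹ = c⁻¹*r := cac.inv_right.eq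
          calc b⁻¹*c*b = r*(r⁻¹*(b⁻¹*c*b)) := by group
          _ = r*((r*c)⁻¹) := by rw [hcase]
          _ = (r*c⁻¹)*r⁻¹ := by group
          _ = (c⁻¹*r)*r⁻¹ := by rw [hcr]
          _ = c⁻¹ := by group
      · have hc4' : c^4 ≠ 1 := by
          intro hh; apply hc4; rw [← pow4]; exact hh
        rcases conj_pm hgood c b hc4' with hcase | hcase
        · exfalso
          rcases pick_big r c hr4 cac with hbig | hbig
          · rcases conj_pm hgood (r*c) b hbig with h' | h'
            · rw [eexp, hcase] at h'
              apply hr2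
              exact sq_of_inv_eq_self (mul_right_cancel h')
            · rw [eexp, hcase] at h'
              rw [mul_inv_rev] at h'
              have hcr : c⁻¹*r⁻¹ = r⁻¹*c⁻¹ := (cac.inv_left.inv_right.eq).symm
              rw [hcr] at h'
              have hce := mul_left_cancel h'
              apply hc2
              nth_rewrite 2 [hce]
              group
          · rw [pow_two] at hbig
            have eexp2 : b⁻¹*(r*r*c)*b = r⁻¹*(r⁻¹*(b⁻¹*c*b)) := by
              calc b⁻¹*(r*r*c)*b = (b⁻¹*r*b)*((b⁻¹*r*b)*(b⁻¹*c*b)) := by group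
              _ = r⁻¹*(r⁻¹*(b⁻¹*c*b)) := by rw [hba]
            rcases conj_pm hgood (r*r*c) b hbig with h' | h'
            · rw [eexp2, hcase] at h'
              apply hr4
              calc r^4 = (r*r)*(r*r) := pow4 r
              _ = ((r*r)*c)*(r⁻¹*(r⁻¹*c))⁻¹ := by simp [mul_inv_rev, mul_assoc]
              _ = (r*r*c)*(r*r*c)⁻¹ := by rw [h']
              _ = 1 := by group
            · rw [eexp2, hcase] at h'
              rw [mul_inv_rev, mul_inv_rev] at h'
              have hcr2 : c⁻¹*(r⁻¹*r⁻¹) = r⁻¹*r⁻¹*c⁻¹ := by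
                calc c⁻¹*(r⁻¹*r⁻¹) = (c⁻¹*r⁻¹)*r⁻¹ := by group
                _ = (r⁻¹*c⁻¹)*r⁻¹ := by rw [(cac.inv_left.inv_right.eq).symm]
                _ = r⁻¹*(c⁻¹*r⁻¹) := by group
                _ = r⁻¹*(r⁻¹*c⁻¹) := by rw [(cac.inv_left.inv_right.eq).symm]
                _ = r⁻¹*r⁻¹*c⁻¹ := by group
              have h'' : r⁻¹*(r⁻¹*c) = r⁻¹*(r⁻¹*c⁻¹) := by
                rw [h']
                calc c⁻¹*(r⁻¹*r⁻¹) = r⁻¹*r⁻¹*c⁻¹ := hcr2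
                _ = r⁻¹*(r⁻¹*c⁻¹) := by group
              have hce : c = c⁻¹ := mul_left_cancel (mul_left_cancel h'')
              apply hc2
              nth_rewrite 2 [hce]
              group
        · exact hcase
  have hb2 : b*b ≠ 1 := hout2 b hbA
  have hb4 : b^4 = 1 := by
    have h' := hinv (b*b) hb2A
    have e : b⁻¹*(b*b)*b = b*b := by group
    rw [e] at h'
    calc b^4 = (b*b)*(b*b) := pow4 b
    _ = (b*b)*(b*b)⁻¹ := by rw [← h']
    _ = 1 := by group
  have hbord : orderOf b = 4 := by
    have hdvd : orderOf b ∣ 4 := orderOf_dvd_of_pow_eq_one hb4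
    have hne1 : orderOf b ≠ 1 := by
      intro h1
      apply hb2
      have hb1 : b^1 = 1 := orderOf_dvd_iff_pow_eq_one.mp (by rw [h1])
      rw [pow_one] at hb1; rw [hb1]; group
    have hne2 : orderOf b ≠ 2 := by
      intro h1
      apply hb2
      have hb1 : b^2 = 1 := orderOf_dvd_iff_pow_eq_one.mp (by rw [h1])
      rw [pow_two] at hb1; exact hb1
    have hne3 : orderOf b ≠ 3 := by
      intro h3; rw [h3] at hdvd; norm_num at hdvd
    have hle := Nat.le_of_dvd (by norm_num) hdvd
    have hpos := Nat.pos_of_dvd_of_pos hdvd (by norm_num)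
    omega
  exact ⟨A, habel, hidx, b, hbord, fun c hc => hinv c hc⟩
end
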